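/- arXiv:2601.01434 — 9 statements merged into one kernel-verified Lean document; each statement's English description precedes it below -/
import Mathlib

section
/- Let G be a graph and u a vertex of G with degree r ≥ 1. Define the vertex clique weight w_G(u) = Σ_i (1/i)·k_i(u;G), where k_i(u;G) is the number of i-vertex cliques of G containing u. Then w_G(u) ≤ (2^{r+1} − 1)/(r+1), with equality if and only if the subgraph induced on the neighborhood N(u) is the complete graph K_r. -/
open SimpleGraph Finset

/-- Total number of cliques of `G` (including the empty clique). -/
noncomputable def cliqueCount {V : Type*} (G : SimpleGraph V) : ℕ :=
  Nat.card {s : Finset V // G.IsClique (s : Set V)}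

/-- Number of `i`-cliques of `G` containing the vertex `u`. -/
noncomputable def cliqueCountOn {V : Type*} (G : SimpleGraph V) (u : V) (i : ℕ) : ℕ :=
  Nat.card {s : Finset V // G.IsNClique i s ∧ u ∈ s}

/-- The vertex clique weight `w_G(u) = Σ_i (1/i)·k_i(u;G)`. -/
noncomputable def cliqueWeight {V : Type*} [Fintype V] (G : SimpleGraph V) (u : V) : ℚ :=
  ∑ i ∈ Finset.range (Fintype.card V + 1), (1 / (i : ℚ)) * (cliqueCountOn G u i : ℚ)

open Classical in
/-- `j`-cliques inside the neighborhood of `u`. -/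
noncomputable def nbrCliques {V : Type*} [Fintype V] (G : SimpleGraph V) [DecidableRel G.Adj]
    (u : V) (j : ℕ) : Finset (Finset V) :=
  ((G.neighborFinset u).powersetCard j).filter (fun t => G.IsClique (t : Set V))

lemma mem_nbrCliques {V : Type*} [Fintype V] {G : SimpleGraph V} [DecidableRel G.Adj]
    {u : V} {j : ℕ} {t : Finset V} :
    t ∈ nbrCliques G u j ↔ (t ⊆ G.neighborFinset u ∧ t.card = j) ∧ G.IsClique (t : Set V) := by
  classical
  simp [nbrCliques, Finset.mem_filter, Finset.mem_powersetCard]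

lemma cliqueCountOn_succ {V : Type*} [Fintype V] (G : SimpleGraph V) [DecidableRel G.Adj]
    (u : V) (j : ℕ) :
    cliqueCountOn G u (j + 1) = (nbrCliques G u j).card := by
  classical
  rw [cliqueCountOn, Nat.card_eq_fintype_card, Fintype.card_subtype]
  refine Finset.card_bij (fun s _ => s.erase u) ?_ ?_ ?_
  · intro s hs
    simp only [Finset.mem_filter, Finset.mem_univ, true_and] at hs
    obtain ⟨⟨hcl, hcard⟩, hu⟩ := hs
    rw [mem_nbrCliques]
    refine ⟨⟨?_, ?_⟩, hcl.subset (by simp [Finset.erase_subset])⟩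
    · intro v hv
      rw [Finset.mem_erase] at hv
      rw [SimpleGraph.mem_neighborFinset]
      exact hcl hu (by simpa using hv.2) (Ne.symm hv.1)
    · rw [Finset.card_erase_of_mem hu, hcard]
      omega
  · intro s₁ hs₁ s₂ hs₂ h
    simp only [Finset.mem_filter, Finset.mem_univ, true_and] at hs₁ hs₂
    rw [← Finset.insert_erase hs₁.2, ← Finset.insert_erase hs₂.2]
    exact congrArg (insert u) h
  · intro t ht
    rw [mem_nbrCliques] at ht
    obtain ⟨⟨hsub, hcard⟩, hcl⟩ := ht
    have hu : u ∉ t := fun h => G.notMem_neighborFinset_self u (hsub h)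
    refine ⟨insert u t, ?_, Finset.erase_insert hu⟩
    simp only [Finset.mem_filter, Finset.mem_univ, true_and]
    refine ⟨⟨?_, ?_⟩, Finset.mem_insert_self u t⟩
    · rw [Finset.coe_insert]
      exact hcl.insert (fun b hb _ => by
        have := hsub hb; rwa [SimpleGraph.mem_neighborFinset] at this)
    · rw [Finset.card_insert_of_notMem hu, hcard]

lemma cliqueWeight_eq {V : Type*} [Fintype V] (G : SimpleGraph V) [DecidableRel G.Adj]
    (u : V) :
    cliqueWeight G u =
      ∑ j ∈ Finset.range (Fintype.card V),
        (1 / ((j : ℚ) + 1)) * ((nbrCliques G u j).card : ℚ) := by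
  rw [cliqueWeight, Finset.sum_range_succ']
  simp only [Nat.cast_zero, div_zero, zero_mul, add_zero, one_div]
  refine Finset.sum_congr rfl fun j _ => ?_
  rw [cliqueCountOn_succ]
  push_cast
  ring

lemma nbrCliques_card_le {V : Type*} [Fintype V] (G : SimpleGraph V) [DecidableRel G.Adj]
    (u : V) (j : ℕ) : (nbrCliques G u j).card ≤ (G.degree u).choose j := by
  classical
  have h : nbrCliques G u j ⊆ (G.neighborFinset u).powersetCard j :=
    Finset.filter_subset _ _
  calc (nbrCliques G u j).card ≤ ((G.neighborFinset u).powersetCard j).card :=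
        Finset.card_le_card h
    _ = (G.degree u).choose j := by
        rw [Finset.card_powersetCard, G.card_neighborFinset_eq_degree]

lemma nbrCliques_card_of_clique {V : Type*} [Fintype V] (G : SimpleGraph V)
    [DecidableRel G.Adj] (u : V) (h : G.IsClique (G.neighborSet u)) (j : ℕ) :
    (nbrCliques G u j).card = (G.degree u).choose j := by
  classical
  have : nbrCliques G u j = (G.neighborFinset u).powersetCard j := by
    apply Finset.Subset.antisymm (Finset.filter_subset _ _)
    intro t ht
    rw [Finset.mem_powersetCard] at ht
    refine mem_nbrCliques.mpr ⟨ht, h.subset ?_⟩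
    intro v hv
    have := ht.1 (by simpa using hv)
    rwa [SimpleGraph.mem_neighborFinset] at this
  rw [this, Finset.card_powersetCard, G.card_neighborFinset_eq_degree]

lemma key_sum (r : ℕ) :
    ∑ j ∈ Finset.range (r + 1), (1 / ((j : ℚ) + 1)) * ((r.choose j : ℕ) : ℚ) =
      (2 ^ (r + 1) - 1) / (r + 1) := by
  have h : ∀ j ∈ Finset.range (r + 1),
      (1 / ((j : ℚ) + 1)) * ((r.choose j : ℕ) : ℚ) =
        (((r + 1).choose (j + 1) : ℕ) : ℚ) / (r + 1) := by
    intro j _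
    have := Nat.add_one_mul_choose_eq r j
    have hq : ((r : ℚ) + 1) * (r.choose j : ℚ) = ((r + 1).choose (j + 1) : ℚ) * ((j : ℚ) + 1) := by
      exact_mod_cast congrArg (fun n : ℕ => (n : ℚ)) this
    have hj : ((j : ℚ) + 1) ≠ 0 := by positivity
    have hr : ((r : ℚ) + 1) ≠ 0 := by positivity
    field_simp
    linarith [hq]
  rw [Finset.sum_congr rfl h, ← Finset.sum_div]
  congr 1
  have := Nat.sum_range_choose (r + 1)
  rw [Finset.sum_range_succ'] at this
  simp only [Nat.choose_zero_right] at this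
  have h2 : ∑ j ∈ Finset.range (r + 1), ((r + 1).choose (j + 1) : ℚ) = 2 ^ (r + 1) - 1 := by
    have : (∑ j ∈ Finset.range (r + 1), (r + 1).choose (j + 1) : ℕ) = 2 ^ (r + 1) - 1 := by
      omega
    calc ∑ j ∈ Finset.range (r + 1), ((r + 1).choose (j + 1) : ℚ)
        = ((∑ j ∈ Finset.range (r + 1), (r + 1).choose (j + 1) : ℕ) : ℚ) := by push_cast; rfl
      _ = ((2 ^ (r + 1) - 1 : ℕ) : ℚ) := by rw [this]
      _ = 2 ^ (r + 1) - 1 := by push_cast [Nat.one_le_two_pow]; ring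
  exact h2

theorem vertex_clique_weight_bound {V : Type*} [Fintype V] (G : SimpleGraph V)
    [DecidableRel G.Adj] (u : V) (r : ℕ) (hr : 1 ≤ r) (hd : G.degree u = r) :
    cliqueWeight G u ≤ ((2 ^ (r + 1) - 1 : ℚ)) / (r + 1) ∧
      (cliqueWeight G u = ((2 ^ (r + 1) - 1 : ℚ)) / (r + 1) ↔
        G.IsClique (G.neighborSet u)) := by
  classical
  have hrn : r + 1 ≤ Fintype.card V := by
    have := G.degree_lt_card_verts u
    omega
  -- the "padded" bound sum
  have hpad : ∑ j ∈ Finset.range (Fintype.card V), (1 / ((j : ℚ) + 1)) * ((r.choose j : ℕ) : ℚ)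
      = (2 ^ (r + 1) - 1) / (r + 1) := by
    rw [← key_sum r]
    symm
    apply Finset.sum_subset (Finset.range_subset_range.mpr hrn)
    intro j _ hj
    rw [Finset.mem_range, not_lt] at hj
    rw [Nat.choose_eq_zero_of_lt (by omega)]
    simp
  have hterm : ∀ j ∈ Finset.range (Fintype.card V),
      (1 / ((j : ℚ) + 1)) * ((nbrCliques G u j).card : ℚ) ≤
        (1 / ((j : ℚ) + 1)) * ((r.choose j : ℕ) : ℚ) := by
    intro j _
    have h1 : (0 : ℚ) ≤ 1 / ((j : ℚ) + 1) := by positivity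
    have h2 := nbrCliques_card_le G u j
    rw [hd] at h2
    exact mul_le_mul_of_nonneg_left (by exact_mod_cast h2) h1
  have hle : cliqueWeight G u ≤ (2 ^ (r + 1) - 1 : ℚ) / (r + 1) := by
    rw [cliqueWeight_eq, ← hpad]
    exact Finset.sum_le_sum hterm
  refine ⟨hle, ⟨?_, ?_⟩⟩
  · -- equality → clique, contrapositive
    intro heq
    by_contra hnc
    -- get two distinct nonadjacent neighbors
    rw [SimpleGraph.isClique_iff, Set.Pairwise] at hnc
    push_neg at hnc
    obtain ⟨v, hv, w, hw, hvw, hnadj⟩ := hnc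
    -- strict inequality at j = 2
    have hvw2 : ({v, w} : Finset V) ∈ (G.neighborFinset u).powersetCard 2 := by
      rw [Finset.mem_powersetCard]
      constructor
      · intro x hx
        rcases Finset.mem_insert.mp hx with h | h
        · subst h; rwa [SimpleGraph.mem_neighborFinset]
        · rw [Finset.mem_singleton] at h; subst h; rwa [SimpleGraph.mem_neighborFinset]
      · rw [Finset.card_insert_of_notMem (by simpa using hvw), Finset.card_singleton]
    have hnot : ({v, w} : Finset V) ∉ nbrCliques G u 2 := by
      rw [mem_nbrCliques]
      rintro ⟨-, hcl⟩
      exact hnadj (hcl (by simp) (by simp) hvw)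
    have hss : nbrCliques G u 2 ⊂ (G.neighborFinset u).powersetCard 2 :=
      ⟨Finset.filter_subset _ _, fun h => hnot (h hvw2)⟩
    have hlt2 : (nbrCliques G u 2).card < r.choose 2 := by
      have := Finset.card_lt_card hss
      rwa [Finset.card_powersetCard, G.card_neighborFinset_eq_degree, hd] at this
    have h2mem : 2 ∈ Finset.range (Fintype.card V) := by
      rw [Finset.mem_range]
      -- r ≥ 2 since v ≠ w are both neighbors
      have hr2 : 2 ≤ r := by
        have : ({v, w} : Finset V).card ≤ (G.neighborFinset u).card :=
          Finset.card_le_card (Finset.mem_powersetCard.mp hvw2).1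
        rw [G.card_neighborFinset_eq_degree, hd] at this
        rw [Finset.card_insert_of_notMem (by simpa using hvw), Finset.card_singleton] at this
        exact this
      omega
    have hstrict : cliqueWeight G u < (2 ^ (r + 1) - 1 : ℚ) / (r + 1) := by
      rw [cliqueWeight_eq, ← hpad]
      apply Finset.sum_lt_sum hterm
      refine ⟨2, h2mem, ?_⟩
      have h1 : (0 : ℚ) < 1 / ((2 : ℕ) + 1 : ℚ) := by norm_num
      apply mul_lt_mul_of_pos_left _ h1
      exact_mod_cast hlt2
    exact absurd heq (ne_of_lt hstrict)
  · intro hcl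
    rw [cliqueWeight_eq, ← hpad]
    refine Finset.sum_congr rfl fun j _ => ?_
    rw [nbrCliques_card_of_clique G u hcl j, hd]
end

section
/- Let G be the union of graphs G₁ and G₂ with intersection H = G₁ ∩ G₂. Suppose no clique of G contains both an edge of E(G₁)\E(H) and an edge of E(G₂)\E(H). Then for every vertex u ∈ V(H), the vertex clique weights satisfy w_G(u) = w_{G₁}(u) + w_{G₂}(u) − w_H(u). -/
open SimpleGraph Finset

lemma cliqueCountOn_eq_ncard {V : Type*} (G : SimpleGraph V) (u : V) (i : ℕ) :
    cliqueCountOn G u i = {s : Finset V | G.IsNClique i s ∧ u ∈ s}.ncard :=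
  Nat.card_coe_set_eq _

theorem clique_weight_inclusion_exclusion {V : Type*} [Fintype V]
    (G₁ G₂ : SimpleGraph V)
    (hnc : ∀ s : Finset V, (G₁ ⊔ G₂).IsClique (s : Set V) →
      ¬ ((∃ a ∈ s, ∃ b ∈ s, G₁.Adj a b ∧ ¬ (G₁ ⊓ G₂).Adj a b) ∧
         (∃ c ∈ s, ∃ d ∈ s, G₂.Adj c d ∧ ¬ (G₁ ⊓ G₂).Adj c d)))
    (u : V) :
    cliqueWeight (G₁ ⊔ G₂) u =
      cliqueWeight G₁ u + cliqueWeight G₂ u - cliqueWeight (G₁ ⊓ G₂) u := by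
  have hsplit : ∀ s : Finset V, (G₁ ⊔ G₂).IsClique (s : Set V) →
      G₁.IsClique (s : Set V) ∨ G₂.IsClique (s : Set V) := by
    intro s hs
    by_contra h
    push_neg at h
    obtain ⟨h1, h2⟩ := h
    simp only [isClique_iff, Set.Pairwise, not_forall] at h1 h2
    obtain ⟨a, ha, b, hb, hab, hnadj1⟩ := h1
    obtain ⟨c, hc, d, hd, hcd, hnadj2⟩ := h2
    have hGab : (G₁ ⊔ G₂).Adj a b := hs ha hb hab
    have hGcd : (G₁ ⊔ G₂).Adj c d := hs hc hd hcd
    have h2ab : G₂.Adj a b := hGab.resolve_left hnadj1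
    have h1cd : G₁.Adj c d := hGcd.resolve_right hnadj2
    exact hnc s hs ⟨⟨c, hc, d, hd, h1cd, fun h => hnadj2 h.2⟩,
      ⟨a, ha, b, hb, h2ab, fun h => hnadj1 h.1⟩⟩
  have key : ∀ i, cliqueCountOn (G₁ ⊔ G₂) u i + cliqueCountOn (G₁ ⊓ G₂) u i =
      cliqueCountOn G₁ u i + cliqueCountOn G₂ u i := by
    intro i
    simp only [cliqueCountOn_eq_ncard]
    have hU : {s : Finset V | (G₁ ⊔ G₂).IsNClique i s ∧ u ∈ s} =
        {s : Finset V | G₁.IsNClique i s ∧ u ∈ s} ∪ {s : Finset V | G₂.IsNClique i s ∧ u ∈ s} := by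
      ext s
      simp only [Set.mem_setOf_eq, Set.mem_union, SimpleGraph.isNClique_iff]
      constructor
      · rintro ⟨⟨hc, hcard⟩, hu⟩
        rcases hsplit s hc with h | h
        · exact Or.inl ⟨⟨h, hcard⟩, hu⟩
        · exact Or.inr ⟨⟨h, hcard⟩, hu⟩
      · rintro (⟨⟨hc, hcard⟩, hu⟩ | ⟨⟨hc, hcard⟩, hu⟩)
        · exact ⟨⟨hc.mono le_sup_left, hcard⟩, hu⟩
        · exact ⟨⟨hc.mono le_sup_right, hcard⟩, hu⟩
    have hI : {s : Finset V | (G₁ ⊓ G₂).IsNClique i s ∧ u ∈ s} =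
        {s : Finset V | G₁.IsNClique i s ∧ u ∈ s} ∩ {s : Finset V | G₂.IsNClique i s ∧ u ∈ s} := by
      ext s
      simp only [Set.mem_setOf_eq, Set.mem_inter_iff, SimpleGraph.isNClique_iff]
      constructor
      · rintro ⟨⟨hc, hcard⟩, hu⟩
        exact ⟨⟨⟨hc.mono inf_le_left, hcard⟩, hu⟩, ⟨⟨hc.mono inf_le_right, hcard⟩, hu⟩⟩
      · rintro ⟨⟨⟨hc1, hcard⟩, hu⟩, ⟨⟨hc2, _⟩, _⟩⟩
        refine ⟨⟨fun a ha b hb hab => ⟨hc1 ha hb hab, hc2 ha hb hab⟩, hcard⟩, hu⟩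
    rw [hU, hI]
    exact Set.ncard_union_add_ncard_inter _ _ (Set.toFinite _) (Set.toFinite _)
  simp only [cliqueWeight, ← Finset.sum_add_distrib, ← Finset.sum_sub_distrib]
  refine Finset.sum_congr rfl fun i _ => ?_
  have h := key i
  have : (cliqueCountOn (G₁ ⊔ G₂) u i : ℚ) + cliqueCountOn (G₁ ⊓ G₂) u i =
      cliqueCountOn G₁ u i + cliqueCountOn G₂ u i := by exact_mod_cast h
  have hG : (cliqueCountOn (G₁ ⊔ G₂) u i : ℚ) =
      cliqueCountOn G₁ u i + cliqueCountOn G₂ u i - cliqueCountOn (G₁ ⊓ G₂) u i := by linarith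
  rw [hG]; ring
end

section
/- Let r ≥ 2t with t ≥ 1, and let K_r − tK₂ denote the complete graph K_r with a perfect matching on 2t vertices removed (t disjoint edges deleted). Then k(K_r − tK₂) = 2·k(K_{r−1} − (t−1)K₂) − k(K_{r−2} − (t−1)K₂). -/
open SimpleGraph Finset

/- The graph K_r - t K_2 : the complete graph on r vertices with the t disjoint edges
(0,1), (2,3), ..., (2t-2, 2t-1) removed. -/
def kMinusMatching (r t : ℕ) : SimpleGraph (Fin r) where
  Adj a b := a ≠ b ∧ ∀ i < t, ¬ ((a.val = 2 * i ∧ b.val = 2 * i + 1) ∨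
      (b.val = 2 * i ∧ a.val = 2 * i + 1))
  symm := by
    constructor
    intro a b h
    refine ⟨h.1.symm, fun i hi => ?_⟩
    have := h.2 i hi
    tauto
  loopless := by
    constructor
    intro a h
    exact h.1 rfl

/-! ### Auxiliary counting machinery -/

private lemma aux_card_split {α : Type*} (s : Finset α) (p q : α → Prop)
    [DecidablePred p] [DecidablePred q] :
    (s.filter fun x => p x ∧ q x).card + (s.filter fun x => p x ∧ ¬ q x).card
      = (s.filter p).card := by
  rw [← Finset.filter_filter, ← Finset.filter_filter,
    Finset.card_filter_add_card_filter_not]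

private lemma aux_card_congr {α : Type*} (p q : α → Prop) [Fintype α]
    [DecidablePred p] [DecidablePred q] (h : ∀ s, p s ↔ q s) :
    (univ.filter p).card = (univ.filter q).card := by
  rw [Finset.filter_congr (fun s _ => h s)]

private lemma aux_four_three {V : Type*} [Fintype V] [DecidableEq V]
    (Q : Finset V → Prop) [DecidablePred Q] (a b : V) (hab : a ≠ b)
    (hmono : ∀ s t : Finset V, s ⊆ t → Q t → Q s)
    (hia : ∀ s, Q s → Q (insert a s)) (hib : ∀ s, Q s → Q (insert b s)) :
    (univ.filter (fun s => Q s ∧ ¬(a ∈ s ∧ b ∈ s))).card * 4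
      = (univ.filter Q).card * 3 := by
  classical
  have e11 : (univ.filter (fun s : Finset V => Q s ∧ a ∈ s ∧ b ∈ s)).card
      = (univ.filter (fun s : Finset V => Q s ∧ a ∉ s ∧ b ∉ s)).card := by
    refine Finset.card_bij' (fun s _ => (s.erase a).erase b)
      (fun s _ => insert a (insert b s)) ?hi ?hj ?li ?ri
    case hi =>
      intro s hs
      simp only [mem_filter, mem_univ, true_and] at hs ⊢
      refine ⟨hmono _ _ ((erase_subset _ _).trans (erase_subset _ _)) hs.1, ?_, ?_⟩
      · simp [Finset.mem_erase]
      · simp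
    case hj =>
      intro s hs
      simp only [mem_filter, mem_univ, true_and] at hs ⊢
      exact ⟨hia _ (hib _ hs.1), by simp, by simp [hab.symm]⟩
    case li =>
      intro s hs
      simp only [mem_filter, mem_univ, true_and] at hs
      ext x
      simp only [Finset.mem_insert, Finset.mem_erase]
      constructor
      · rintro (rfl | rfl | ⟨_, _, h⟩) <;> first | exact hs.2.1 | exact hs.2.2 | exact h
      · intro hx
        by_cases h1 : x = a
        · exact Or.inl h1
        by_cases h2 : x = b
        · exact Or.inr (Or.inl h2)
        · exact Or.inr (Or.inr ⟨h2, h1, hx⟩)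
    case ri =>
      intro s hs
      simp only [mem_filter, mem_univ, true_and] at hs
      ext x
      simp only [Finset.mem_erase, Finset.mem_insert]
      constructor
      · rintro ⟨hxb, hxa, (rfl | rfl | hx)⟩
        · exact absurd rfl hxa
        · exact absurd rfl hxb
        · exact hx
      · intro hx
        refine ⟨fun h => hs.2.2 (h ▸ hx), fun h => hs.2.1 (h ▸ hx), Or.inr (Or.inr hx)⟩
  have e10 : (univ.filter (fun s : Finset V => Q s ∧ a ∈ s ∧ b ∉ s)).card
      = (univ.filter (fun s : Finset V => Q s ∧ a ∉ s ∧ b ∉ s)).card := by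
    refine Finset.card_bij' (fun s _ => s.erase a) (fun s _ => insert a s) ?hi ?hj ?li ?ri
    case hi =>
      intro s hs
      simp only [mem_filter, mem_univ, true_and] at hs ⊢
      refine ⟨hmono _ _ (erase_subset _ _) hs.1, by simp, ?_⟩
      simp only [Finset.mem_erase]
      tauto
    case hj =>
      intro s hs
      simp only [mem_filter, mem_univ, true_and] at hs ⊢
      refine ⟨hia _ hs.1, by simp, ?_⟩
      simp only [Finset.mem_insert]
      tauto
    case li =>
      intro s hs
      simp only [mem_filter, mem_univ, true_and] at hs
      exact Finset.insert_erase hs.2.1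
    case ri =>
      intro s hs
      simp only [mem_filter, mem_univ, true_and] at hs
      exact Finset.erase_insert hs.2.1
  have e01 : (univ.filter (fun s : Finset V => Q s ∧ a ∉ s ∧ b ∈ s)).card
      = (univ.filter (fun s : Finset V => Q s ∧ a ∉ s ∧ b ∉ s)).card := by
    refine Finset.card_bij' (fun s _ => s.erase b) (fun s _ => insert b s) ?hi ?hj ?li ?ri
    case hi =>
      intro s hs
      simp only [mem_filter, mem_univ, true_and] at hs ⊢
      refine ⟨hmono _ _ (erase_subset _ _) hs.1, ?_, by simp⟩
      simp only [Finset.mem_erase]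
      tauto
    case hj =>
      intro s hs
      simp only [mem_filter, mem_univ, true_and] at hs ⊢
      refine ⟨hib _ hs.1, ?_, by simp⟩
      simp only [Finset.mem_insert]
      tauto
    case li =>
      intro s hs
      simp only [mem_filter, mem_univ, true_and] at hs
      exact Finset.insert_erase hs.2.2
    case ri =>
      intro s hs
      simp only [mem_filter, mem_univ, true_and] at hs
      exact Finset.erase_insert hs.2.2
  have hA := aux_card_split univ Q (fun s : Finset V => a ∈ s)
  have hB := aux_card_split univ (fun s : Finset V => Q s ∧ a ∈ s) (fun s => b ∈ s)
  have hC := aux_card_split univ (fun s : Finset V => Q s ∧ ¬ a ∈ s) (fun s => b ∈ s)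
  have hD := aux_card_split univ (fun s : Finset V => Q s ∧ ¬(a ∈ s ∧ b ∈ s))
    (fun s : Finset V => a ∈ s)
  have hE := aux_card_split univ (fun s : Finset V => (Q s ∧ ¬(a ∈ s ∧ b ∈ s)) ∧ a ∈ s)
    (fun s => b ∈ s)
  have hF := aux_card_split univ (fun s : Finset V => (Q s ∧ ¬(a ∈ s ∧ b ∈ s)) ∧ ¬ a ∈ s)
    (fun s => b ∈ s)
  have c1 : (univ.filter (fun s : Finset V => ((Q s ∧ ¬(a ∈ s ∧ b ∈ s)) ∧ a ∈ s) ∧ b ∈ s)).card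
      = (univ.filter (fun s : Finset V => False)).card := aux_card_congr _ _ (by tauto)
  have c2 : (univ.filter (fun s : Finset V => ((Q s ∧ ¬(a ∈ s ∧ b ∈ s)) ∧ a ∈ s) ∧ ¬ b ∈ s)).card
      = (univ.filter (fun s : Finset V => Q s ∧ a ∈ s ∧ b ∉ s)).card :=
    aux_card_congr _ _ (by tauto)
  have c3 : (univ.filter (fun s : Finset V => ((Q s ∧ ¬(a ∈ s ∧ b ∈ s)) ∧ ¬ a ∈ s) ∧ b ∈ s)).card
      = (univ.filter (fun s : Finset V => Q s ∧ a ∉ s ∧ b ∈ s)).card :=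
    aux_card_congr _ _ (by tauto)
  have c4 : (univ.filter
        (fun s : Finset V => ((Q s ∧ ¬(a ∈ s ∧ b ∈ s)) ∧ ¬ a ∈ s) ∧ ¬ b ∈ s)).card
      = (univ.filter (fun s : Finset V => Q s ∧ a ∉ s ∧ b ∉ s)).card :=
    aux_card_congr _ _ (by tauto)
  have c5 : (univ.filter (fun s : Finset V => (Q s ∧ a ∈ s) ∧ b ∈ s)).card
      = (univ.filter (fun s : Finset V => Q s ∧ a ∈ s ∧ b ∈ s)).card :=
    aux_card_congr _ _ (by tauto)
  have c6 : (univ.filter (fun s : Finset V => (Q s ∧ a ∈ s) ∧ ¬ b ∈ s)).card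
      = (univ.filter (fun s : Finset V => Q s ∧ a ∈ s ∧ b ∉ s)).card :=
    aux_card_congr _ _ (by tauto)
  have c7 : (univ.filter (fun s : Finset V => (Q s ∧ ¬ a ∈ s) ∧ b ∈ s)).card
      = (univ.filter (fun s : Finset V => Q s ∧ a ∉ s ∧ b ∈ s)).card :=
    aux_card_congr _ _ (by tauto)
  have c8 : (univ.filter (fun s : Finset V => (Q s ∧ ¬ a ∈ s) ∧ ¬ b ∈ s)).card
      = (univ.filter (fun s : Finset V => Q s ∧ a ∉ s ∧ b ∉ s)).card :=
    aux_card_congr _ _ (by tauto)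
  have c0 : (univ.filter (fun s : Finset V => False)).card = 0 := by simp
  omega

/-- The combinatorial condition characterizing cliques of `kMinusMatching r t`. -/
private def Pcond (r t : ℕ) (s : Finset (Fin r)) : Prop :=
  ∀ a ∈ s, ∀ b ∈ s, ∀ i < t, ¬((a : ℕ) = 2 * i ∧ (b : ℕ) = 2 * i + 1)

private instance (r t : ℕ) : DecidablePred (Pcond r t) := fun _ => by
  unfold Pcond; infer_instance

private lemma isClique_iff_Pcond (r t : ℕ) (s : Finset (Fin r)) :
    (kMinusMatching r t).IsClique (s : Set (Fin r)) ↔ Pcond r t s := by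
  constructor
  · intro h a ha b hb i hi hab
    have hne : a ≠ b := by
      intro he; rw [he] at hab; omega
    have := (h ha hb hne).2 i hi
    tauto
  · intro h a ha b hb hne
    refine ⟨hne, fun i hi hcon => ?_⟩
    rcases hcon with ⟨h1, h2⟩ | ⟨h1, h2⟩
    · exact h a ha b hb i hi ⟨h1, h2⟩
    · exact h b hb a ha i hi ⟨h1, h2⟩

private lemma count_step (r t : ℕ) (h : 2 * (t + 1) ≤ r) :
    (univ.filter (Pcond r (t + 1))).card * 4 = (univ.filter (Pcond r t)).card * 3 := by
  set a : Fin r := ⟨2 * t, by omega⟩ with ha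
  set b : Fin r := ⟨2 * t + 1, by omega⟩ with hb
  have hab : a ≠ b := by
    simp [ha, hb, Fin.ext_iff]
  have hmono : ∀ s u : Finset (Fin r), s ⊆ u → Pcond r t u → Pcond r t s :=
    fun s u hsu hu x hx y hy => hu x (hsu hx) y (hsu hy)
  have hia : ∀ s, Pcond r t s → Pcond r t (insert a s) := by
    intro s hs x hx y hy i hi ⟨h1, h2⟩
    rcases Finset.mem_insert.mp hx with rfl | hx
    · simp only [ha] at h1; omega
    rcases Finset.mem_insert.mp hy with rfl | hy
    · simp only [ha] at h2; omega
    exact hs x hx y hy i hi ⟨h1, h2⟩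
  have hib : ∀ s, Pcond r t s → Pcond r t (insert b s) := by
    intro s hs x hx y hy i hi ⟨h1, h2⟩
    rcases Finset.mem_insert.mp hx with rfl | hx
    · simp only [hb] at h1; omega
    rcases Finset.mem_insert.mp hy with rfl | hy
    · simp only [hb] at h2; omega
    exact hs x hx y hy i hi ⟨h1, h2⟩
  have key := aux_four_three (Pcond r t) a b hab hmono hia hib
  have heq : (univ.filter (Pcond r (t + 1))).card
      = (univ.filter (fun s => Pcond r t s ∧ ¬(a ∈ s ∧ b ∈ s))).card := by
    apply aux_card_congr
    intro s
    constructor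
    · intro hs
      refine ⟨fun x hx y hy i hi => hs x hx y hy i (by omega), fun ⟨has, hbs⟩ => ?_⟩
      exact hs a has b hbs t (by omega) ⟨rfl, rfl⟩
    · rintro ⟨hs, hnab⟩ x hx y hy i hi ⟨h1, h2⟩
      rcases Nat.lt_succ_iff_lt_or_eq.mp hi with hi' | rfl
      · exact hs x hx y hy i hi' ⟨h1, h2⟩
      · have hxa : x = a := Fin.ext h1
        have hyb : y = b := Fin.ext h2
        exact hnab ⟨hxa ▸ hx, hyb ▸ hy⟩
  rw [heq]
  exact key

private lemma count_Pcond (r : ℕ) : ∀ t : ℕ, 2 * t ≤ r →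
    (univ.filter (Pcond r t)).card = 3 ^ t * 2 ^ (r - 2 * t) := by
  intro t
  induction t with
  | zero =>
    intro _
    have : univ.filter (Pcond r 0) = univ := by
      apply Finset.filter_true_of_mem
      intro s _ x _ y _ i hi
      omega
    rw [this]
    simp [Finset.card_univ]
  | succ t ih =>
    intro ht
    have h1 := count_step r t ht
    rw [ih (by omega)] at h1
    have h2 : 2 ^ (r - 2 * t) = 2 ^ (r - 2 * (t + 1)) * 4 := by
      rw [show r - 2 * t = (r - 2 * (t + 1)) + 2 by omega, pow_add]
      norm_num
    apply Nat.eq_of_mul_eq_mul_right (show 0 < 4 by norm_num)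
    rw [h1, h2, pow_succ]
    ring

private lemma cliqueCount_kMinusMatching (r t : ℕ) (h : 2 * t ≤ r) :
    cliqueCount (kMinusMatching r t) = 3 ^ t * 2 ^ (r - 2 * t) := by
  classical
  rw [cliqueCount, Nat.card_eq_fintype_card, Fintype.card_subtype]
  rw [aux_card_congr _ _ (isClique_iff_Pcond r t)]
  exact count_Pcond r t h

theorem clique_count_kMinusMatching_recurrence (r t : ℕ) (ht : 1 ≤ t) (hr : 2 * t ≤ r) :
    (cliqueCount (kMinusMatching r t) : ℤ) =
      2 * (cliqueCount (kMinusMatching (r - 1) (t - 1)) : ℤ) -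
        (cliqueCount (kMinusMatching (r - 2) (t - 1)) : ℤ) := by
  obtain ⟨t', rfl⟩ : ∃ t', t = t' + 1 := ⟨t - 1, by omega⟩
  have h1 : cliqueCount (kMinusMatching r (t' + 1)) = 3 ^ (t' + 1) * 2 ^ (r - 2 * (t' + 1)) :=
    cliqueCount_kMinusMatching r (t' + 1) hr
  have h2 : cliqueCount (kMinusMatching (r - 1) (t' + 1 - 1))
      = 3 ^ t' * 2 ^ (r - 2 * (t' + 1) + 1) := by
    rw [show t' + 1 - 1 = t' from rfl, cliqueCount_kMinusMatching (r - 1) t' (by omega),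
      show r - 1 - 2 * t' = r - 2 * (t' + 1) + 1 by omega]
  have h3 : cliqueCount (kMinusMatching (r - 2) (t' + 1 - 1))
      = 3 ^ t' * 2 ^ (r - 2 * (t' + 1)) := by
    rw [show t' + 1 - 1 = t' from rfl, cliqueCount_kMinusMatching (r - 2) t' (by omega),
      show r - 2 - 2 * t' = r - 2 * (t' + 1) by omega]
  rw [h1, h2, h3]
  push_cast
  rw [pow_succ, pow_succ]
  ring
end

section
/- Let Γ be a graph obtained from two disjoint complete graphs P = K_{2p} and Q = K_q (p ≥ 1, q ≥ 1) by adding exactly 2p edges between P and Q, such that every vertex w ∈ V(Q) satisfies d_P(w) ≤ p and every vertex u ∈ V(P) satisfies d_Q(u) ≤ p. Then for any edge e joining a vertex of P to a vertex of Q, the number of cliques of Γ containing e is at most 2^p. -/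
open SimpleGraph Finset

lemma two_pow_add_le_aux (u v : ℕ) : 2^u + 2^v ≤ 2^(u+v) + 1 := by
  have hu : 1 ≤ 2^u := Nat.one_le_two_pow
  have hv : 1 ≤ 2^v := Nat.one_le_two_pow
  have h : 2^(u+v) = 2^u * 2^v := pow_add 2 u v
  nlinarith

lemma two_pow_key (x y c : ℕ) (hx : x ≤ c) (hy : y ≤ c) (hc : c ≤ x + y) :
    2^x + 2^y ≤ 2^c + 2^(x+y-c) := by
  set d := x + y - c with hd
  have h1 : 2^x + 2^y = 2^d * (2^(x-d) + 2^(y-d)) := by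
    rw [mul_add, ← pow_add, ← pow_add]
    congr 2 <;> omega
  have h2 : 2^(x-d) + 2^(y-d) ≤ 2^((x-d)+(y-d)) + 1 := two_pow_add_le_aux _ _
  calc 2^x + 2^y = 2^d * (2^(x-d) + 2^(y-d)) := h1
    _ ≤ 2^d * (2^((x-d)+(y-d)) + 1) := Nat.mul_le_mul_left _ h2
    _ = 2^(d + ((x-d)+(y-d))) + 2^d := by rw [mul_add, mul_one, ← pow_add]
    _ = 2^c + 2^d := by congr 2; omega

lemma pow_arith (p a b m N : ℕ) (hp : 1 ≤ p) (ha : a + 1 ≤ p) (hb : b + 1 ≤ p)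
    (hm : a + b + m + 1 ≤ 2*p) (h1 : N ≤ 2^(a+b)) (h2 : N + 2 ≤ 2^a + 2^b + 2^m) :
    N ≤ 2^p := by
  by_cases hs : a + b ≤ p
  · exact h1.trans (Nat.pow_le_pow_right (by norm_num) hs)
  · push_neg at hs
    have hkey1 : 2^a + 2^b ≤ 2^(p-1) + 2^(a+b-(p-1)) :=
      two_pow_key a b (p-1) (by omega) (by omega) (by omega)
    set t := a + b - (p-1) with ht
    have hkey2 : 2^t + 2^(p-t) ≤ 2^(p-1) + 2^(t + (p-t) - (p-1)) :=
      two_pow_key t (p-t) (p-1) (by omega) (by omega) (by omega)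
    have he1 : t + (p - t) - (p-1) = 1 := by omega
    rw [he1, pow_one] at hkey2
    have hmm : 2^m ≤ 2^(p-t) := Nat.pow_le_pow_right (by norm_num) (by omega)
    have hpp : 2^(p-1) + 2^(p-1) = 2^p := by
      rw [← two_mul, ← pow_succ']
      congr 1
      omega
    linarith

theorem clique_count_cross_edge_bound (p q : ℕ) (hp : 1 ≤ p) (hq : 1 ≤ q)
    (Γ : SimpleGraph (Fin (2 * p) ⊕ Fin q))
    (hP : ∀ a b : Fin (2 * p), a ≠ b → Γ.Adj (Sum.inl a) (Sum.inl b))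
    (hQ : ∀ a b : Fin q, a ≠ b → Γ.Adj (Sum.inr a) (Sum.inr b))
    (hcross : Nat.card {x : Fin (2 * p) × Fin q // Γ.Adj (Sum.inl x.1) (Sum.inr x.2)} = 2 * p)
    (hdegP : ∀ w : Fin q, Nat.card {a : Fin (2 * p) // Γ.Adj (Sum.inl a) (Sum.inr w)} ≤ p)
    (hdegQ : ∀ u : Fin (2 * p), Nat.card {w : Fin q // Γ.Adj (Sum.inl u) (Sum.inr w)} ≤ p)
    (u : Fin (2 * p)) (w : Fin q) (he : Γ.Adj (Sum.inl u) (Sum.inr w)) :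
    Nat.card {s : Finset (Fin (2 * p) ⊕ Fin q) //
        Γ.IsClique (s : Set (Fin (2 * p) ⊕ Fin q)) ∧ Sum.inl u ∈ s ∧ Sum.inr w ∈ s} ≤
      2 ^ p := by
  classical
  set A : Finset (Fin (2*p)) :=
    univ.filter (fun a => Γ.Adj (Sum.inl a) (Sum.inr w) ∧ a ≠ u) with hAdef
  set B : Finset (Fin q) :=
    univ.filter (fun b => Γ.Adj (Sum.inl u) (Sum.inr b) ∧ b ≠ w) with hBdef
  set E : Finset (Fin (2*p) × Fin q) :=
    univ.filter (fun x => Γ.Adj (Sum.inl x.1) (Sum.inr x.2)) with hEdef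
  set M : Finset (Fin (2*p) × Fin q) := E.filter (fun x => x.1 ∈ A ∧ x.2 ∈ B) with hMdef
  have hmemA : ∀ a, a ∈ A ↔ Γ.Adj (Sum.inl a) (Sum.inr w) ∧ a ≠ u := by
    intro a; simp [hAdef]
  have hmemB : ∀ b, b ∈ B ↔ Γ.Adj (Sum.inl u) (Sum.inr b) ∧ b ≠ w := by
    intro b; simp [hBdef]
  have hmemE : ∀ x : Fin (2*p) × Fin q, x ∈ E ↔ Γ.Adj (Sum.inl x.1) (Sum.inr x.2) := by
    intro x; simp [hEdef]
  have hmemM : ∀ x : Fin (2*p) × Fin q,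
      x ∈ M ↔ Γ.Adj (Sum.inl x.1) (Sum.inr x.2) ∧ x.1 ∈ A ∧ x.2 ∈ B := by
    intro x; simp [hMdef, hmemE x, mem_filter]
  -- cardinality of the cross-edge set
  have hEcard : E.card = 2*p := by
    have h1 := Nat.card_eq_finsetCard E
    have h2 : Nat.card {x : Fin (2*p) × Fin q // x ∈ E} =
        Nat.card {x : Fin (2*p) × Fin q // Γ.Adj (Sum.inl x.1) (Sum.inr x.2)} :=
      Nat.card_congr (Equiv.subtypeEquivRight (fun x => hmemE x))
    omega
  -- |A| + 1 ≤ p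
  have hAcard : A.card + 1 ≤ p := by
    have hu : u ∉ A := by simp [hmemA]
    have hsub : insert u A ⊆ univ.filter (fun a => Γ.Adj (Sum.inl a) (Sum.inr w)) := by
      intro a ha
      rcases mem_insert.1 ha with rfl | ha
      · simp [he]
      · simp [((hmemA a).1 ha).1]
    have h1 : (univ.filter (fun a => Γ.Adj (Sum.inl a) (Sum.inr w))).card ≤ p := by
      rw [← Nat.card_eq_finsetCard]
      refine le_trans (le_of_eq (Nat.card_congr (Equiv.subtypeEquivRight fun a => by simp)))
        (hdegP w)
    calc A.card + 1 = (insert u A).card := (card_insert_of_notMem hu).symm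
      _ ≤ _ := card_le_card hsub
      _ ≤ p := h1
  have hBcard : B.card + 1 ≤ p := by
    have hw : w ∉ B := by simp [hmemB]
    have hsub : insert w B ⊆ univ.filter (fun b => Γ.Adj (Sum.inl u) (Sum.inr b)) := by
      intro b hb
      rcases mem_insert.1 hb with rfl | hb
      · simp [he]
      · simp [((hmemB b).1 hb).1]
    have h1 : (univ.filter (fun b => Γ.Adj (Sum.inl u) (Sum.inr b))).card ≤ p := by
      rw [← Nat.card_eq_finsetCard]
      refine le_trans (le_of_eq (Nat.card_congr (Equiv.subtypeEquivRight fun b => by simp)))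
        (hdegQ u)
    calc B.card + 1 = (insert w B).card := (card_insert_of_notMem hw).symm
      _ ≤ _ := card_le_card hsub
      _ ≤ p := h1
  -- edge count: |A| + |B| + |M| + 1 ≤ 2p
  have hMcard : A.card + B.card + M.card + 1 ≤ 2*p := by
    set X := A.image (fun a => (a, w)) with hX
    set Y := B.image (fun b => (u, b)) with hY
    have hXcard : X.card = A.card := card_image_of_injective _ (fun a b h => by
      simpa using congrArg Prod.fst h)
    have hYcard : Y.card = B.card := card_image_of_injective _ (fun a b h => by
      simpa using congrArg Prod.snd h)
    have hXY : Disjoint X Y := by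
      rw [Finset.disjoint_left]
      rintro x hx hy
      simp only [hX, mem_image] at hx
      simp only [hY, mem_image] at hy
      obtain ⟨a, ha, rfl⟩ := hx
      obtain ⟨b, hb, hab⟩ := hy
      have : a = u := (congrArg Prod.fst hab).symm
      exact ((hmemA a).1 ha).2 this
    have hXM : Disjoint X M := by
      rw [Finset.disjoint_left]
      rintro x hx hm
      simp only [hX, mem_image] at hx
      obtain ⟨a, ha, rfl⟩ := hx
      have : w ∈ B := ((hmemM _).1 hm).2.2
      exact ((hmemB w).1 this).2 rfl
    have hYM : Disjoint Y M := by
      rw [Finset.disjoint_left]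
      rintro x hx hm
      simp only [hY, mem_image] at hx
      obtain ⟨b, hb, rfl⟩ := hx
      have : u ∈ A := ((hmemM _).1 hm).2.1
      exact ((hmemA u).1 this).2 rfl
    have huw : (u, w) ∉ X ∪ Y ∪ M := by
      intro h
      rcases mem_union.1 h with h | h
      · rcases mem_union.1 h with h | h
        · simp only [hX, mem_image] at h
          obtain ⟨a, ha, hab⟩ := h
          have : a = u := congrArg Prod.fst hab
          exact ((hmemA a).1 ha).2 this
        · simp only [hY, mem_image] at h
          obtain ⟨b, hb, hab⟩ := h
          have : b = w := congrArg Prod.snd hab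
          exact ((hmemB b).1 hb).2 this
      · have : u ∈ A := ((hmemM _).1 h).2.1
        exact ((hmemA u).1 this).2 rfl
    have hsubE : insert (u, w) (X ∪ Y ∪ M) ⊆ E := by
      intro x hx
      rcases mem_insert.1 hx with rfl | hx
      · exact (hmemE _).2 he
      · rcases mem_union.1 hx with hx | hx
        · rcases mem_union.1 hx with hx | hx
          · simp only [hX, mem_image] at hx
            obtain ⟨a, ha, rfl⟩ := hx
            exact (hmemE _).2 ((hmemA a).1 ha).1
          · simp only [hY, mem_image] at hx
            obtain ⟨b, hb, rfl⟩ := hx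
            exact (hmemE _).2 ((hmemB b).1 hb).1
        · exact (hmemE _).2 ((hmemM _).1 hx).1
    have hucard : (insert (u, w) (X ∪ Y ∪ M)).card = A.card + B.card + M.card + 1 := by
      rw [card_insert_of_notMem huw, card_union_of_disjoint, card_union_of_disjoint hXY,
        hXcard, hYcard]
      exact disjoint_union_left.2 ⟨hXM, hYM⟩
    calc A.card + B.card + M.card + 1 = _ := hucard.symm
      _ ≤ E.card := card_le_card hsubE
      _ = 2*p := hEcard
  -- the pairs set
  set Pairs : Finset (Finset (Fin (2*p)) × Finset (Fin q)) :=
    (A.powerset ×ˢ B.powerset).filter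
      (fun ST => ∀ a ∈ ST.1, ∀ b ∈ ST.2, Γ.Adj (Sum.inl a) (Sum.inr b)) with hPairsDef
  have hmemPairs : ∀ ST : Finset (Fin (2*p)) × Finset (Fin q),
      ST ∈ Pairs ↔ ST.1 ⊆ A ∧ ST.2 ⊆ B ∧
        ∀ a ∈ ST.1, ∀ b ∈ ST.2, Γ.Adj (Sum.inl a) (Sum.inr b) := by
    intro ST
    simp [hPairsDef, mem_filter, mem_product, and_assoc]
  -- injection from cliques containing u,w into Pairs
  have hmain : Nat.card {s : Finset (Fin (2 * p) ⊕ Fin q) //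
      Γ.IsClique (s : Set (Fin (2 * p) ⊕ Fin q)) ∧ Sum.inl u ∈ s ∧ Sum.inr w ∈ s} ≤
      Pairs.card := by
    rw [← Nat.card_eq_finsetCard]
    have hmem : ∀ s : {s : Finset (Fin (2 * p) ⊕ Fin q) //
        Γ.IsClique (s : Set (Fin (2 * p) ⊕ Fin q)) ∧ Sum.inl u ∈ s ∧ Sum.inr w ∈ s},
        (univ.filter (fun a : Fin (2*p) => a ≠ u ∧ Sum.inl a ∈ s.1),
         univ.filter (fun b : Fin q => b ≠ w ∧ Sum.inr b ∈ s.1)) ∈ Pairs := by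
      rintro ⟨s, hcl, hus, hws⟩
      rw [hmemPairs]
      refine ⟨?_, ?_, ?_⟩
      · intro a ha
        simp only [mem_filter, mem_univ, true_and] at ha
        refine (hmemA a).2 ⟨?_, ha.1⟩
        exact hcl (by simpa using ha.2) (by simpa using hws) (by simp)
      · intro b hb
        simp only [mem_filter, mem_univ, true_and] at hb
        refine (hmemB b).2 ⟨?_, hb.1⟩
        exact hcl (by simpa using hus) (by simpa using hb.2) (by simp)
      · intro a ha b hb
        simp only [mem_filter, mem_univ, true_and] at ha hb
        exact hcl (by simpa using ha.2) (by simpa using hb.2) (by simp)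
    refine Nat.card_le_card_of_injective (fun s => (⟨_, hmem s⟩ : {x // x ∈ Pairs})) ?_
    rintro ⟨s1, hcl1, hus1, hws1⟩ ⟨s2, hcl2, hus2, hws2⟩ h
    have h' : ((univ.filter (fun a : Fin (2*p) => a ≠ u ∧ Sum.inl a ∈ s1),
          univ.filter (fun b : Fin q => b ≠ w ∧ Sum.inr b ∈ s1)) :
          Finset (Fin (2*p)) × Finset (Fin q)) =
        (univ.filter (fun a : Fin (2*p) => a ≠ u ∧ Sum.inl a ∈ s2),
          univ.filter (fun b : Fin q => b ≠ w ∧ Sum.inr b ∈ s2)) := congrArg Subtype.val h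
    have hS := congrArg Prod.fst h'
    have hT := congrArg Prod.snd h'
    simp only at hS hT
    apply Subtype.ext
    ext x
    cases x with
    | inl a =>
      by_cases hau : a = u
      · subst hau; simp [hus1, hus2]
      · rw [Finset.ext_iff] at hS
        have := hS a
        simp only [mem_filter, mem_univ, true_and, hau, not_false_iff, true_and] at this
        simpa [hau] using this
    | inr b =>
      by_cases hbw : b = w
      · subst hbw; simp [hws1, hws2]
      · rw [Finset.ext_iff] at hT
        have := hT b
        simp only [mem_filter, mem_univ, true_and, hbw, not_false_iff, true_and] at this
        simpa [hbw] using this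
  -- bound 1 : |Pairs| ≤ 2^(|A|+|B|)
  have hbound1 : Pairs.card ≤ 2^(A.card + B.card) := by
    calc Pairs.card ≤ (A.powerset ×ˢ B.powerset).card := card_le_card (filter_subset _ _)
      _ = 2^A.card * 2^B.card := by rw [card_product, card_powerset, card_powerset]
      _ = 2^(A.card + B.card) := (pow_add 2 _ _).symm
  -- bound 2 : |Pairs| + 2 ≤ 2^|A| + 2^|B| + 2^|M|
  have hbound2 : Pairs.card + 2 ≤ 2^A.card + 2^B.card + 2^M.card := by
    set P0 := Pairs.filter (fun x => x.1 = ∅ ∨ x.2 = ∅) with hP0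
    set P1 := Pairs.filter (fun x => ¬(x.1 = ∅ ∨ x.2 = ∅)) with hP1
    have hsplit : P0.card + P1.card = Pairs.card :=
      card_filter_add_card_filter_not _
    have hP0card : P0.card + 1 ≤ 2^A.card + 2^B.card := by
      set X := A.powerset.image (fun S => (S, (∅ : Finset (Fin q)))) with hX
      set Y := B.powerset.image (fun T => ((∅ : Finset (Fin (2*p))), T)) with hY
      have hsub : P0 ⊆ X ∪ Y := by
        intro x hx
        rw [hP0, mem_filter] at hx
        obtain ⟨hx1, hx2⟩ := hx
        rw [hmemPairs] at hx1
        rcases hx2 with h | h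
        · refine mem_union_right _ ?_
          rw [hY, mem_image]
          exact ⟨x.2, mem_powerset.2 hx1.2.1, by rw [← h]⟩
        · refine mem_union_left _ ?_
          rw [hX, mem_image]
          exact ⟨x.1, mem_powerset.2 hx1.1, by rw [← h]⟩
      have hXcard : X.card = 2^A.card := by
        rw [hX, card_image_of_injective _ (fun a b h => by simpa using congrArg Prod.fst h),
          card_powerset]
      have hYcard : Y.card = 2^B.card := by
        rw [hY, card_image_of_injective _ (fun a b h => by simpa using congrArg Prod.snd h),
          card_powerset]
      have hXY : (∅, (∅ : Finset (Fin q))) ∈ X ∩ Y := by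
        rw [mem_inter, hX, hY, mem_image, mem_image]
        exact ⟨⟨∅, by simp, rfl⟩, ⟨∅, by simp, rfl⟩⟩
      calc P0.card + 1 ≤ (X ∪ Y).card + (X ∩ Y).card :=
            add_le_add (card_le_card hsub) (card_pos.2 ⟨_, hXY⟩)
        _ = X.card + Y.card := card_union_add_card_inter X Y
        _ = 2^A.card + 2^B.card := by rw [hXcard, hYcard]
    have hP1card : P1.card + 1 ≤ 2^M.card := by
      have hinj : P1.card ≤ (M.powerset.erase ∅).card := by
        refine card_le_card_of_injOn (fun x => x.1 ×ˢ x.2) ?_ ?_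
        · intro x hx
          simp only [Finset.mem_coe, hP1, mem_filter] at hx
          obtain ⟨hx1, hx2⟩ := hx
          push_neg at hx2
          rw [hmemPairs] at hx1
          simp only [Finset.mem_coe]
          rw [mem_erase]
          constructor
          · rw [← Finset.nonempty_iff_ne_empty, Finset.nonempty_product]
            exact ⟨hx2.1, hx2.2⟩
          · rw [mem_powerset]
            intro y hy
            rw [Finset.mem_product] at hy
            exact (hmemM y).2 ⟨hx1.2.2 y.1 hy.1 y.2 hy.2, hx1.1 hy.1, hx1.2.1 hy.2⟩
        · rintro x hx y hy hxy
          have hxy' : x.1 ×ˢ x.2 = y.1 ×ˢ y.2 := hxy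
          simp only [Finset.mem_coe, hP1, mem_filter, not_or] at hx hy
          obtain ⟨xS, xs⟩ := Finset.nonempty_iff_ne_empty.2 hx.2.1
          obtain ⟨xT, xt⟩ := Finset.nonempty_iff_ne_empty.2 hx.2.2
          obtain ⟨yS, ys⟩ := Finset.nonempty_iff_ne_empty.2 hy.2.1
          obtain ⟨yT, yt⟩ := Finset.nonempty_iff_ne_empty.2 hy.2.2
          have h1 : x.1 = y.1 := by
            ext a
            constructor
            · intro ha
              have : (a, xT) ∈ x.1 ×ˢ x.2 := Finset.mem_product.2 ⟨ha, xt⟩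
              rw [hxy'] at this
              exact (Finset.mem_product.1 this).1
            · intro ha
              have : (a, yT) ∈ y.1 ×ˢ y.2 := Finset.mem_product.2 ⟨ha, yt⟩
              rw [← hxy'] at this
              exact (Finset.mem_product.1 this).1
          have h2 : x.2 = y.2 := by
            ext b
            constructor
            · intro hb
              have : (xS, b) ∈ x.1 ×ˢ x.2 := Finset.mem_product.2 ⟨xs, hb⟩
              rw [hxy'] at this
              exact (Finset.mem_product.1 this).2
            · intro hb
              have : (yS, b) ∈ y.1 ×ˢ y.2 := Finset.mem_product.2 ⟨ys, hb⟩
              rw [← hxy'] at this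
              exact (Finset.mem_product.1 this).2
          exact Prod.ext h1 h2
      have herase : (M.powerset.erase ∅).card = 2^M.card - 1 := by
        rw [card_erase_of_mem (mem_powerset.2 (empty_subset M)), card_powerset]
      have h2m : 1 ≤ 2^M.card := Nat.one_le_two_pow
      omega
    omega
  exact hmain.trans (pow_arith p A.card B.card M.card Pairs.card hp hAcard hBcard hMcard
    hbound1 hbound2)
end

section
/- Fix integers r ≥ 12, 0 ≤ s ≤ r, and 0 ≤ p ≤ 2r/3. Then 2^{r+1} + 2^s − 1 > (r + 1 + s)·((2^r − 1)/r + (2^{p+2} − 1)/(p+2) − (2^{p+1} − 1)/(p+1)). -/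
section keyIneqAux




private lemma Spow {a : ℕ} (h : 1 ≤ a) : ∀ m : ℕ, (2:ℕ) ≤ 2^(m+a) := by
  intro m
  calc (2:ℕ) = 2^1 := by norm_num
  _ ≤ 2^(m+a) := Nat.pow_le_pow_right (by norm_num) (by omega)

private lemma S0 : ∀ m : ℕ, 18*m+93 ≤ 2^(m+5)*(3*m+11) := by
  intro m
  induction m with
  | zero => norm_num
  | succ n ih =>
    have h2 := Spow (a := 5) (by norm_num) n
    have h3 : 2^(n+1+5) = 2*2^(n+5) := by ring
    nlinarith [ih]

private lemma S1 : ∀ m : ℕ, 6*m+30 ≤ 2^(m+4)*(m+4) := by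
  intro m
  induction m with
  | zero => norm_num
  | succ n ih =>
    have h2 := Spow (a := 4) (by norm_num) n
    have h3 : 2^(n+1+4) = 2*2^(n+4) := by ring
    nlinarith [ih]

private lemma S2 : ∀ m : ℕ, 18*m+87 ≤ 2^(m+3)*(3*m+16) := by
  intro m
  induction m with
  | zero => norm_num
  | succ n ih =>
    have h2 := Spow (a := 3) (by norm_num) n
    have h3 : 2^(n+1+3) = 2*2^(n+3) := by ring
    nlinarith [ih]

private lemma S3 : ∀ m : ℕ, 18*m+84 ≤ 2^(m+2)*(3*m+28) := by
  intro m
  induction m with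
  | zero => norm_num
  | succ n ih =>
    have h2 := Spow (a := 2) (by norm_num) n
    have h3 : 2^(n+1+2) = 2*2^(n+2) := by ring
    nlinarith [ih]

private lemma S4 : ∀ m : ℕ, 18*m+81 ≤ 2^(m+1)*(3*m+60) := by
  intro m
  induction m with
  | zero => norm_num
  | succ n ih =>
    have h2 := Spow (a := 1) (by norm_num) n
    have h3 : 2^(n+1+1) = 2*2^(n+1) := by ring
    nlinarith [ih]

private lemma SL1 : ∀ m : ℕ, 9*m+39 ≤ 2^(m+6) := by
  intro m
  induction m with
  | zero => norm_num
  | succ n ih =>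
    have h2 := Spow (a := 6) (by norm_num) n
    have h3 : 2^(n+1+6) = 2*2^(n+6) := by ring
    nlinarith [ih]

private lemma rle_aux : ∀ m : ℕ, m + 12 ≤ 2^(m+8) := by
  intro m
  induction m with
  | zero => norm_num
  | succ n ih =>
    have h2 := Spow (a := 8) (by norm_num) n
    have h3 : 2^(n+1+8) = 2*2^(n+8) := by ring
    nlinarith [ih]

private lemma rle (r : ℕ) (hr : 12 ≤ r) : r ≤ 2^(r-4) := by
  obtain ⟨m, rfl⟩ := Nat.exists_eq_add_of_le hr
  have h : 12 + m - 4 = m + 8 := by omega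
  rw [h]
  have := rle_aux m
  omega

private lemma Wmono (r p : ℕ) : ∀ p', p ≤ p' → p' ≤ r →
    (p'+2)*2^(r-p') ≤ (p+2)*2^(r-p) := by
  intro p' hp
  induction p', hp using Nat.le_induction with
  | base => intro _; exact le_rfl
  | succ n hn ih =>
    intro hn1
    have h1 : n ≤ r := by omega
    have ih' := ih h1
    refine le_trans ?_ ih'
    have h2 : r - n = (r - (n+1)) + 1 := by omega
    rw [h2, pow_succ]
    have hX : 1 ≤ 2^(r-(n+1)) := Nat.one_le_two_pow
    nlinarith

-- per-k S instances: k, e with e + 2^k = k*2^k + 1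
private lemma SS0 : ∀ q, 5 ≤ q → 3*(6*q+1) ≤ 2^(q-0)*(3*q-4+0) + 3*0 := by
  intro q hq
  have h := S0 (q-5)
  have e1 : q-5+5 = q-0 := by omega
  have e2 : 3*(q-5)+11 = 3*q-4+0 := by omega
  rw [e1, e2] at h
  have e3 : 3*(6*q+1) = (18*(q-5)+93) + 0 := by omega
  rw [e3]
  exact Nat.add_le_add_right h 0

private lemma SS1 : ∀ q, 5 ≤ q → 3*(6*q+1) ≤ 2^(q-1)*(3*q-4+1) + 3*1 := by
  intro q hq
  have h := S1 (q-5)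
  have h3 := Nat.mul_le_mul_left 3 h
  have e1 : 3*(6*(q-5)+30) = 18*q-90+90 := by omega
  have e2 : 3*(2^(q-5+4)*((q-5)+4)) = 2^(q-1)*(3*q-4+1) := by
    have e2a : q-5+4 = q-1 := by omega
    have e2b : 3*(q-1) = 3*q-4+1 := by omega
    rw [e2a]
    calc 3*(2^(q-1)*(q-1)) = 2^(q-1)*(3*(q-1)) := by ring
    _ = 2^(q-1)*(3*q-4+1) := by rw [e2b]
  rw [e1, e2] at h3
  omega

private lemma SS2 : ∀ q, 5 ≤ q → 3*(6*q+1) ≤ 2^(q-2)*(3*q-4+5) + 3*2 := by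
  intro q hq
  have h := S2 (q-5)
  have e1 : q-5+3 = q-2 := by omega
  have e2 : 3*(q-5)+16 = 3*q-4+5 := by omega
  rw [e1, e2] at h
  have e3 : 3*(6*q+1) = (18*(q-5)+87) + 3*2 := by omega
  rw [e3]
  exact Nat.add_le_add_right h _

private lemma SS3 : ∀ q, 5 ≤ q → 3*(6*q+1) ≤ 2^(q-3)*(3*q-4+17) + 3*3 := by
  intro q hq
  have h := S3 (q-5)
  have e1 : q-5+2 = q-3 := by omega
  have e2 : 3*(q-5)+28 = 3*q-4+17 := by omega
  rw [e1, e2] at h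
  have e3 : 3*(6*q+1) = (18*(q-5)+84) + 3*3 := by omega
  rw [e3]
  exact Nat.add_le_add_right h _

private lemma SS4 : ∀ q, 5 ≤ q → 3*(6*q+1) ≤ 2^(q-4)*(3*q-4+49) + 3*4 := by
  intro q hq
  have h := S4 (q-5)
  have e1 : q-5+1 = q-4 := by omega
  have e2 : 3*(q-5)+60 = 3*q-4+49 := by omega
  rw [e1, e2] at h
  have e3 : 3*(6*q+1) = (18*(q-5)+81) + 3*4 := by omega
  rw [e3]
  exact Nat.add_le_add_right h _

-- generic N lemma
private lemma Ngen (r p k e : ℕ) (hr : 12 ≤ r) (hp3 : 3*p ≤ 2*r) (hk : k ≤ 4)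
    (hS : ∀ q, 5 ≤ q → 3*(6*q+1) ≤ 2^(q-k)*(3*q-4+e) + 3*k)
    (hbase : 2*12*(2*12+1-k) ≤ 10*2^(4-k)*(10+e)) :
    2*r*(2*r+1-k) ≤ (p+2)*2^(r-p-k)*(r-2+e) := by
  set q0 := (r+2)/3 with hq0
  have hq1 : r ≤ 3*q0 := by omega
  have hq2 : 3*q0 ≤ r+2 := by omega
  have hq3 : 4 ≤ q0 := by omega
  have hq4 : p ≤ r - q0 := by omega
  have hq5 : r - q0 ≤ r := by omega
  have hq6 : q0 ≤ r - p := by omega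
  have hmono := Wmono r p (r - q0) hq4 hq5
  have hrr : r - (r - q0) = q0 := by omega
  rw [hrr] at hmono
  -- divide both sides of hmono by 2^k
  have hdiv : (r-q0+2)*2^(q0-k) ≤ (p+2)*2^(r-p-k) := by
    have hmul : ((r-q0+2)*2^(q0-k))*2^k ≤ ((p+2)*2^(r-p-k))*2^k := by
      rw [mul_assoc, mul_assoc, ← pow_add, ← pow_add]
      have ea : q0-k+k = q0 := by omega
      have eb : r-p-k+k = r-p := by omega
      rw [ea, eb]
      exact hmono
    exact Nat.le_of_mul_le_mul_right hmul (Nat.two_pow_pos k)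
  -- core inequality at q0
  have hcore : 2*r*(2*r+1-k) ≤ (r-q0+2)*(2^(q0-k)*(r-2+e)) := by
    rcases Nat.lt_or_ge q0 5 with h5 | h5
    · -- q0 = 4, r = 12
      have hq4' : q0 = 4 := by omega
      have hr12 : r = 12 := by omega
      subst hr12
      rw [hq4'] at *
      calc 2*12*(2*12+1-k) ≤ 10*2^(4-k)*(10+e) := hbase
      _ = (12-4+2)*(2^(4-k)*(12-2+e)) := by ring_nf
    · have hSq := hS q0 h5
      have h1 : 2*r*(2*r+1-k) ≤ (2*q0)*(3*(6*q0+1)-3*k) := by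
        have e1 : (2*q0)*(3*(6*q0+1)-3*k) = (6*q0)*(6*q0+1-k) := by
          have e1a : 3*(6*q0+1)-3*k = 3*(6*q0+1-k) := by omega
          rw [e1a]; ring
        rw [e1]
        exact Nat.mul_le_mul (by omega) (by omega)
      have h2 : 3*(6*q0+1)-3*k ≤ 2^(q0-k)*(3*q0-4+e) := by omega
      have h3 : (2*q0)*(3*(6*q0+1)-3*k) ≤ (2*q0)*(2^(q0-k)*(3*q0-4+e)) :=
        Nat.mul_le_mul_left _ h2
      have h4 : (2*q0)*(2^(q0-k)*(3*q0-4+e)) ≤ (r-q0+2)*(2^(q0-k)*(r-2+e)) :=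
        Nat.mul_le_mul (by omega) (Nat.mul_le_mul_left _ (by omega))
      omega
  calc 2*r*(2*r+1-k) ≤ (r-q0+2)*(2^(q0-k)*(r-2+e)) := hcore
  _ = ((r-q0+2)*2^(q0-k))*(r-2+e) := by ring
  _ ≤ ((p+2)*2^(r-p-k))*(r-2+e) := Nat.mul_le_mul_right _ hdiv
  _ = (p+2)*2^(r-p-k)*(r-2+e) := by ring

-- L1 for the small-s case
private lemma L1 (r p : ℕ) (hr : 12 ≤ r) (hp3 : 3*p ≤ 2*r) :
    r*(r-2) ≤ (p+2)*2^(r-p) := by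
  set q0 := (r+2)/3 with hq0
  have hq1 : r ≤ 3*q0 := by omega
  have hq2 : 3*q0 ≤ r+2 := by omega
  have hq3 : 4 ≤ q0 := by omega
  have hq4 : p ≤ r - q0 := by omega
  have hq5 : r - q0 ≤ r := by omega
  have hmono := Wmono r p (r - q0) hq4 hq5
  have hrr : r - (r - q0) = q0 := by omega
  rw [hrr] at hmono
  refine le_trans ?_ hmono
  rcases Nat.lt_or_ge q0 5 with h5 | h5
  · have hq4' : q0 = 4 := by omega
    have hr12 : r = 12 := by omega
    subst hr12
    rw [hq4']
    norm_num
  · have hSq := SL1 (q0-5)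
    have e1 : q0-5+6 = q0+1 := by omega
    rw [e1] at hSq
    -- hSq : 9*(q0-5)+39 ≤ 2^(q0+1)
    have h1 : r*(r-2) ≤ (3*q0)*(3*q0-2) := Nat.mul_le_mul (by omega) (by omega)
    have h2 : (3*q0)*(3*q0-2) ≤ (2*q0)*2^q0 := by
      have e2 : (3*q0)*(3*q0-2) = q0*(3*(3*q0-2)) := by ring
      have e3 : (2*q0)*2^q0 = q0*(2^(q0+1)) := by rw [pow_succ]; ring
      rw [e2, e3]
      refine Nat.mul_le_mul_left _ ?_
      omega
    have h3 : (2*q0)*2^q0 ≤ (r-q0+2)*2^q0 := Nat.mul_le_mul_right _ (by omega)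
    omega



-- F layer: from Ngen instance to the multiplied-out nat inequality with s = r - k
private lemma Fgen (r s p k e : ℕ) (hr : 12 ≤ r) (hsk : s + k = r) (hk : k ≤ 4)
    (hke : e + 2^k = k*2^k + 1)
    (hN : 2*r*(2*r+1-k) ≤ (p+2)*2^(r-p-k)*(r-2+e))
    (hp : 3*p ≤ 2*r) :
    r*(r+1+s)*2^(p+1) + (p+2)*2^r + (p+2)*r ≤ (p+2)*k*2^r + (p+2)*r*2^s := by
  have hrs : r + 1 + s = 2*r+1-k := by omega
  rw [hrs]
  -- multiply hN by 2^p
  have hN2 := Nat.mul_le_mul_right (2^p) hN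
  have e1 : (p+2)*2^(r-p-k)*(r-2+e)*2^p = (p+2)*2^s*(r-2+e) := by
    have : 2^(r-p-k)*2^p = 2^s := by rw [← pow_add]; congr 1; omega
    calc (p+2)*2^(r-p-k)*(r-2+e)*2^p = (p+2)*(2^(r-p-k)*2^p)*(r-2+e) := by ring
    _ = (p+2)*2^s*(r-2+e) := by rw [this]
  rw [e1] at hN2
  have e2 : 2*r*(2*r+1-k)*2^p = r*(2*r+1-k)*2^(p+1) := by rw [pow_succ]; ring
  rw [e2] at hN2
  -- 2^r = 2^s * 2^k
  have h2r : (2:ℕ)^r = 2^s*2^k := by rw [← pow_add]; congr 1; omega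
  -- r ≤ 2^s
  have hrX : r ≤ 2^s := by
    calc r ≤ 2^(r-4) := rle r hr
    _ ≤ 2^s := Nat.pow_le_pow_right (by norm_num) (by omega)
  set X := 2^s with hX
  have key : X*(r-2+e) + X*2^k + r ≤ k*(X*2^k) + r*X := by
    have hr2 : 2 ≤ r := by omega
    have hXe : X*(r-2+e) + X*2^k = X*(r-1) + k*(X*2^k) := by
      have e3 : r-2+e + 2^k = r-1 + k*2^k := by omega
      calc X*(r-2+e) + X*2^k = X*((r-2+e)+2^k) := by ring
      _ = X*(r-1+k*2^k) := by rw [e3]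
      _ = X*(r-1) + k*(X*2^k) := by ring
    rw [hXe]
    have h5 : X*(r-1) + X = X*r := by
      have : (r-1)+1 = r := by omega
      calc X*(r-1) + X = X*((r-1)+1) := by ring
      _ = X*r := by rw [this]
    have h6 : X*r = r*X := by ring
    omega
  have key2 := Nat.mul_le_mul_left (p+2) key
  calc r*(2*r+1-k)*2^(p+1) + (p+2)*2^r + (p+2)*r
      ≤ (p+2)*X*(r-2+e) + (p+2)*(X*2^k) + (p+2)*r := by rw [h2r]; omega
  _ = (p+2)*(X*(r-2+e) + X*2^k + r) := by ring
  _ ≤ (p+2)*(k*(X*2^k) + r*X) := key2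
  _ = (p+2)*k*2^r + (p+2)*r*X := by rw [h2r]; ring

-- bridge: from F to the rational inequality for s = r - k
private lemma bridge (r s p k : ℕ) (hr : 12 ≤ r) (hsk : s + k = r)
    (hF : r*(r+1+s)*2^(p+1) + (p+2)*2^r + (p+2)*r ≤ (p+2)*k*2^r + (p+2)*r*2^s) :
    ((r:ℚ)+1+s) * ((2:ℚ)^r/(r:ℚ) + (2:ℚ)^(p+1)/((p:ℚ)+2)) ≤ 2^(r+1) + 2^s - 1 := by
  have hr0 : (0:ℚ) < (r:ℚ) := by exact_mod_cast (by omega : 0 < r)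
  have hp2 : (0:ℚ) < (p:ℚ)+2 := by positivity
  have hFQ : (r:ℚ)*((r:ℚ)+1+(s:ℚ))*2^(p+1) + ((p:ℚ)+2)*2^r + ((p:ℚ)+2)*(r:ℚ)
      ≤ ((p:ℚ)+2)*(k:ℚ)*2^r + ((p:ℚ)+2)*(r:ℚ)*2^s := by exact_mod_cast hF
  have hkQ : (k:ℚ) = (r:ℚ) - (s:ℚ) := by
    have : (s:ℚ) + (k:ℚ) = (r:ℚ) := by exact_mod_cast hsk
    linarith
  rw [hkQ] at hFQ
  rw [div_add_div _ _ (ne_of_gt hr0) (ne_of_gt hp2), ← mul_div_assoc, div_le_iff₀ (by positivity)]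
  have h2r1 : (2:ℚ)^(r+1) = 2*2^r := by ring
  have h2rs : (2:ℚ)^r = 2^s * 2^(r-s) := by rw [← pow_add]; congr 1; omega
  rw [h2r1]
  linarith [hFQ]


end keyIneqAux

theorem key_inequality_large_r (r s p : ℕ) (hr : 12 ≤ r) (hs : s ≤ r)
    (hp : (p : ℚ) ≤ 2 * r / 3) :
    ((r : ℚ) + 1 + s) *
        ((2 ^ r - 1) / r + (2 ^ (p + 2) - 1) / (p + 2) - (2 ^ (p + 1) - 1) / (p + 1)) <
      2 ^ (r + 1) + 2 ^ s - 1 := by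
  have hr0 : (0:ℚ) < (r:ℚ) := by exact_mod_cast (by omega : 0 < r)
  have hp1 : (0:ℚ) < (p:ℚ)+1 := by positivity
  have hp2 : (0:ℚ) < (p:ℚ)+2 := by positivity
  have hp3 : 3*p ≤ 2*r := by
    rw [le_div_iff₀ (by norm_num : (0:ℚ) < 3)] at hp
    have : ((3*p : ℕ) : ℚ) ≤ ((2*r : ℕ) : ℚ) := by push_cast; linarith
    exact_mod_cast this
  -- step A: bound the bracket strictly
  have hBlt : ((2:ℚ)^r - 1) / r + (2^(p+2) - 1)/((p:ℚ)+2) - (2^(p+1)-1)/((p:ℚ)+1)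
      < (2:ℚ)^r/(r:ℚ) + (2:ℚ)^(p+1)/((p:ℚ)+2) := by
    have t1 : ((2:ℚ)^r - 1)/(r:ℚ) < (2:ℚ)^r/(r:ℚ) := by
      apply div_lt_div_of_pos_right (by linarith) hr0
    have t2 : ((2:ℚ)^(p+2)-1)/((p:ℚ)+2) - ((2:ℚ)^(p+1)-1)/((p:ℚ)+1)
        ≤ (2:ℚ)^(p+1)/((p:ℚ)+2) := by
      rw [div_sub_div _ _ (ne_of_gt hp2) (ne_of_gt hp1), div_le_div_iff₀ (by positivity) hp2]
      have hpp : (2:ℚ)^(p+2) = 2*2^(p+1) := by ring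
      rw [hpp]
      have h1le : (1:ℚ) ≤ 2^(p+1) := by exact_mod_cast Nat.one_le_two_pow (n := p+1)
      have hp0 : (0:ℚ) ≤ (p:ℚ) := by positivity
      nlinarith [mul_nonneg (by positivity : (0:ℚ) ≤ (p:ℚ)+2) (sub_nonneg.mpr h1le)]
    linarith
  have hpos : (0:ℚ) < (r:ℚ) + 1 + s := by positivity
  have hmul := mul_lt_mul_of_pos_left hBlt hpos
  refine lt_of_lt_of_le hmul ?_
  rcases le_or_gt (s+5) r with hA | hB
  · -- case A : s ≤ r - 5
    have hL1 := L1 r p hr hp3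
    have hL1' : r*(r-2)*2^p ≤ (p+2)*2^r := by
      have h := Nat.mul_le_mul_right (2^p) hL1
      have e1 : (p+2)*2^(r-p)*2^p = (p+2)*2^r := by
        rw [mul_assoc, ← pow_add]
        congr 2
        omega
      rw [e1] at h
      exact h
    have hL1Q : ((r:ℚ))*((r:ℚ)-2)*2^p ≤ ((p:ℚ)+2)*2^r := by
      have h2 : ((r*(r-2)*2^p : ℕ):ℚ) ≤ (((p+2)*2^r : ℕ):ℚ) := by exact_mod_cast hL1'
      push_cast [Nat.cast_sub (by omega : 2 ≤ r)] at h2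
      convert h2 using 2 <;> push_cast <;> ring
    have hcoef : ((r:ℚ)+1+(s:ℚ)) ≤ 2*(r:ℚ)-4 := by
      have h5 : ((s:ℚ))+5 ≤ (r:ℚ) := by exact_mod_cast hA
      linarith
    have hbrpos : (0:ℚ) ≤ (2:ℚ)^r/(r:ℚ) + (2:ℚ)^(p+1)/((p:ℚ)+2) := by positivity
    have hterm2 : (2*(r:ℚ)-4)*((2:ℚ)^(p+1)/((p:ℚ)+2)) ≤ 4*((2:ℚ)^r/(r:ℚ)) := by
      rw [mul_div_assoc', mul_div_assoc', div_le_div_iff₀ hp2 hr0]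
      have hps : (2:ℚ)^(p+1) = 2*2^p := by ring
      rw [hps]
      nlinarith [hL1Q]
    have h1s : (1:ℚ) ≤ (2:ℚ)^s := by exact_mod_cast Nat.one_le_two_pow (n := s)
    have h2r1 : (2:ℚ)^(r+1) = 2*2^r := by ring
    calc ((r:ℚ)+1+s)*((2:ℚ)^r/(r:ℚ) + (2:ℚ)^(p+1)/((p:ℚ)+2))
        ≤ (2*(r:ℚ)-4)*((2:ℚ)^r/(r:ℚ) + (2:ℚ)^(p+1)/((p:ℚ)+2)) :=
          mul_le_mul_of_nonneg_right hcoef hbrpos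
    _ = (2*(r:ℚ)-4)*((2:ℚ)^r/(r:ℚ)) + (2*(r:ℚ)-4)*((2:ℚ)^(p+1)/((p:ℚ)+2)) := by ring
    _ ≤ (2*(r:ℚ)-4)*((2:ℚ)^r/(r:ℚ)) + 4*((2:ℚ)^r/(r:ℚ)) := by linarith
    _ = 2*(r:ℚ)*((2:ℚ)^r/(r:ℚ)) := by ring
    _ = 2*(2:ℚ)^r := by field_simp
    _ ≤ 2^(r+1) + 2^s - 1 := by rw [h2r1]; linarith
  · -- case B : s = r - k, k ≤ 4
    have hk4 : r - s ≤ 4 := by omega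
    have hsk : s + (r-s) = r := by omega
    set k := r - s with hkdef
    have hke : ∃ e, e + 2^k = k*2^k + 1 ∧
        (∀ q, 5 ≤ q → 3*(6*q+1) ≤ 2^(q-k)*(3*q-4+e) + 3*k) ∧
        2*12*(2*12+1-k) ≤ 10*2^(4-k)*(10+e) := by
      interval_cases k
      · exact ⟨0, by norm_num, SS0, by norm_num⟩
      · exact ⟨1, by norm_num, SS1, by norm_num⟩
      · exact ⟨5, by norm_num, SS2, by norm_num⟩
      · exact ⟨17, by norm_num, SS3, by norm_num⟩
      · exact ⟨49, by norm_num, SS4, by norm_num⟩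
    obtain ⟨e, he1, he2, he3⟩ := hke
    exact bridge r s p k hr hsk
      (Fgen r s p k e hr hsk hk4 he1 (Ngen r p k e hr hp3 hk4 he2 he3) hp3)
end

section
/- If G is a finite simple graph with n vertices, n ≡ 0 mod 3, and maximum degree at most 2, then k(G) ≤ k((n/3)·K₃) = (7n/3) + 1, with equality if and only if G is the disjoint union of n/3 triangles. -/
open SimpleGraph Finset

/- The disjoint union of n/3 triangles on Fin n (for 3 dividing n): vertices are grouped
into consecutive blocks of three. -/
def triangleUnionGraph (n : ℕ) : SimpleGraph (Fin n) where
  Adj x y := x ≠ y ∧ x.val / 3 = y.val / 3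
  symm := by
    constructor
    intro x y h
    exact ⟨h.1.symm, h.2.symm⟩
  loopless := by
    constructor
    intro x h
    exact h.1 rfl

section Aux
variable {V : Type*} [Fintype V] [DecidableEq V] {G : SimpleGraph V} [DecidableRel G.Adj]

lemma triangle_struct (hdeg : ∀ v, G.degree v ≤ 2) {s : Finset V} {v : V}
    (hs : G.IsNClique 3 s) (hv : v ∈ s) :
    s = insert v (G.neighborFinset v) := by
  have herase : s.erase v ⊆ G.neighborFinset v := by
    intro w hw
    rw [mem_neighborFinset]
    exact (hs.1 (Finset.mem_coe.mpr (Finset.mem_of_mem_erase hw))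
      (Finset.mem_coe.mpr hv) (Finset.ne_of_mem_erase hw)).symm
  have hcard : (s.erase v).card = 2 := by
    rw [Finset.card_erase_of_mem hv, hs.2]
  have hNle : (G.neighborFinset v).card ≤ 2 := by
    rw [card_neighborFinset_eq_degree]; exact hdeg v
  have heq : s.erase v = G.neighborFinset v :=
    Finset.eq_of_subset_of_card_le herase (by omega)
  rw [← heq, Finset.insert_erase hv]

lemma deg_of_triangle (hdeg : ∀ v, G.degree v ≤ 2) {s : Finset V} {v : V}
    (hs : G.IsNClique 3 s) (hv : v ∈ s) : G.degree v = 2 := by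
  have h := triangle_struct hdeg hs hv
  have : s.card = 3 := hs.2
  rw [h] at this
  have h2 : (G.neighborFinset v).card ≤ 2 := by
    rw [card_neighborFinset_eq_degree]; exact hdeg v
  have := Finset.card_insert_le v (G.neighborFinset v)
  rw [← card_neighborFinset_eq_degree]
  omega

lemma clique_card_le (hdeg : ∀ v, G.degree v ≤ 2) {s : Finset V}
    (hs : G.IsClique (s : Set V)) : s.card ≤ 3 := by
  by_contra h
  push_neg at h
  obtain ⟨v, hv⟩ : s.Nonempty := Finset.card_pos.mp (by omega)
  have hsub : s.erase v ⊆ G.neighborFinset v := by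
    intro w hw
    rw [mem_neighborFinset]
    exact (hs (Finset.mem_coe.mpr (Finset.mem_of_mem_erase hw))
      (Finset.mem_coe.mpr hv) (Finset.ne_of_mem_erase hw)).symm
  have := Finset.card_le_card hsub
  rw [Finset.card_erase_of_mem hv, card_neighborFinset_eq_degree] at this
  have := hdeg v
  omega

end Aux

section Aux2
variable {V : Type*} [Fintype V] [DecidableEq V] {G : SimpleGraph V} [DecidableRel G.Adj]

lemma twoclique_filter (v : V) :
    (G.cliqueFinset 2).filter (fun s => v ∈ s)
      = (G.neighborFinset v).image (fun w => ({v, w} : Finset V)) := by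
  ext s
  simp only [mem_filter, mem_cliqueFinset_iff, mem_image, mem_neighborFinset]
  constructor
  · rintro ⟨hs, hv⟩
    have h1 : (s.erase v).card = 1 := by rw [Finset.card_erase_of_mem hv, hs.2]
    obtain ⟨w, hw⟩ := Finset.card_eq_one.mp h1
    have hws : w ∈ s.erase v := hw ▸ Finset.mem_singleton_self w
    refine ⟨w, hs.1 (Finset.mem_coe.mpr hv)
      (Finset.mem_coe.mpr (Finset.mem_of_mem_erase hws))
      (Finset.ne_of_mem_erase hws).symm, ?_⟩
    rw [← Finset.insert_erase hv, hw]
  · rintro ⟨w, hadj, rfl⟩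
    refine ⟨⟨?_, Finset.card_pair hadj.ne⟩, Finset.mem_insert_self _ _⟩
    rw [Finset.coe_insert, Finset.coe_singleton]
    exact isClique_pair.mpr (fun _ => hadj)

lemma c2_eq_degree (v : V) :
    #((G.cliqueFinset 2).filter (fun s => v ∈ s)) = G.degree v := by
  rw [twoclique_filter, ← card_neighborFinset_eq_degree]
  apply Finset.card_image_of_injOn
  intro a ha b hb hab
  have hav : a ≠ v := fun h => (G.irrefl (h ▸ (mem_neighborFinset G v a).mp ha))
  have heq : ({v, a} : Finset V) = {v, b} := hab
  have : a ∈ ({v, b} : Finset V) := heq ▸ (by simp : a ∈ ({v, a} : Finset V))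
  simp only [Finset.mem_insert, Finset.mem_singleton] at this
  tauto

lemma c3_le_one (hdeg : ∀ v, G.degree v ≤ 2) (v : V) :
    #((G.cliqueFinset 3).filter (fun s => v ∈ s)) ≤ 1 := by
  apply Finset.card_le_one.mpr
  intro a ha b hb
  simp only [mem_filter, mem_cliqueFinset_iff] at ha hb
  rw [triangle_struct hdeg ha.1 ha.2, triangle_struct hdeg hb.1 hb.2]

lemma sum_card_filter (F : Finset (Finset V)) :
    ∑ v, #(F.filter (fun s => v ∈ s)) = ∑ s ∈ F, s.card := by
  simp_rw [Finset.card_filter]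
  rw [Finset.sum_comm]
  refine Finset.sum_congr rfl fun s _ => ?_
  rw [← Finset.card_filter]
  simp [Finset.filter_univ_mem]

lemma cliqueCount_eq (hdeg : ∀ v, G.degree v ≤ 2) :
    cliqueCount G = 1 + Fintype.card V + #(G.cliqueFinset 2) + #(G.cliqueFinset 3) := by
  have h0 : cliqueCount G = #(univ.filter (fun s : Finset V => G.IsClique (s : Set V))) := by
    rw [cliqueCount, Nat.card_eq_fintype_card, Fintype.card_subtype]
  have hmem : ∀ s ∈ univ.filter (fun s : Finset V => G.IsClique (s : Set V)),
      s.card ∈ Finset.range 4 := by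
    intro s hs
    simp only [mem_filter] at hs
    simp only [Finset.mem_range]
    have := clique_card_le hdeg hs.2
    omega
  have hfib : ∀ i, (univ.filter (fun s : Finset V => G.IsClique (s : Set V))).filter
      (fun s => s.card = i) = G.cliqueFinset i := by
    intro i
    ext s
    simp [SimpleGraph.mem_cliqueFinset_iff, SimpleGraph.isNClique_iff]
  have h00 : G.cliqueFinset 0 = {∅} := by
    ext s; simp [mem_cliqueFinset_iff, isNClique_zero]
  have h11 : #(G.cliqueFinset 1) = Fintype.card V := by
    have : G.cliqueFinset 1 = univ.image (fun v => ({v} : Finset V)) := by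
      ext s; simp [mem_cliqueFinset_iff, isNClique_one, eq_comm]
    rw [this, Finset.card_image_of_injective _ Finset.singleton_injective, card_univ]
  rw [h0, Finset.card_eq_sum_card_fiberwise hmem]
  rw [Finset.sum_range_succ, Finset.sum_range_succ, Finset.sum_range_succ,
    Finset.sum_range_one]
  rw [hfib 0, hfib 1, hfib 2, hfib 3, h00, h11]
  simp

end Aux2

section Aux3
variable {V : Type*} [Fintype V] [DecidableEq V] {G : SimpleGraph V} [DecidableRel G.Adj]

lemma count_of_covered {n : ℕ} (hcard : Fintype.card V = n) (h3 : n % 3 = 0)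
    (hdeg : ∀ v, G.degree v ≤ 2)
    (hcov : ∀ v : V, ∃ t, G.IsNClique 3 t ∧ v ∈ t) :
    cliqueCount G = 7 * (n / 3) + 1 := by
  have hc3 : ∀ v : V, #((G.cliqueFinset 3).filter (fun s => v ∈ s)) = 1 := by
    intro v
    refine le_antisymm (c3_le_one hdeg v) ?_
    obtain ⟨t, ht, hvt⟩ := hcov v
    exact Finset.card_pos.mpr ⟨t, Finset.mem_filter.mpr
      ⟨(G.mem_cliqueFinset_iff).mpr ht, hvt⟩⟩
  have hdeg2 : ∀ v : V, G.degree v = 2 := by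
    intro v
    obtain ⟨t, ht, hvt⟩ := hcov v
    exact deg_of_triangle hdeg ht hvt
  have hk3 : 3 * #(G.cliqueFinset 3) = n := by
    have := sum_card_filter (G.cliqueFinset 3)
    rw [Finset.sum_congr rfl (fun v _ => hc3 v)] at this
    simp only [Finset.sum_const, card_univ, smul_eq_mul, mul_one] at this
    have h2 : ∑ s ∈ G.cliqueFinset 3, s.card = 3 * #(G.cliqueFinset 3) := by
      rw [Finset.sum_congr rfl (fun s hs => ((G.mem_cliqueFinset_iff).mp hs).2)]
      simp [mul_comm]
    omega
  have hk2 : #(G.cliqueFinset 2) = n := by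
    have := sum_card_filter (G.cliqueFinset 2)
    rw [Finset.sum_congr rfl (fun v _ => c2_eq_degree v),
      Finset.sum_congr rfl (fun v _ => hdeg2 v)] at this
    simp only [Finset.sum_const, card_univ, smul_eq_mul, hcard] at this
    have h2 : ∑ s ∈ G.cliqueFinset 2, s.card = 2 * #(G.cliqueFinset 2) := by
      rw [Finset.sum_congr rfl (fun s hs => ((G.mem_cliqueFinset_iff).mp hs).2)]
      simp [mul_comm]
    omega
  rw [cliqueCount_eq hdeg, hcard, hk2]
  omega

lemma covered_of_iso {n : ℕ} (h3 : n % 3 = 0) (e : G ≃g triangleUnionGraph n) :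
    ∀ v : V, ∃ t, G.IsNClique 3 t ∧ v ∈ t := by
  intro v
  set x := e v with hx
  have hlt := x.isLt
  set b := x.val / 3 with hbdef
  have hb : 3 * b + 2 < n := by omega
  set a0 : Fin n := ⟨3 * b, by omega⟩
  set a1 : Fin n := ⟨3 * b + 1, by omega⟩
  set a2 : Fin n := ⟨3 * b + 2, by omega⟩
  have hadj : ∀ p q : Fin n, p ∈ ({a0, a1, a2} : Finset (Fin n)) →
      q ∈ ({a0, a1, a2} : Finset (Fin n)) → p ≠ q → (triangleUnionGraph n).Adj p q := by
    intro p q hp hq hpq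
    refine ⟨hpq, ?_⟩
    simp only [Finset.mem_insert, Finset.mem_singleton] at hp hq
    have hpv : p.val / 3 = b := by rcases hp with h|h|h <;> subst h <;> simp [a0, a1, a2] <;> omega
    have hqv : q.val / 3 = b := by rcases hq with h|h|h <;> subst h <;> simp [a0, a1, a2] <;> omega
    rw [hpv, hqv]
  refine ⟨({e.symm a0, e.symm a1, e.symm a2} : Finset V), ⟨?_, ?_⟩, ?_⟩
  · intro p hp q hq hpq
    simp only [Finset.coe_insert, Finset.coe_singleton, Set.mem_insert_iff,
      Set.mem_singleton_iff] at hp hq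
    have hmem : ∀ r, r = e.symm a0 ∨ r = e.symm a1 ∨ r = e.symm a2 →
        ∃ z ∈ ({a0, a1, a2} : Finset (Fin n)), r = e.symm z := by
      rintro r (h|h|h) <;> exact ⟨_, by simp, h⟩
    obtain ⟨z1, hz1, rfl⟩ := hmem p hp
    obtain ⟨z2, hz2, rfl⟩ := hmem q hq
    have hz : z1 ≠ z2 := fun h => hpq (by rw [h])
    have := hadj z1 z2 hz1 hz2 hz
    exact (e.symm.map_rel_iff).mpr this
  · have h01 : a0 ≠ a1 := by simp [a0, a1, Fin.ext_iff]
    have h02 : a0 ≠ a2 := by simp [a0, a2, Fin.ext_iff]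
    have h12 : a1 ≠ a2 := by simp [a1, a2, Fin.ext_iff]
    rw [Finset.card_insert_of_notMem, Finset.card_insert_of_notMem, Finset.card_singleton]
    · simp only [Finset.mem_singleton]
      exact fun h => h12 (e.symm.injective h)
    · simp only [Finset.mem_insert, Finset.mem_singleton]
      push_neg
      exact ⟨fun h => h01 (e.symm.injective h), fun h => h02 (e.symm.injective h)⟩
  · have hxmem : x = a0 ∨ x = a1 ∨ x = a2 := by
      have : x.val = 3 * b ∨ x.val = 3 * b + 1 ∨ x.val = 3 * b + 2 := by omega
      rcases this with h|h|h
      · exact Or.inl (Fin.ext h)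
      · exact Or.inr (Or.inl (Fin.ext h))
      · exact Or.inr (Or.inr (Fin.ext h))
    have hv : v = e.symm x := by rw [hx]; simp
    rcases hxmem with h|h|h <;> (rw [hv, h]; simp)

end Aux3

lemma tug_adj {n : ℕ} {x y : Fin n} :
    (triangleUnionGraph n).Adj x y ↔ x ≠ y ∧ x.val / 3 = y.val / 3 := Iff.rfl

section Aux4
variable {V : Type*} [Fintype V] [DecidableEq V] {G : SimpleGraph V} [DecidableRel G.Adj]

lemma iso_of_covered {n : ℕ} (hcard : Fintype.card V = n) (h3 : n % 3 = 0)
    (hdeg : ∀ v, G.degree v ≤ 2)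
    (hcov : ∀ v : V, ∃ t, G.IsNClique 3 t ∧ v ∈ t) :
    Nonempty (G ≃g triangleUnionGraph n) := by
  have hn : 3 * (n / 3) = n := by omega
  set m := n / 3 with hm
  set T : V → Finset V := fun v => insert v (G.neighborFinset v) with hT
  have hT3 : ∀ v, G.IsNClique 3 (T v) := by
    intro v
    obtain ⟨t, ht, hvt⟩ := hcov v
    have h := triangle_struct hdeg ht hvt
    show G.IsNClique 3 (insert v (G.neighborFinset v))
    rw [← h]
    exact ht
  have hvT : ∀ v, v ∈ T v := fun v => Finset.mem_insert_self _ _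
  have hkey : ∀ u v : V, u ∈ T v → T u = T v := fun u v hu =>
    (triangle_struct hdeg (hT3 v) hu).symm
  have hAdj : ∀ u v : V, G.Adj u v ↔ u ≠ v ∧ T u = T v := by
    intro u v
    constructor
    · intro h
      refine ⟨h.ne, ?_⟩
      have : v ∈ T u := Finset.mem_insert_of_mem ((mem_neighborFinset G u v).mpr h)
      exact (hkey v u this).symm
    · rintro ⟨hne, he⟩
      have : v ∈ T u := he ▸ hvT v
      rcases Finset.mem_insert.mp this with h | h
      · exact absurd h.symm hne
      · exact (mem_neighborFinset G u v).mp h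
  have hfib : ∀ u : V, univ.filter (fun v => T v = T u) = T u := by
    intro u
    ext w
    simp only [mem_filter, mem_univ, true_and]
    exact ⟨fun h => h ▸ hvT w, fun h => hkey w u h⟩
  set B := univ.image T with hB
  have hBcard : #B = m := by
    have hsum := Finset.card_eq_sum_card_fiberwise
      (f := T) (t := B) (s := (univ : Finset V))
      (fun x _ => Finset.mem_image_of_mem T (mem_univ x))
    rw [card_univ, hcard] at hsum
    have h3' : ∀ b ∈ B, #(univ.filter (fun v => T v = b)) = 3 := by
      intro b hb
      obtain ⟨u, _, rfl⟩ := Finset.mem_image.mp hb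
      rw [hfib u]
      exact (hT3 u).2
    rw [Finset.sum_congr rfl h3'] at hsum
    simp only [Finset.sum_const, smul_eq_mul] at hsum
    omega
  -- rank and index inside each triangle
  obtain e0 := Fintype.equivFinOfCardEq hcard
  set r : V → ℕ := fun v => (e0 v).val with hr
  have hrinj : Function.Injective r := fun a b h => e0.injective (Fin.ext h)
  set idx : V → ℕ := fun v => #((T v).filter (fun w => r w < r v)) with hidx
  have idx_le : ∀ v, idx v ≤ 2 := by
    intro v
    have hsub : (T v).filter (fun w => r w < r v) ⊆ (T v).erase v := by
      intro w hw
      rw [Finset.mem_filter] at hw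
      exact Finset.mem_erase.mpr ⟨fun h => by simp [h] at hw, hw.1⟩
    have := Finset.card_le_card hsub
    rw [Finset.card_erase_of_mem (hvT v), (hT3 v).2] at this
    simp only [hidx]
    omega
  have idx_mono : ∀ u v : V, T u = T v → r u < r v → idx u < idx v := by
    intro u v hTuv hruv
    apply Finset.card_lt_card
    rw [hTuv]
    constructor
    · intro w hw
      rw [Finset.mem_filter] at hw ⊢
      exact ⟨hw.1, by omega⟩
    · intro hcon
      have hu : u ∈ (T v).filter (fun w => r w < r v) :=
        Finset.mem_filter.mpr ⟨hTuv ▸ hvT u, hruv⟩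
      have := hcon hu
      rw [Finset.mem_filter] at this
      omega
  have idx_inj : ∀ u v : V, T u = T v → idx u = idx v → u = v := by
    intro u v hT he
    rcases Nat.lt_trichotomy (r u) (r v) with h | h | h
    · have := idx_mono u v hT h; omega
    · exact hrinj h
    · have := idx_mono v u hT.symm h; omega
  have hBcard' : Fintype.card {x // x ∈ B} = m := by rw [Fintype.card_coe, hBcard]
  obtain eB := Fintype.equivFinOfCardEq hBcard'
  set bT : V → Fin m := fun v => eB ⟨T v, Finset.mem_image_of_mem T (mem_univ v)⟩
    with hbTdef
  have hbT : ∀ u v : V, T u = T v ↔ bT u = bT v := by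
    intro u v
    constructor
    · intro h
      simp only [hbTdef]
      congr 1
      exact Subtype.ext h
    · intro h
      have := eB.injective h
      exact congrArg Subtype.val this
  set f : V → Fin n := fun v => ⟨3 * (bT v).val + idx v, by
    have h1 := (bT v).isLt
    have h2 := idx_le v
    omega⟩ with hf
  have hf3 : ∀ v, (f v).val / 3 = (bT v).val := by
    intro v
    have h2 := idx_le v
    simp only [hf]
    omega
  have finj : Function.Injective f := by
    intro u v h
    have hval : 3 * (bT u).val + idx u = 3 * (bT v).val + idx v := congrArg Fin.val h
    have h2u := idx_le u
    have h2v := idx_le v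
    have hb : (bT u).val = (bT v).val := by omega
    have hT' : T u = T v := (hbT u v).mpr (Fin.ext hb)
    exact idx_inj u v hT' (by omega)
  have hbij : Function.Bijective f :=
    (Fintype.bijective_iff_injective_and_card f).mpr ⟨finj, by simp [hcard]⟩
  refine ⟨{ toEquiv := Equiv.ofBijective f hbij, map_rel_iff' := ?_ }⟩
  intro u v
  show (triangleUnionGraph n).Adj (f u) (f v) ↔ G.Adj u v
  rw [tug_adj, hAdj]
  constructor
  · rintro ⟨hne, hdiv⟩
    rw [hf3 u, hf3 v] at hdiv
    exact ⟨fun h => hne (by rw [h]), (hbT u v).mpr (Fin.ext hdiv)⟩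
  · rintro ⟨hne, hTe⟩
    refine ⟨fun h => hne (finj h), ?_⟩
    rw [hf3 u, hf3 v]
    exact congrArg Fin.val ((hbT u v).mp hTe)

end Aux4


theorem clique_count_max_degree_two {V : Type*} [Fintype V] (G : SimpleGraph V)
    [DecidableRel G.Adj] (n : ℕ) (hcard : Fintype.card V = n) (h3 : n % 3 = 0)
    (hdeg : ∀ v, G.degree v ≤ 2) :
    cliqueCount G ≤ 7 * (n / 3) + 1 ∧
      (cliqueCount G = 7 * (n / 3) + 1 ↔ Nonempty (G ≃g triangleUnionGraph n)) := by
  classical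
  have hk := cliqueCount_eq (G := G) hdeg
  rw [hcard] at hk
  have hsum2 : ∑ s ∈ G.cliqueFinset 2, s.card = 2 * #(G.cliqueFinset 2) := by
    rw [Finset.sum_congr rfl (fun s hs => ((G.mem_cliqueFinset_iff).mp hs).2)]
    simp [mul_comm]
  have hk2 : 2 * #(G.cliqueFinset 2) ≤ 2 * n := by
    have h2sum := sum_card_filter (G.cliqueFinset 2)
    have hle : ∑ v : V, #((G.cliqueFinset 2).filter (fun s => v ∈ s)) ≤ ∑ _v : V, 2 :=
      Finset.sum_le_sum (fun v _ => by rw [c2_eq_degree]; exact hdeg v)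
    simp only [Finset.sum_const, card_univ, smul_eq_mul, hcard] at hle
    omega
  have hk3sum : ∑ v : V, #((G.cliqueFinset 3).filter (fun s => v ∈ s))
      = 3 * #(G.cliqueFinset 3) := by
    rw [sum_card_filter]
    rw [Finset.sum_congr rfl (fun s hs => ((G.mem_cliqueFinset_iff).mp hs).2)]
    simp [mul_comm]
  have hk3 : 3 * #(G.cliqueFinset 3) ≤ n := by
    have hle : ∑ v : V, #((G.cliqueFinset 3).filter (fun s => v ∈ s)) ≤ ∑ _v : V, 1 :=
      Finset.sum_le_sum (fun v _ => c3_le_one hdeg v)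
    simp only [Finset.sum_const, card_univ, smul_eq_mul, mul_one, hcard] at hle
    omega
  refine ⟨by omega, ?_, ?_⟩
  · intro heq
    have h33 : ∑ v : V, #((G.cliqueFinset 3).filter (fun s => v ∈ s)) = ∑ _v : V, 1 := by
      simp only [Finset.sum_const, card_univ, smul_eq_mul, mul_one, hcard]
      omega
    have hall := (Finset.sum_eq_sum_iff_of_le
      (fun v (_ : v ∈ (univ : Finset V)) => c3_le_one hdeg v)).mp h33
    have hcov : ∀ v : V, ∃ t, G.IsNClique 3 t ∧ v ∈ t := by
      intro v
      have h1 := hall v (mem_univ v)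
      have : ((G.cliqueFinset 3).filter (fun s => v ∈ s)).Nonempty :=
        Finset.card_pos.mp (by omega)
      obtain ⟨s, hs⟩ := this
      rw [Finset.mem_filter, G.mem_cliqueFinset_iff] at hs
      exact ⟨s, hs.1, hs.2⟩
    exact iso_of_covered hcard h3 hdeg hcov
  · rintro ⟨e⟩
    exact count_of_covered hcard h3 hdeg (covered_of_iso h3 e)
end

section
/- Let n, r ∈ ℕ and write n = a(r+1) + b with 0 ≤ b ≤ r. If G is a finite simple graph with n vertices and maximum degree at most r, then k(G) ≤ k(aK_{r+1} ∪ K_b) = a(2^{r+1} − 1) + 2^b, where k(G) is the number of cliques of G including the empty clique. -/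
set_option linter.unusedSectionVars false

open SimpleGraph Finset
open SimpleGraph Finset

namespace CRaux

/-- the bound function -/
def gB (r n : ℕ) : ℕ := (n / (r+1)) * (2^(r+1) - 1) + 2^(n % (r+1))

lemma aux1 {u v : ℕ} (hu : 1 ≤ u) (hv : 1 ≤ v) : u + v ≤ u * v + 1 := by
  obtain ⟨u, rfl⟩ := Nat.exists_eq_add_of_le hu
  obtain ⟨v, rfl⟩ := Nat.exists_eq_add_of_le hv
  ring_nf
  nlinarith

lemma aux2 {x y z : ℕ} (hxy : y ≤ x) (hz : 1 ≤ z) : y * z + x ≤ x * z + y := by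
  obtain ⟨w, rfl⟩ := Nat.exists_eq_add_of_le hxy
  obtain ⟨z', rfl⟩ := Nat.exists_eq_add_of_le hz
  ring_nf
  nlinarith

lemma gB_step {r d n : ℕ} (hd : d ≤ r) (hn : d + 1 ≤ n) :
    gB r (n - (d+1)) + (2^(d+1) - 1) ≤ gB r n := by
  have hr1 : 0 < r + 1 := Nat.succ_pos r
  have h2 : (1:ℕ) ≤ 2 ^ (d+1) := Nat.one_le_two_pow
  have h2r : (1:ℕ) ≤ 2 ^ (r+1) := Nat.one_le_two_pow
  rw [gB, gB]
  obtain ⟨a, b, hdm, hbr, hda, hdb⟩ :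
      ∃ a b, (r+1) * a + b = n ∧ b < r+1 ∧ n/(r+1) = a ∧ n%(r+1) = b :=
    ⟨_, _, Nat.div_add_mod n (r+1), Nat.mod_lt _ hr1, rfl, rfl⟩
  rw [hda, hdb]
  rcases le_or_gt (d+1) b with hcase | hcase
  · -- no wrap: b ≥ d+1
    have he : n - (d+1) = (r+1) * a + (b - (d+1)) := by omega
    have hdiv : (n - (d+1)) / (r+1) = a := by
      rw [he, Nat.mul_add_div hr1, Nat.div_eq_of_lt (by omega), Nat.add_zero]
    have hmod : (n - (d+1)) % (r+1) = b - (d+1) := by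
      rw [he, Nat.mul_add_mod, Nat.mod_eq_of_lt (by omega)]
    rw [hdiv, hmod]
    have key : 2 ^ (b - (d+1)) + 2 ^ (d+1) ≤ 2 ^ b + 1 := by
      have hsplit : 2 ^ b = 2 ^ (b - (d+1)) * 2 ^ (d+1) := by
        rw [← pow_add]; congr 1; omega
      rw [hsplit]
      exact aux1 Nat.one_le_two_pow Nat.one_le_two_pow
    omega
  · -- wrap: b < d+1, so a ≥ 1
    have hapos : 1 ≤ a := by
      by_contra hcon
      have ha0 : a = 0 := by omega
      rw [ha0, Nat.mul_zero, Nat.zero_add] at hdm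
      omega
    obtain ⟨a', rfl⟩ : ∃ a', a = a' + 1 := ⟨a - 1, by omega⟩
    have hexp : (r+1) * (a'+1) = (r+1) * a' + (r+1) := by ring
    have he : n - (d+1) = (r+1) * a' + (b + (r+1) - (d+1)) := by omega
    have hlt : b + (r+1) - (d+1) < r + 1 := by omega
    have hdiv : (n - (d+1)) / (r+1) = a' := by
      rw [he, Nat.mul_add_div hr1, Nat.div_eq_of_lt hlt, Nat.add_zero]
    have hmod : (n - (d+1)) % (r+1) = b + (r+1) - (d+1) := by
      rw [he, Nat.mul_add_mod, Nat.mod_eq_of_lt hlt]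
    rw [hdiv, hmod]
    have key : 2 ^ (b + (r+1) - (d+1)) + 2 ^ (d+1) ≤ 2 ^ (r+1) + 2 ^ b := by
      have hc : b + (r+1) - (d+1) = b + (r + 1 - (d+1)) := by omega
      have hb2 : 2 ^ b ≤ 2 ^ (d+1) := Nat.pow_le_pow_right (by norm_num) (by omega)
      have hz : (1:ℕ) ≤ 2 ^ (r + 1 - (d+1)) := Nat.one_le_two_pow
      have hr2 : 2 ^ (d+1) * 2 ^ (r + 1 - (d+1)) = 2 ^ (r+1) := by
        rw [← pow_add]; congr 1; omega
      calc 2 ^ (b + (r+1) - (d+1)) + 2 ^ (d+1)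
          = 2 ^ b * 2 ^ (r + 1 - (d+1)) + 2 ^ (d+1) := by rw [hc, pow_add]
        _ ≤ 2 ^ (d+1) * 2 ^ (r + 1 - (d+1)) + 2 ^ b := aux2 hb2 hz
        _ = 2 ^ (r+1) + 2 ^ b := by rw [hr2]
    have hmono : a' * (2^(r+1) - 1) + (2^(r+1) - 1) = (a'+1) * (2^(r+1)-1) := by ring
    omega


section Graph

variable {V : Type*} [Fintype V] [LinearOrder V] (G : SimpleGraph V) [DecidableRel G.Adj]

instance cliquePredDec : DecidablePred fun s : Finset V => G.IsClique (s : Set V) := by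
  intro s
  exact decidable_of_iff (∀ a ∈ s, ∀ b ∈ s, a ≠ b → G.Adj a b)
    (by simp [SimpleGraph.isClique_iff, Set.Pairwise])

/-- closed neighbourhood of `x` inside `W` -/
def Bx (W : Finset V) (x : V) : Finset V := insert x (W.filter (G.Adj x))

/-- cliques contained in `W` -/
def clq (W : Finset V) : Finset (Finset V) :=
  W.powerset.filter fun s => G.IsClique (s : Set V)

/-- cliques in `W` meeting the closed neighbourhood of `x` -/
def meetB (W : Finset V) (x : V) : Finset (Finset V) :=
  (clq G W).filter fun s => (s ∩ Bx G W x).Nonempty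

def outB (W : Finset V) (x : V) : Finset (Finset V) :=
  (meetB G W x).filter fun s => ¬ s ⊆ Bx G W x

def inB (W : Finset V) (x : V) : Finset (Finset V) :=
  (meetB G W x).filter fun s => s ⊆ Bx G W x

def ncB (W : Finset V) (x : V) : Finset (Finset V) :=
  (Bx G W x).powerset.filter fun t => t.Nonempty ∧ ¬ G.IsClique (t : Set V)

lemma Bx_subset {W : Finset V} {x : V} (hx : x ∈ W) : Bx G W x ⊆ W := by
  intro y hy
  rcases Finset.mem_insert.mp hy with rfl | hy
  · exact hx
  · exact (Finset.mem_filter.mp hy).1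

lemma x_mem_Bx (W : Finset V) (x : V) : x ∈ Bx G W x := Finset.mem_insert_self _ _

lemma card_Bx (W : Finset V) (x : V) :
    (Bx G W x).card = (W.filter (G.Adj x)).card + 1 := by
  rw [Bx, Finset.card_insert_of_notMem]
  intro h
  exact G.irrefl ((Finset.mem_filter.mp h).2)

lemma mem_Bx_iff {W : Finset V} {x y : V} : y ∈ Bx G W x ↔ y = x ∨ (y ∈ W ∧ G.Adj x y) := by
  simp only [Bx, Finset.mem_insert, Finset.mem_filter]

lemma mem_clq {W : Finset V} {s : Finset V} :
    s ∈ clq G W ↔ s ⊆ W ∧ G.IsClique (s : Set V) := by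
  simp [clq, Finset.mem_filter, Finset.mem_powerset]

/-- the peeling identity -/
lemma peel {W : Finset V} {x : V} :
    (clq G W).card = (clq G (W \ Bx G W x)).card + (meetB G W x).card := by
  have hsplit := Finset.card_filter_add_card_filter_not
    (s := clq G W) (p := fun s => (s ∩ Bx G W x).Nonempty)
  have hco : (clq G W).filter (fun s => ¬ (s ∩ Bx G W x).Nonempty) = clq G (W \ Bx G W x) := by
    ext s
    simp only [Finset.mem_filter, mem_clq, Finset.not_nonempty_iff_eq_empty]
    constructor
    · rintro ⟨⟨hsW, hclq⟩, hempty⟩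
      refine ⟨?_, hclq⟩
      rw [Finset.subset_sdiff]
      exact ⟨hsW, Finset.disjoint_iff_inter_eq_empty.mpr hempty⟩
    · rintro ⟨hs, hclq⟩
      rw [Finset.subset_sdiff] at hs
      exact ⟨⟨hs.1, hclq⟩, Finset.disjoint_iff_inter_eq_empty.mp hs.2⟩
  rw [meetB, ← hsplit, hco]
  ring

end Graph

section Inj

variable {V : Type*} [Fintype V] [LinearOrder V] (G : SimpleGraph V) [DecidableRel G.Adj]

/-- minimum of `s` with default `x` -/
def mn (x : V) (s : Finset V) : V := if h : s.Nonempty then s.min' h else x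

lemma mn_mem {x : V} {s : Finset V} (h : s.Nonempty) : mn x s ∈ s := by
  rw [mn, dif_pos h]; exact s.min'_mem h

lemma eq_singleton_mn {x : V} {s : Finset V} (h : s.card = 1) : s = {mn x s} := by
  obtain ⟨a, rfl⟩ := Finset.card_eq_one.mp h
  have : mn x {a} ∈ ({a} : Finset V) := mn_mem (Finset.singleton_nonempty a)
  rw [Finset.mem_singleton] at this
  rw [this]

/-- second component sets -/
def Aset (x : V) (s : Finset V) : Finset V := s.filter (G.Adj x)
def Bset (x : V) (s : Finset V) : Finset V := s.filter (fun z => ¬ G.Adj x z)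

/-- the injection -/
def phiAux (x : V) (s : Finset V) : Σ _ : V, Finset V :=
  if (Bset G x s).card = 1 ∧ mn x (Bset G x s) < x then
    (if (Aset G x s).card = 1 then ⟨mn x (Aset G x s), insert x (Bset G x s)⟩
     else ⟨mn x ((Aset G x s).erase (mn x (Aset G x s))), insert x s⟩)
  else ⟨mn x (Aset G x s), insert x s⟩

def phi (p : Σ _ : V, Finset V) : Σ _ : V, Finset V := phiAux G p.1 p.2

lemma outB_facts {W : Finset V} {x : V} {s : Finset V} (hs : s ∈ outB G W x) :
    s ⊆ W ∧ G.IsClique (s : Set V) ∧ x ∉ s ∧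
      (Aset G x s).Nonempty ∧ (Bset G x s).Nonempty := by
  rw [outB, Finset.mem_filter, meetB, Finset.mem_filter, mem_clq] at hs
  obtain ⟨⟨⟨hsW, hclq⟩, hmeet⟩, hnsub⟩ := hs
  have hxs : x ∉ s := by
    intro hxs
    apply hnsub
    intro z hz
    rw [mem_Bx_iff]
    by_cases hzx : z = x
    · exact Or.inl hzx
    · exact Or.inr ⟨hsW hz, hclq (by simpa using hxs) (by simpa using hz) (Ne.symm hzx)⟩
  refine ⟨hsW, hclq, hxs, ?_, ?_⟩
  · obtain ⟨y, hy⟩ := hmeet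
    rw [Finset.mem_inter] at hy
    obtain ⟨hys, hyB⟩ := hy
    rw [mem_Bx_iff] at hyB
    rcases hyB with rfl | ⟨-, hadj⟩
    · exact absurd hys hxs
    · exact ⟨y, Finset.mem_filter.mpr ⟨hys, hadj⟩⟩
  · obtain ⟨z, hz, hzB⟩ := Finset.not_subset.mp hnsub
    refine ⟨z, Finset.mem_filter.mpr ⟨hz, fun hadj => hzB ?_⟩⟩
    rw [mem_Bx_iff]
    exact Or.inr ⟨hsW hz, hadj⟩

end Inj

section Maps

variable {V : Type*} [Fintype V] [LinearOrder V] (G : SimpleGraph V) [DecidableRel G.Adj]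

lemma mem_Aset {x : V} {s : Finset V} {y : V} :
    y ∈ Aset G x s ↔ y ∈ s ∧ G.Adj x y := Finset.mem_filter

lemma mem_Bset {x : V} {s : Finset V} {y : V} :
    y ∈ Bset G x s ↔ y ∈ s ∧ ¬ G.Adj x y := Finset.mem_filter

lemma target_mem {W : Finset V} {x : V} {s : Finset V} (hx : x ∈ W) (hsW : s ⊆ W)
    (hclq : G.IsClique (s : Set V)) (hxs : x ∉ s) (hB : (Bset G x s).Nonempty)
    {y : V} (hy : y ∈ Aset G x s) {t : Finset V} (ht : t ⊆ insert x s) (hxt : x ∈ t)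
    (hzt : mn x (Bset G x s) ∈ t) :
    (⟨y, t⟩ : Σ _ : V, Finset V) ∈ W.sigma (fun u => ncB G W u) := by
  obtain ⟨hys, hadjxy⟩ := (mem_Aset G).mp hy
  obtain ⟨hzs, hnadj⟩ := (mem_Bset G).mp (mn_mem hB)
  set z := mn x (Bset G x s) with hzdef
  have hxz : x ≠ z := fun h => hxs (h ▸ hzs)
  rw [Finset.mem_sigma]
  refine ⟨hsW hys, ?_⟩
  rw [ncB, Finset.mem_filter, Finset.mem_powerset]
  refine ⟨?_, ⟨x, hxt⟩, ?_⟩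
  · -- t ⊆ Bx G W y
    intro u hu
    rcases Finset.mem_insert.mp (ht hu) with rfl | hus
    · rw [mem_Bx_iff]
      exact Or.inr ⟨hx, hadjxy.symm⟩
    · rw [mem_Bx_iff]
      by_cases huy : u = y
      · exact Or.inl huy
      · exact Or.inr ⟨hsW hus, hclq (by simpa using hys) (by simpa using hus) (Ne.symm huy)⟩
  · -- not a clique
    intro hcl
    exact hnadj (hcl (by simpa using hxt) (by simpa using hzt) hxz)

lemma phi_maps {W : Finset V} {x : V} {s : Finset V} (hx : x ∈ W) (hs : s ∈ outB G W x) :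
    phiAux G x s ∈ W.sigma (fun u => ncB G W u) := by
  obtain ⟨hsW, hclq, hxs, hA, hB⟩ := outB_facts G hs
  have hzs : mn x (Bset G x s) ∈ s := ((mem_Bset G).mp (mn_mem hB)).1
  rw [phiAux]
  split_ifs with h1 h2
  · -- R3 : target ⟨mn x A, insert x (Bset)⟩
    refine target_mem G hx hsW hclq hxs hB (mn_mem hA) ?_ (Finset.mem_insert_self _ _) ?_
    · intro u hu
      rcases Finset.mem_insert.mp hu with rfl | hu
      · exact Finset.mem_insert_self _ _
      · exact Finset.mem_insert_of_mem ((mem_Bset G).mp hu).1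
    · exact Finset.mem_insert_of_mem (mn_mem hB)
  · -- R2 : target ⟨mn of erase, insert x s⟩
    have hcard : 2 ≤ (Aset G x s).card := by
      have := Finset.card_pos.mpr hA
      omega
    have herase : ((Aset G x s).erase (mn x (Aset G x s))).Nonempty := by
      rw [← Finset.card_pos, Finset.card_erase_of_mem (mn_mem hA)]
      omega
    have hyA : mn x ((Aset G x s).erase (mn x (Aset G x s))) ∈ Aset G x s :=
      Finset.erase_subset _ _ (mn_mem herase)
    exact target_mem G hx hsW hclq hxs hB hyA (by rfl)
      (Finset.mem_insert_self _ _) (Finset.mem_insert_of_mem hzs)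
  · -- K : target ⟨mn x A, insert x s⟩
    exact target_mem G hx hsW hclq hxs hB (mn_mem hA) (by rfl)
      (Finset.mem_insert_self _ _) (Finset.mem_insert_of_mem hzs)

end Maps

section Collide

variable {V : Type*} [Fintype V] [LinearOrder V] (G : SimpleGraph V) [DecidableRel G.Adj]

lemma mn_singleton (x a : V) : mn x ({a} : Finset V) = a := by
  have := mn_mem (x := x) (Finset.singleton_nonempty a)
  rwa [Finset.mem_singleton] at this

lemma mn_indep (x x' : V) {s : Finset V} (h : s.Nonempty) : mn x s = mn x' s := by
  rw [mn, mn, dif_pos h, dif_pos h]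

lemma card_s_ge_two {x : V} {s : Finset V} (hA : (Aset G x s).Nonempty)
    (hB : (Bset G x s).Nonempty) : 2 ≤ s.card := by
  have hu : Aset G x s ∪ Bset G x s = s := Finset.filter_union_filter_not_eq _ s
  have hd : Disjoint (Aset G x s) (Bset G x s) := Finset.disjoint_filter_filter_not s s _
  have := Finset.card_union_of_disjoint hd
  rw [hu] at this
  have h1 := Finset.card_pos.mpr hA
  have h2 := Finset.card_pos.mpr hB
  omega

lemma collision_struct {x1 x2 : V} {s1 s2 : Finset V}
    (hclq1 : G.IsClique (s1 : Set V)) (hclq2 : G.IsClique (s2 : Set V))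
    (hx1 : x1 ∉ s1) (hx2 : x2 ∉ s2) (hB1 : (Bset G x1 s1).Nonempty)
    (hne : x1 ≠ x2) (ht : insert x1 s1 = insert x2 s2) :
    x2 ∈ s1 ∧ x1 ∈ s2 ∧ Bset G x1 s1 = {x2} ∧ ¬ G.Adj x1 x2 := by
  have hx2s1 : x2 ∈ s1 := by
    have h := ht ▸ (Finset.mem_insert_self x2 s2)
    rcases Finset.mem_insert.mp h with h' | h'
    · exact absurd h'.symm hne
    · exact h'
  have hx1s2 : x1 ∈ s2 := by
    have h := ht.symm ▸ (Finset.mem_insert_self x1 s1)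
    rcases Finset.mem_insert.mp h with h' | h'
    · exact absurd h' hne
    · exact h'
  have huniq : ∀ z ∈ Bset G x1 s1, z = x2 := by
    intro z hz
    obtain ⟨hzs1, hnadj⟩ := (mem_Bset G).mp hz
    by_contra hzx2
    have hz2 : z ∈ insert x2 s2 := ht ▸ (Finset.mem_insert_of_mem hzs1)
    rcases Finset.mem_insert.mp hz2 with rfl | hzs2
    · exact hzx2 rfl
    · have hzx1 : z ≠ x1 := fun h => hx1 (h ▸ hzs1)
      exact hnadj (hclq2 (by simpa using hx1s2) (by simpa using hzs2) (Ne.symm hzx1))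
  have hx2B : x2 ∈ Bset G x1 s1 := by
    obtain ⟨z, hz⟩ := hB1
    have := huniq z hz
    rwa [this] at hz
  refine ⟨hx2s1, hx1s2, ?_, ((mem_Bset G).mp hx2B).2⟩
  apply Finset.eq_singleton_iff_unique_mem.mpr
  exact ⟨hx2B, huniq⟩

lemma Aset_eq {x1 x2 : V} {s1 s2 : Finset V}
    (hclq1 : G.IsClique (s1 : Set V)) (hclq2 : G.IsClique (s2 : Set V))
    (hx1 : x1 ∉ s1) (hx2 : x2 ∉ s2)
    (hx2s1 : x2 ∈ s1) (hx1s2 : x1 ∈ s2)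
    (hnadj : ¬ G.Adj x1 x2)
    (ht : insert x1 s1 = insert x2 s2) :
    Aset G x1 s1 ⊆ Aset G x2 s2 := by
  intro u hu
  obtain ⟨hus1, hadj⟩ := (mem_Aset G).mp hu
  have hux2 : u ≠ x2 := fun h => hnadj (h ▸ hadj)
  have hus2 : u ∈ s2 := by
    have : u ∈ insert x2 s2 := ht ▸ (Finset.mem_insert_of_mem hus1)
    rcases Finset.mem_insert.mp this with h' | h'
    · exact absurd h' hux2
    · exact h'
  refine (mem_Aset G).mpr ⟨hus2, ?_⟩
  exact (hclq1 (by simpa using hus1) (by simpa using hx2s1) hux2).symm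

end Collide

section InjMain

variable {V : Type*} [Fintype V] [LinearOrder V] (G : SimpleGraph V) [DecidableRel G.Adj]

lemma phiAux_R3 {x : V} {s : Finset V} (h1 : (Bset G x s).card = 1 ∧ mn x (Bset G x s) < x)
    (h2 : (Aset G x s).card = 1) :
    phiAux G x s = ⟨mn x (Aset G x s), insert x (Bset G x s)⟩ := by
  rw [phiAux, if_pos h1, if_pos h2]

lemma phiAux_R2 {x : V} {s : Finset V} (h1 : (Bset G x s).card = 1 ∧ mn x (Bset G x s) < x)
    (h2 : ¬ (Aset G x s).card = 1) :
    phiAux G x s = ⟨mn x ((Aset G x s).erase (mn x (Aset G x s))), insert x s⟩ := by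
  rw [phiAux, if_pos h1, if_neg h2]

lemma phiAux_K {x : V} {s : Finset V} (h1 : ¬((Bset G x s).card = 1 ∧ mn x (Bset G x s) < x)) :
    phiAux G x s = ⟨mn x (Aset G x s), insert x s⟩ := by
  rw [phiAux, if_neg h1]

/-- cardinality of the R3-target -/
lemma R3_card {x : V} {s : Finset V} (hxs : x ∉ s) (h1 : (Bset G x s).card = 1) :
    (insert x (Bset G x s)).card = 2 := by
  rw [Finset.card_insert_of_notMem, h1]
  intro h
  exact hxs (Finset.filter_subset _ _ h)

lemma KR2_card {x : V} {s : Finset V} (hA : (Aset G x s).Nonempty)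
    (hB : (Bset G x s).Nonempty) (hxs : x ∉ s) : 3 ≤ (insert x s).card := by
  rw [Finset.card_insert_of_notMem hxs]
  have := card_s_ge_two G hA hB
  omega

lemma s_eq_A_union_B (x : V) (s : Finset V) : Aset G x s ∪ Bset G x s = s :=
  Finset.filter_union_filter_not_eq _ s

lemma phi_inj {W : Finset V} :
    ∀ p1 ∈ W.sigma (fun u => outB G W u), ∀ p2 ∈ W.sigma (fun u => outB G W u),
      phi G p1 = phi G p2 → p1 = p2 := by
  rintro ⟨x1, s1⟩ hp1 ⟨x2, s2⟩ hp2 heq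
  rw [Finset.mem_sigma] at hp1 hp2
  obtain ⟨hx1W, hs1⟩ := hp1
  obtain ⟨hx2W, hs2⟩ := hp2
  obtain ⟨hsW1, hclq1, hxs1, hA1, hB1⟩ := outB_facts G hs1
  obtain ⟨hsW2, hclq2, hxs2, hA2, hB2⟩ := outB_facts G hs2
  dsimp only at hsW1 hclq1 hxs1 hA1 hB1 hsW2 hclq2 hxs2 hA2 hB2 hx1W hx2W hs1 hs2
  have hphi : phiAux G x1 s1 = phiAux G x2 s2 := heq
  clear heq
  -- branch analysis
  by_cases c1 : (Bset G x1 s1).card = 1 ∧ mn x1 (Bset G x1 s1) < x1 <;>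
    by_cases c2 : (Bset G x2 s2).card = 1 ∧ mn x2 (Bset G x2 s2) < x2
  -- we will handle each of the 9 = (3x3 via inner splits) cases
  case pos =>
    by_cases a1 : (Aset G x1 s1).card = 1 <;> by_cases a2 : (Aset G x2 s2).card = 1
    case pos =>  -- (R3, R3)
      rw [phiAux_R3 G c1 a1, phiAux_R3 G c2 a2] at hphi
      obtain ⟨hy, ht0⟩ := Sigma.mk.inj_iff.mp hphi
      have ht := eq_of_heq ht0
      have hz1s : mn x1 (Bset G x1 s1) ∈ s1 := ((mem_Bset G).mp (mn_mem hB1)).1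
      have hz2s : mn x2 (Bset G x2 s2) ∈ s2 := ((mem_Bset G).mp (mn_mem hB2)).1
      by_cases e : x1 = x2
      · subst e
        -- show s1 = s2
        have hz12 : mn x1 (Bset G x1 s1) = mn x1 (Bset G x1 s2) := by
          have h := ht ▸ (Finset.mem_insert_of_mem (mn_mem (x := x1) hB1))
          rcases Finset.mem_insert.mp h with h' | h'
          · exact absurd (h' ▸ hz1s) hxs1
          · have := (eq_singleton_mn (x := x1) c2.1) ▸ h'
            rwa [Finset.mem_singleton] at this
        have hs1e : s1 = {mn x1 (Aset G x1 s1)} ∪ {mn x1 (Bset G x1 s1)} := by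
          conv_lhs => rw [← s_eq_A_union_B G x1 s1]
          rw [← eq_singleton_mn a1, ← eq_singleton_mn c1.1]
        have hs2e : s2 = {mn x1 (Aset G x1 s2)} ∪ {mn x1 (Bset G x1 s2)} := by
          conv_lhs => rw [← s_eq_A_union_B G x1 s2]
          rw [← eq_singleton_mn a2, ← eq_singleton_mn c2.1]
        have : s1 = s2 := by rw [hs1e, hs2e, hy, hz12]
        subst this
        rfl
      · -- x1 ≠ x2 : contradiction via the two < conditions
        exfalso
        have hx2t : x2 ∈ insert x1 (Bset G x1 s1) := by
          rw [ht]; exact Finset.mem_insert_self _ _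
        rcases Finset.mem_insert.mp hx2t with h' | h'
        · exact e h'.symm
        · -- x2 ∈ B1, so mn x1 B1 = x2
          have hx2eq : mn x1 (Bset G x1 s1) = x2 := by
            have := (eq_singleton_mn (x := x1) c1.1) ▸ h'
            exact (Finset.mem_singleton.mp this).symm
          have hx1t : x1 ∈ insert x2 (Bset G x2 s2) := by
            rw [← ht]; exact Finset.mem_insert_self _ _
          rcases Finset.mem_insert.mp hx1t with h'' | h''
          · exact e h''
          · have hx1eq : mn x2 (Bset G x2 s2) = x1 := by
              have := (eq_singleton_mn (x := x2) c2.1) ▸ h''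
              exact (Finset.mem_singleton.mp this).symm
            have l1 := c1.2
            have l2 := c2.2
            rw [hx2eq] at l1
            rw [hx1eq] at l2
            exact absurd l2 (asymm l1)
    case neg =>  -- (R3, R2) : card contradiction
      rw [phiAux_R3 G c1 a1, phiAux_R2 G c2 a2] at hphi
      obtain ⟨hy, ht0⟩ := Sigma.mk.inj_iff.mp hphi
      have ht := eq_of_heq ht0
      have hc2 := R3_card G hxs1 c1.1
      have hc3 := KR2_card G hA2 hB2 hxs2
      rw [ht] at hc2
      omega
    case pos =>  -- (R2, R3)
      rw [phiAux_R2 G c1 a1, phiAux_R3 G c2 a2] at hphi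
      obtain ⟨hy, ht0⟩ := Sigma.mk.inj_iff.mp hphi
      have ht := eq_of_heq ht0
      have hc2 := R3_card G hxs2 c2.1
      have hc3 := KR2_card G hA1 hB1 hxs1
      rw [← ht] at hc2
      omega
    case neg =>  -- (R2, R2)
      rw [phiAux_R2 G c1 a1, phiAux_R2 G c2 a2] at hphi
      obtain ⟨hy, ht0⟩ := Sigma.mk.inj_iff.mp hphi
      have ht := eq_of_heq ht0
      by_cases e : x1 = x2
      · subst e
        have : s1 = s2 := by
          rw [← Finset.erase_insert hxs1, ← Finset.erase_insert hxs2, ht]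
        subst this
        rfl
      · exfalso
        obtain ⟨hx2s1, hx1s2, hB1e, hnadj⟩ :=
          collision_struct G hclq1 hclq2 hxs1 hxs2 hB1 e ht
        obtain ⟨hx1s2', hx2s1', hB2e, hnadj'⟩ :=
          collision_struct G hclq2 hclq1 hxs2 hxs1 hB2 (Ne.symm e) ht.symm
        have l1 := c1.2
        have l2 := c2.2
        rw [hB1e, mn_singleton] at l1
        rw [hB2e, mn_singleton] at l2
        exact absurd l2 (asymm l1)
  case neg =>  -- c1 true, c2 false : (R3 or R2, K)
    by_cases a1 : (Aset G x1 s1).card = 1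
    · -- (R3, K) : card contradiction
      rw [phiAux_R3 G c1 a1, phiAux_K G c2] at hphi
      obtain ⟨hy, ht0⟩ := Sigma.mk.inj_iff.mp hphi
      have ht := eq_of_heq ht0
      have hc2 := R3_card G hxs1 c1.1
      have hc3 := KR2_card G hA2 hB2 hxs2
      rw [ht] at hc2
      omega
    · -- (R2, K)
      rw [phiAux_R2 G c1 a1, phiAux_K G c2] at hphi
      obtain ⟨hy, ht0⟩ := Sigma.mk.inj_iff.mp hphi
      have ht := eq_of_heq ht0
      by_cases e : x1 = x2
      · subst e
        exfalso
        have : s1 = s2 := by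
          rw [← Finset.erase_insert hxs1, ← Finset.erase_insert hxs2, ht]
        subst this
        exact c2 c1
      · exfalso
        obtain ⟨hx2s1, hx1s2, hB1e, hnadj⟩ :=
          collision_struct G hclq1 hclq2 hxs1 hxs2 hB1 e ht
        obtain ⟨hx1s2', hx2s1', hB2e, hnadj'⟩ :=
          collision_struct G hclq2 hclq1 hxs2 hxs1 hB2 (Ne.symm e) ht.symm
        have hAeq : Aset G x1 s1 = Aset G x2 s2 :=
          le_antisymm (Aset_eq G hclq1 hclq2 hxs1 hxs2 hx2s1 hx1s2 hnadj ht)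
            (Aset_eq G hclq2 hclq1 hxs2 hxs1 hx1s2' hx2s1' (fun h => hnadj h.symm) ht.symm)
        -- y-coordinate contradiction
        have hy' : mn x1 ((Aset G x1 s1).erase (mn x1 (Aset G x1 s1))) = mn x2 (Aset G x2 s2) := hy
        have hcard1 : 2 ≤ (Aset G x1 s1).card := by
          have := Finset.card_pos.mpr hA1
          omega
        have herase : ((Aset G x1 s1).erase (mn x1 (Aset G x1 s1))).Nonempty := by
          rw [← Finset.card_pos, Finset.card_erase_of_mem (mn_mem hA1)]
          omega
        have hmem := mn_mem (x := x1) herase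
        rw [Finset.mem_erase] at hmem
        apply hmem.1
        rw [hy', ← hAeq, mn_indep x2 x1 hA1]
  case pos =>  -- c1 false, c2 true : (K, R3 or R2)
    by_cases a2 : (Aset G x2 s2).card = 1
    · -- (K, R3)
      rw [phiAux_K G c1, phiAux_R3 G c2 a2] at hphi
      obtain ⟨hy, ht0⟩ := Sigma.mk.inj_iff.mp hphi
      have ht := eq_of_heq ht0
      have hc2 := R3_card G hxs2 c2.1
      have hc3 := KR2_card G hA1 hB1 hxs1
      rw [← ht] at hc2
      omega
    · -- (K, R2)
      rw [phiAux_K G c1, phiAux_R2 G c2 a2] at hphi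
      obtain ⟨hy, ht0⟩ := Sigma.mk.inj_iff.mp hphi
      have ht := eq_of_heq ht0
      by_cases e : x1 = x2
      · subst e
        exfalso
        have : s1 = s2 := by
          rw [← Finset.erase_insert hxs1, ← Finset.erase_insert hxs2, ht]
        subst this
        exact c1 c2
      · exfalso
        obtain ⟨hx2s1, hx1s2, hB1e, hnadj⟩ :=
          collision_struct G hclq1 hclq2 hxs1 hxs2 hB1 e ht
        obtain ⟨hx1s2', hx2s1', hB2e, hnadj'⟩ :=
          collision_struct G hclq2 hclq1 hxs2 hxs1 hB2 (Ne.symm e) ht.symm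
        have hAeq : Aset G x1 s1 = Aset G x2 s2 :=
          le_antisymm (Aset_eq G hclq1 hclq2 hxs1 hxs2 hx2s1 hx1s2 hnadj ht)
            (Aset_eq G hclq2 hclq1 hxs2 hxs1 hx1s2' hx2s1' (fun h => hnadj h.symm) ht.symm)
        have hy' : mn x1 (Aset G x1 s1) = mn x2 ((Aset G x2 s2).erase (mn x2 (Aset G x2 s2))) := hy
        have hcard2 : 2 ≤ (Aset G x2 s2).card := by
          have := Finset.card_pos.mpr hA2
          omega
        have herase : ((Aset G x2 s2).erase (mn x2 (Aset G x2 s2))).Nonempty := by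
          rw [← Finset.card_pos, Finset.card_erase_of_mem (mn_mem hA2)]
          omega
        have hmem := mn_mem (x := x2) herase
        rw [Finset.mem_erase] at hmem
        apply hmem.1
        rw [← hy', hAeq, mn_indep x1 x2 hA2]
  case neg =>  -- (K, K)
    rw [phiAux_K G c1, phiAux_K G c2] at hphi
    obtain ⟨hy, ht0⟩ := Sigma.mk.inj_iff.mp hphi
    have ht := eq_of_heq ht0
    by_cases e : x1 = x2
    · subst e
      have : s1 = s2 := by
        rw [← Finset.erase_insert hxs1, ← Finset.erase_insert hxs2, ht]
      subst this
      rfl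
    · exfalso
      obtain ⟨hx2s1, hx1s2, hB1e, hnadj⟩ :=
        collision_struct G hclq1 hclq2 hxs1 hxs2 hB1 e ht
      obtain ⟨hx1s2', hx2s1', hB2e, hnadj'⟩ :=
        collision_struct G hclq2 hclq1 hxs2 hxs1 hB2 (Ne.symm e) ht.symm
      -- c1 and c2 both false give ¬(x2 < x1) and ¬(x1 < x2)
      apply c1
      refine ⟨by rw [hB1e]; exact Finset.card_singleton _, ?_⟩
      rw [hB1e, mn_singleton]
      rcases lt_or_gt_of_ne e with h | h
      · exfalso
        apply c2
        refine ⟨by rw [hB2e]; exact Finset.card_singleton _, ?_⟩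
        rw [hB2e, mn_singleton]
        exact h
      · exact h

end InjMain

section KeyMain

variable {V : Type*} [Fintype V] [LinearOrder V] (G : SimpleGraph V) [DecidableRel G.Adj]

lemma meet_split {W : Finset V} (x : V) :
    (meetB G W x).card = (inB G W x).card + (outB G W x).card := by
  rw [inB, outB]
  exact (Finset.card_filter_add_card_filter_not
    (s := meetB G W x) (p := fun s => s ⊆ Bx G W x)).symm

lemma in_nc_bound {W : Finset V} (x : V) :
    (inB G W x).card + (ncB G W x).card ≤ 2 ^ ((W.filter (G.Adj x)).card + 1) - 1 := by
  have hdisj : Disjoint (inB G W x) (ncB G W x) := by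
    rw [Finset.disjoint_left]
    intro s hsin hsnc
    have h1 : G.IsClique (s : Set V) := by
      have := (Finset.mem_filter.mp hsin).1
      rw [meetB, Finset.mem_filter, mem_clq] at this
      exact this.1.2
    exact ((Finset.mem_filter.mp hsnc).2).2 h1
  have hsub : inB G W x ∪ ncB G W x ⊆ (Bx G W x).powerset.erase ∅ := by
    intro s hs
    rcases Finset.mem_union.mp hs with hs | hs
    · rw [Finset.mem_erase, Finset.mem_powerset]
      obtain ⟨hmeet, hsBx⟩ := Finset.mem_filter.mp hs
      have hne : s.Nonempty := by
        obtain ⟨y, hy⟩ := (Finset.mem_filter.mp hmeet).2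
        exact ⟨y, (Finset.mem_inter.mp hy).1⟩
      exact ⟨Finset.nonempty_iff_ne_empty.mp hne, hsBx⟩
    · rw [Finset.mem_erase, Finset.mem_powerset]
      obtain ⟨hpow, hne, -⟩ := Finset.mem_filter.mp hs
      exact ⟨Finset.nonempty_iff_ne_empty.mp hne, Finset.mem_powerset.mp hpow⟩
  have hcard := Finset.card_le_card hsub
  rw [Finset.card_union_of_disjoint hdisj] at hcard
  have hpe : ((Bx G W x).powerset.erase ∅).card = 2 ^ ((W.filter (G.Adj x)).card + 1) - 1 := by
    rw [Finset.card_erase_of_mem (Finset.empty_mem_powerset _), Finset.card_powerset, card_Bx]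
  rwa [hpe] at hcard

lemma sum_out_le_sum_nc (W : Finset V) :
    ∑ x ∈ W, (outB G W x).card ≤ ∑ x ∈ W, (ncB G W x).card := by
  rw [← Finset.card_sigma, ← Finset.card_sigma]
  apply Finset.card_le_card_of_injOn (phi G)
  · rintro ⟨x, s⟩ hp
    rw [Finset.mem_coe, Finset.mem_sigma] at hp
    exact phi_maps G hp.1 hp.2
  · intro p1 hp1 p2 hp2 heq
    exact phi_inj G p1 (by simpa using hp1) p2 (by simpa using hp2) heq

lemma key_lemma {W : Finset V} (hW : W.Nonempty) :
    ∃ x ∈ W, (meetB G W x).card ≤ 2 ^ ((W.filter (G.Adj x)).card + 1) - 1 := by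
  by_contra hcon
  push_neg at hcon
  have hsum : ∑ x ∈ W, (2 ^ ((W.filter (G.Adj x)).card + 1) - 1) < ∑ x ∈ W, (meetB G W x).card :=
    Finset.sum_lt_sum_of_nonempty hW fun x hx => hcon x hx
  have hle : ∑ x ∈ W, (meetB G W x).card ≤ ∑ x ∈ W, (2 ^ ((W.filter (G.Adj x)).card + 1) - 1) := by
    have h1 : ∀ x ∈ W, (meetB G W x).card + (ncB G W x).card
        ≤ (2 ^ ((W.filter (G.Adj x)).card + 1) - 1) + (outB G W x).card := by
      intro x hx
      rw [meet_split]
      have := in_nc_bound G (W := W) x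
      omega
    have h2 : ∑ x ∈ W, ((meetB G W x).card + (ncB G W x).card)
        ≤ ∑ x ∈ W, ((2 ^ ((W.filter (G.Adj x)).card + 1) - 1) + (outB G W x).card) :=
      Finset.sum_le_sum h1
    rw [Finset.sum_add_distrib, Finset.sum_add_distrib] at h2
    have h3 := sum_out_le_sum_nc G W
    omega
  omega

lemma main_bound {r : ℕ} (hdeg : ∀ v, G.degree v ≤ r) :
    ∀ W : Finset V, (clq G W).card ≤ gB r W.card := by
  intro W
  induction W using Finset.strongInduction with
  | _ W ih =>
    rcases W.eq_empty_or_nonempty with rfl | hW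
    · have hclq : clq G (∅ : Finset V) = {∅} := by
        rw [clq, Finset.powerset_empty]
        rw [Finset.filter_singleton, if_pos (by simp)]
      rw [hclq, Finset.card_singleton, Finset.card_empty, gB]
      simp
    · obtain ⟨x, hxW, hkey⟩ := key_lemma G hW
      have hBsub : Bx G W x ⊆ W := Bx_subset G hxW
      have hdx : (W.filter (G.Adj x)).card ≤ r := by
        refine le_trans (Finset.card_le_card ?_) (hdeg x)
        intro y hy
        rw [SimpleGraph.mem_neighborFinset]
        exact (Finset.mem_filter.mp hy).2
      have hBcard : (Bx G W x).card = (W.filter (G.Adj x)).card + 1 := card_Bx G W x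
      have hBle : (W.filter (G.Adj x)).card + 1 ≤ W.card := by
        have := Finset.card_le_card hBsub
        omega
      have hsdiff : (W \ Bx G W x).card = W.card - ((W.filter (G.Adj x)).card + 1) := by
        rw [Finset.card_sdiff_of_subset hBsub, hBcard]
      have hss : W \ Bx G W x ⊂ W := by
        apply Finset.sdiff_ssubset hBsub
        exact ⟨x, x_mem_Bx G W x⟩
      calc (clq G W).card
          = (clq G (W \ Bx G W x)).card + (meetB G W x).card := peel G
        _ ≤ gB r ((W \ Bx G W x).card) + (2 ^ ((W.filter (G.Adj x)).card + 1) - 1) :=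
            Nat.add_le_add (ih _ hss) hkey
        _ = gB r (W.card - ((W.filter (G.Adj x)).card + 1))
              + (2 ^ ((W.filter (G.Adj x)).card + 1) - 1) := by rw [hsdiff]
        _ ≤ gB r W.card := gB_step hdx hBle

end KeyMain

end CRaux

theorem cutler_radcliffe_clique_count {V : Type*} [Fintype V] (G : SimpleGraph V)
    [DecidableRel G.Adj] (n r a b : ℕ) (hcard : Fintype.card V = n)
    (hn : n = a * (r + 1) + b) (hb : b ≤ r) (hdeg : ∀ v, G.degree v ≤ r) :
    cliqueCount G ≤ a * (2 ^ (r + 1) - 1) + 2 ^ b := by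
  letI : LinearOrder V := LinearOrder.lift' (Fintype.equivFin V) (Fintype.equivFin V).injective
  have h1 : cliqueCount G = (CRaux.clq G Finset.univ).card := by
    rw [cliqueCount, Nat.card_eq_fintype_card, Fintype.card_subtype]
    simp only [CRaux.clq, Finset.powerset_univ]
  have h2 := CRaux.main_bound G (r := r) hdeg Finset.univ
  rw [Finset.card_univ, hcard] at h2
  have hdiv : n / (r+1) = a := by
    rw [hn, Nat.add_comm, Nat.add_mul_div_right _ _ (Nat.succ_pos r),
      Nat.div_eq_of_lt (by omega), Nat.zero_add]
  have hmod : n % (r+1) = b := by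
    rw [hn, Nat.add_comm, Nat.add_mul_mod_self_right, Nat.mod_eq_of_lt (by omega)]
  rw [CRaux.gB, hdiv, hmod] at h2
  rw [h1]
  exact h2
end

section
/- If G is a d-regular finite simple graph on n vertices (d ≥ 1), then i(G)^{1/n} ≤ (2^{d+1} − 1)^{1/(2d)}, where i(G) denotes the number of independent sets of G (including the empty set). Equivalently, i(G)^{2d} ≤ (2^{d+1} − 1)^n. Note i(K_{d,d}) = 2^{d+1} − 1. -/
open Finset NNReal

lemma holder_two {ι : Type*} (t : Finset ι) (ht : t.Nonempty) (a b : ι → ℝ≥0) :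
    (∏ j ∈ t, a j) + (∏ j ∈ t, b j) ≤
      ∏ j ∈ t, (a j ^ t.card + b j ^ t.card) ^ ((t.card : ℝ)⁻¹) := by
  set d := t.card with hdd
  have hd0 : 0 < d := ht.card_pos
  have hdR : ((d : ℝ)) ≠ 0 := by positivity
  by_cases hz : ∃ j ∈ t, a j ^ d + b j ^ d = 0
  · obtain ⟨j, hj, h0⟩ := hz
    rw [add_eq_zero, pow_eq_zero_iff hd0.ne', pow_eq_zero_iff hd0.ne'] at h0
    rw [Finset.prod_eq_zero hj h0.1, Finset.prod_eq_zero hj h0.2, add_zero]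
    exact zero_le
  push_neg at hz
  set c : ι → ℝ≥0 := fun j => (a j ^ d + b j ^ d) ^ ((d : ℝ)⁻¹) with hc
  have hcpow : ∀ j ∈ t, c j ^ d = a j ^ d + b j ^ d := by
    intro j hj
    rw [hc]
    rw [← NNReal.rpow_natCast (((a j ^ d + b j ^ d) ^ ((d : ℝ)⁻¹))) d, ← NNReal.rpow_mul,
      inv_mul_cancel₀ hdR, NNReal.rpow_one]
  have hcne : ∀ j ∈ t, c j ≠ 0 := by
    intro j hj
    intro h
    apply hz j hj
    have h2 := hcpow j hj
    rw [h] at h2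
    rw [← h2, zero_pow hd0.ne']
  have key : ∀ (f : ι → ℝ≥0), (∀ j ∈ t, f j ^ d ≤ a j ^ d + b j ^ d) →
      ∏ j ∈ t, (f j / c j) ≤ (d : ℝ≥0)⁻¹ * ∑ j ∈ t, (f j / c j) ^ d := by
    intro f hf
    have := NNReal.geom_mean_le_arith_mean_weighted t (fun _ => (d : ℝ≥0)⁻¹)
      (fun j => (f j / c j) ^ d) (by
        rw [Finset.sum_const, nsmul_eq_mul]
        rw [mul_inv_cancel₀]
        exact_mod_cast hd0.ne')
    calc ∏ j ∈ t, (f j / c j)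
        = ∏ j ∈ t, ((f j / c j) ^ d) ^ (((d : ℝ≥0)⁻¹ : ℝ≥0) : ℝ) := by
          apply Finset.prod_congr rfl
          intro j hj
          rw [← NNReal.rpow_natCast (f j / c j) d, ← NNReal.rpow_mul]
          push_cast
          rw [mul_inv_cancel₀ hdR, NNReal.rpow_one]
      _ ≤ ∑ j ∈ t, (d : ℝ≥0)⁻¹ * (f j / c j) ^ d := this
      _ = (d : ℝ≥0)⁻¹ * ∑ j ∈ t, (f j / c j) ^ d := by rw [Finset.mul_sum]
  have ha := key a (fun j hj => le_self_add)
  have hb := key b (fun j hj => le_add_self)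
  have hsum : (∏ j ∈ t, (a j / c j)) + (∏ j ∈ t, (b j / c j)) ≤ 1 := by
    calc (∏ j ∈ t, (a j / c j)) + (∏ j ∈ t, (b j / c j))
        ≤ (d : ℝ≥0)⁻¹ * (∑ j ∈ t, (a j / c j) ^ d + ∑ j ∈ t, (b j / c j) ^ d) := by
          rw [mul_add]; exact add_le_add ha hb
      _ = (d : ℝ≥0)⁻¹ * ∑ j ∈ t, ((a j ^ d + b j ^ d) / c j ^ d) := by
          rw [← Finset.sum_add_distrib]
          congr 1
          apply Finset.sum_congr rfl
          intro j hj
          rw [div_pow, div_pow, ← add_div]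
      _ = 1 := by
          rw [Finset.sum_congr rfl (fun j hj => by
            rw [hcpow j hj, div_self (hz j hj)])]
          rw [Finset.sum_const, nsmul_eq_mul, mul_one, inv_mul_cancel₀]
          exact_mod_cast hd0.ne'
  have hcprod : (∏ j ∈ t, c j) ≠ 0 := Finset.prod_ne_zero_iff.mpr hcne
  rw [Finset.prod_div_distrib, Finset.prod_div_distrib, ← add_div, div_le_one] at hsum
  · exact hsum
  · exact hcprod.bot_lt

lemma finner {V ι : Type*} [DecidableEq V] [DecidableEq ι] (d : ℕ) (hd : 1 ≤ d)
    (J : Finset ι) (s : Finset V) :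
    ∀ (N : ι → Finset V) (f : ι → Finset V → ℝ≥0),
    (∀ j ∈ J, N j ⊆ s) →
    (∀ v ∈ s, (J.filter (fun j => v ∈ N j)).card = d) →
    (∀ j ∈ J, ∀ B : Finset V, f j B = f j (B ∩ N j)) →
    ∑ B ∈ s.powerset, ∏ j ∈ J, f j B ≤
      ∏ j ∈ J, (∑ B ∈ (N j).powerset, (f j B) ^ d) ^ ((d : ℝ)⁻¹) := by
  have hdR : ((d : ℝ)) ≠ 0 := by positivity
  have rpow_pow : ∀ (x : ℝ≥0), (x ^ ((d:ℝ)⁻¹)) ^ d = x := by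
    intro x
    rw [← NNReal.rpow_natCast (x ^ ((d:ℝ)⁻¹)) d, ← NNReal.rpow_mul, inv_mul_cancel₀ hdR,
      NNReal.rpow_one]
  have pow_rpow : ∀ (x : ℝ≥0), (x ^ d) ^ ((d:ℝ)⁻¹) = x := by
    intro x
    rw [← NNReal.rpow_natCast x d, ← NNReal.rpow_mul, mul_inv_cancel₀ hdR, NNReal.rpow_one]
  induction s using Finset.induction with
  | empty =>
    intro N f hN hcov hf
    simp only [powerset_empty, sum_singleton]
    apply le_of_eq
    apply prod_congr rfl
    intro j hj
    rw [subset_empty.mp (hN j hj), powerset_empty, sum_singleton, pow_rpow]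
  | @insert v s' hv ih =>
    intro N f hN hcov hf
    have hJv : (J.filter (fun j => v ∈ N j)).card = d := hcov v (mem_insert_self v s')
    have htne : (J.filter (fun j => v ∈ N j)).Nonempty := by
      rw [← card_pos, hJv]; omega
    set f' : ι → Finset V → ℝ≥0 := fun j B =>
      if v ∈ N j then
        ((f j (B ∩ (N j).erase v)) ^ d + (f j (insert v (B ∩ (N j).erase v))) ^ d) ^ ((d:ℝ)⁻¹)
      else f j B with hf'def
    have hN' : ∀ j ∈ J, (N j).erase v ⊆ s' := by
      intro j hj x hx
      have := hN j hj (mem_of_mem_erase hx)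
      rcases mem_insert.mp this with h | h
      · exact absurd h (ne_of_mem_erase hx)
      · exact h
    have hcov' : ∀ u ∈ s', (J.filter (fun j => u ∈ (N j).erase v)).card = d := by
      intro u hu
      have hne : u ≠ v := fun h => hv (h ▸ hu)
      have hmem : ∀ j, (u ∈ (N j).erase v) = (u ∈ N j) := fun j => by
        simp [Finset.mem_erase, hne]
      simp only [hmem]
      exact hcov u (mem_insert_of_mem hu)
    have hf'2 : ∀ j ∈ J, ∀ B : Finset V, f' j B = f' j (B ∩ (N j).erase v) := by
      intro j hj B
      rw [hf'def]
      by_cases h : v ∈ N j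
      · simp only [if_pos h, inter_assoc, inter_self]
      · simp only [if_neg h, Finset.erase_eq_of_notMem h]
        exact hf j hj B
    calc ∑ B ∈ (insert v s').powerset, ∏ j ∈ J, f j B
        = ∑ B ∈ s'.powerset, (∏ j ∈ J, f j B + ∏ j ∈ J, f j (insert v B)) := by
          rw [sum_powerset_insert hv, sum_add_distrib]
      _ ≤ ∑ B ∈ s'.powerset, ∏ j ∈ J, f' j B := by
          apply sum_le_sum
          intro B hB
          have hvB : v ∉ B := fun h => hv (mem_powerset.mp hB h)
          rw [← prod_filter_mul_prod_filter_not J (fun j => v ∈ N j) (f · B),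
            ← prod_filter_mul_prod_filter_not J (fun j => v ∈ N j) (f · (insert v B)),
            ← prod_filter_mul_prod_filter_not J (fun j => v ∈ N j) (f' · B)]
          have heq1 : ∏ j ∈ J.filter (fun j => ¬ v ∈ N j), f j (insert v B)
              = ∏ j ∈ J.filter (fun j => ¬ v ∈ N j), f j B := by
            apply prod_congr rfl
            intro j hj
            rw [mem_filter] at hj
            rw [hf j hj.1 (insert v B), hf j hj.1 B]
            congr 1
            ext x
            simp only [mem_inter, mem_insert]
            constructor
            · rintro ⟨h1 | h1, h2⟩
              · exact absurd (h1 ▸ h2) hj.2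
              · exact ⟨h1, h2⟩
            · exact fun ⟨h1, h2⟩ => ⟨Or.inr h1, h2⟩
          have heq2 : ∏ j ∈ J.filter (fun j => ¬ v ∈ N j), f' j B
              = ∏ j ∈ J.filter (fun j => ¬ v ∈ N j), f j B := by
            apply prod_congr rfl
            intro j hj
            rw [mem_filter] at hj
            rw [hf'def]
            simp only [if_neg hj.2]
          rw [heq1, heq2, mul_comm (∏ j ∈ J.filter (fun j => v ∈ N j), f j B),
            mul_comm (∏ j ∈ J.filter (fun j => v ∈ N j), f j (insert v B)),
            mul_comm (∏ j ∈ J.filter (fun j => v ∈ N j), f' j B), ← mul_add]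
          apply mul_le_mul_right
          have hh := holder_two (J.filter (fun j => v ∈ N j)) htne
            (fun j => f j B) (fun j => f j (insert v B))
          rw [hJv] at hh
          refine le_trans hh (le_of_eq ?_)
          apply prod_congr rfl
          intro j hj
          rw [mem_filter] at hj
          rw [hf'def]
          simp only [if_pos hj.2]
          have e1 : B ∩ (N j).erase v = B ∩ N j := by
            rw [inter_erase, Finset.erase_eq_of_notMem (fun h => hvB (mem_inter.mp h).1)]
          have e2 : insert v (B ∩ (N j).erase v) = (insert v B) ∩ N j := by
            rw [insert_inter_of_mem hj.2, e1]
          rw [e2, e1, ← hf j hj.1 B, ← hf j hj.1 (insert v B)]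
      _ ≤ ∏ j ∈ J, (∑ B ∈ ((N j).erase v).powerset, (f' j B) ^ d) ^ ((d : ℝ)⁻¹) :=
          ih (fun j => (N j).erase v) f' hN' hcov' hf'2
      _ = ∏ j ∈ J, (∑ B ∈ (N j).powerset, (f j B) ^ d) ^ ((d : ℝ)⁻¹) := by
          apply prod_congr rfl
          intro j hj
          by_cases h : v ∈ N j
          · congr 1
            have hins : insert v ((N j).erase v) = N j := insert_erase h
            conv_rhs => rw [← hins]
            rw [sum_powerset_insert (notMem_erase v (N j))]
            rw [← sum_add_distrib]
            apply sum_congr rfl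
            intro B hB
            have hBsub : B ⊆ (N j).erase v := mem_powerset.mp hB
            have hBe : B ∩ (N j).erase v = B := inter_eq_left.mpr hBsub
            rw [hf'def]
            simp only [if_pos h, hBe, rpow_pow]
          · congr 1
            have : (N j).erase v = N j := Finset.erase_eq_of_notMem h
            rw [this]
            apply sum_congr rfl
            intro B hB
            rw [hf'def]
            simp only [if_neg h]

lemma pairs_bound {V : Type*} [Fintype V] [DecidableEq V] (G : SimpleGraph V) [DecidableRel G.Adj]
    (d : ℕ) (hd : 1 ≤ d) (hreg : ∀ v, G.degree v = d) :
    ((univ : Finset (Finset V × Finset V)).filter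
        (fun p => ∀ a ∈ p.1, ∀ b ∈ p.2, ¬ G.Adj a b)).card ^ d
      ≤ (2 ^ (d+1) - 1) ^ (Fintype.card V) := by
  classical
  have hdR : ((d : ℝ)) ≠ 0 := by positivity
  set Pairs := (univ : Finset (Finset V × Finset V)).filter
    (fun p => ∀ a ∈ p.1, ∀ b ∈ p.2, ¬ G.Adj a b) with hPairs
  set f : V → Finset V → ℝ≥0 := fun u B => if Disjoint (G.neighborFinset u) B then 2 else 1
    with hfdef
  set Nf : V → Finset V := fun v => G.neighborFinset v with hNf
  have hdis : ∀ (a : V) (B : Finset V),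
      Disjoint (Nf a) B ↔ ∀ b ∈ B, ¬ G.Adj a b := by
    intro a B
    rw [Finset.disjoint_left]
    constructor
    · intro h b hb hadj
      exact h ((G.mem_neighborFinset a b).mpr hadj) hb
    · intro h x hx hxB
      exact h x hxB ((G.mem_neighborFinset a x).mp hx)
  have hcount : (Pairs.card : ℝ≥0) =
      ∑ B ∈ (univ : Finset V).powerset, ∏ u ∈ (univ : Finset V), f u B := by
    have h1 : Pairs.card = ∑ B ∈ (univ : Finset (Finset V)),
        (Pairs.filter (fun p => p.2 = B)).card :=
      Finset.card_eq_sum_card_fiberwise (fun p _ => mem_univ p.2)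
    have h2 : ∀ B : Finset V, (Pairs.filter (fun p => p.2 = B))
        = ((univ.filter (fun u => Disjoint (Nf u) B)).powerset).image
            (fun A => (A, B)) := by
      intro B
      ext ⟨A, B'⟩
      simp only [hPairs, mem_filter, mem_univ, true_and, mem_image, mem_powerset]
      constructor
      · rintro ⟨hA, hBB⟩
        subst hBB
        exact ⟨A, fun a ha => by
          simp only [mem_filter, mem_univ, true_and]
          exact (hdis a _).mpr (hA a ha), rfl⟩
      · rintro ⟨A', hA', h⟩
        rw [Prod.mk.injEq] at h
        obtain ⟨h1, h2⟩ := h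
        subst h1
        subst h2
        refine ⟨fun a ha => ?_, rfl⟩
        have h3 := hA' ha
        simp only [mem_filter, mem_univ, true_and] at h3
        exact (hdis a _).mp h3
    have h3 : ∀ B : Finset V, ((Pairs.filter (fun p => p.2 = B)).card : ℝ≥0)
        = ∏ u ∈ (univ : Finset V), f u B := by
      intro B
      rw [h2 B, Finset.card_image_of_injective _ (fun A A' h => (Prod.mk.injEq .. ▸ h).1),
        Finset.card_powerset]
      have hsp : ∀ u ∈ univ.filter (fun u => Disjoint (Nf u) B), f u B = (2:ℝ≥0) :=
        fun u hu => by simp only [hfdef]; rw [if_pos (mem_filter.mp hu).2]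
      have hsp2 : ∀ u ∈ univ.filter (fun u => ¬ Disjoint (Nf u) B), f u B = (1:ℝ≥0) :=
        fun u hu => by simp only [hfdef]; rw [if_neg (mem_filter.mp hu).2]
      calc ((2 ^ (univ.filter (fun u => Disjoint (Nf u) B)).card : ℕ) : ℝ≥0)
          = (2:ℝ≥0) ^ (univ.filter (fun u => Disjoint (Nf u) B)).card := by push_cast; rfl
        _ = (∏ u ∈ univ.filter (fun u => Disjoint (Nf u) B), f u B) *
            ∏ u ∈ univ.filter (fun u => ¬ Disjoint (Nf u) B), f u B := by
            rw [Finset.prod_congr rfl hsp, Finset.prod_congr rfl hsp2, Finset.prod_const,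
              Finset.prod_const_one, mul_one]
        _ = ∏ u ∈ (univ : Finset V), f u B :=
            Finset.prod_filter_mul_prod_filter_not (univ : Finset V) _ _
    rw [h1]
    push_cast
    rw [Finset.powerset_univ]
    exact Finset.sum_congr rfl (fun B _ => h3 B)
  have happ := finner d hd (univ : Finset V) (univ : Finset V) Nf f
    (fun j _ => subset_univ _)
    (fun v _ => by
      have he : (univ.filter (fun j => v ∈ Nf j)) = G.neighborFinset v := by
        ext u
        simp only [hNf, mem_filter, mem_univ, true_and, SimpleGraph.mem_neighborFinset]
        exact G.adj_comm u v
      rw [he]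
      exact hreg v)
    (fun j _ B => by
      simp only [hfdef]
      congr 1
      rw [eq_iff_iff, Finset.disjoint_left, Finset.disjoint_left]
      constructor
      · intro h x hx hxB
        exact h hx (mem_inter.mp hxB).1
      · intro h x hx hxB
        exact h hx (mem_inter.mpr ⟨hxB, hx⟩))
  have hX : ∀ u : V, ∑ B ∈ (Nf u).powerset, (f u B) ^ d
      = ((2 ^ (d+1) - 1 : ℕ) : ℝ≥0) := by
    intro u
    have hsplit := Finset.sum_filter_add_sum_filter_not (Nf u).powerset
      (fun B => B = ∅) (fun B => (f u B) ^ d)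
    have e1 : (Nf u).powerset.filter (fun B => B = ∅) = {∅} := by
      ext B
      simp only [mem_filter, mem_powerset, mem_singleton]
      exact ⟨fun h => h.2, fun h => ⟨h ▸ empty_subset _, h⟩⟩
    have e2 : ∀ B ∈ (Nf u).powerset.filter (fun B => ¬ B = ∅),
        (f u B) ^ d = (1:ℝ≥0) := by
      intro B hB
      rw [mem_filter, mem_powerset] at hB
      have hnd : ¬ Disjoint (G.neighborFinset u) B := by
        intro h
        exact hB.2 (Finset.eq_empty_iff_forall_notMem.mpr
          (fun x hx => Finset.disjoint_left.mp h (hB.1 hx) hx))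
      simp only [hfdef]
      rw [if_neg hnd, one_pow]
    have e3 : (f u ∅) ^ d = (2 : ℝ≥0) ^ d := by
      simp only [hfdef]
      rw [if_pos (Finset.disjoint_empty_right _)]
    have hcard : ((Nf u).powerset.filter (fun B => ¬ B = ∅)).card = 2 ^ d - 1 := by
      have hc := Finset.card_filter_add_card_filter_not
        (s := (Nf u).powerset) (p := fun B => B = ∅)
      rw [e1, Finset.card_powerset] at hc
      simp only [Finset.card_singleton] at hc
      have : (Nf u).card = d := by
        rw [hNf]
        rw [SimpleGraph.card_neighborFinset_eq_degree, hreg u]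
      rw [this] at hc
      omega
    calc ∑ B ∈ (Nf u).powerset, (f u B) ^ d
        = (∑ B ∈ (Nf u).powerset.filter (fun B => B = ∅), (f u B) ^ d)
          + ∑ B ∈ (Nf u).powerset.filter (fun B => ¬ B = ∅), (f u B) ^ d := hsplit.symm
      _ = (2:ℝ≥0) ^ d + ((2 ^ d - 1 : ℕ) : ℝ≥0) := by
          rw [e1, Finset.sum_singleton, e3, Finset.sum_congr rfl e2, Finset.sum_const, hcard,
            nsmul_eq_mul, mul_one]
      _ = ((2 ^ (d+1) - 1 : ℕ) : ℝ≥0) := by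
          have h2d : 1 ≤ 2 ^ d := Nat.one_le_pow d 2 (by norm_num)
          have hsub : (2:ℕ) ^ (d+1) - 1 = 2 ^ d + (2 ^ d - 1) := by
            rw [pow_succ]
            omega
          rw [hsub]
          push_cast [Nat.cast_sub h2d]
          ring
  have hprod : ∏ j ∈ (univ : Finset V), (∑ B ∈ (Nf j).powerset, (f j B) ^ d) ^ ((d:ℝ)⁻¹)
      = (((2 ^ (d+1) - 1 : ℕ) : ℝ≥0) ^ ((d:ℝ)⁻¹)) ^ (Fintype.card V) := by
    calc ∏ j ∈ (univ : Finset V), (∑ B ∈ (Nf j).powerset, (f j B) ^ d) ^ ((d:ℝ)⁻¹)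
        = ∏ _j ∈ (univ : Finset V), (((2 ^ (d+1) - 1 : ℕ) : ℝ≥0)) ^ ((d:ℝ)⁻¹) :=
          Finset.prod_congr rfl (fun u _ => by rw [hX u])
      _ = (((2 ^ (d+1) - 1 : ℕ) : ℝ≥0) ^ ((d:ℝ)⁻¹)) ^ (Fintype.card V) := by
          rw [Finset.prod_const, Finset.card_univ]
  rw [hprod] at happ
  rw [← hcount] at happ
  have hfinal : ((Pairs.card : ℕ) : ℝ≥0) ^ d ≤ ((2 ^ (d+1) - 1 : ℕ) : ℝ≥0) ^ (Fintype.card V) := by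
    calc ((Pairs.card : ℕ) : ℝ≥0) ^ d
        ≤ ((((2 ^ (d+1) - 1 : ℕ) : ℝ≥0) ^ ((d:ℝ)⁻¹)) ^ (Fintype.card V)) ^ d :=
          pow_le_pow_left' happ d
      _ = ((2 ^ (d+1) - 1 : ℕ) : ℝ≥0) ^ (Fintype.card V) := by
          rw [← NNReal.rpow_natCast (((2 ^ (d+1) - 1 : ℕ) : ℝ≥0) ^ ((d:ℝ)⁻¹)) (Fintype.card V),
            ← NNReal.rpow_mul, ← NNReal.rpow_natCast
              ((((2 ^ (d+1) - 1 : ℕ) : ℝ≥0)) ^ (((d:ℝ)⁻¹) * (Fintype.card V))) d,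
            ← NNReal.rpow_mul]
          rw [show ((d:ℝ)⁻¹ * (Fintype.card V)) * d = ((Fintype.card V : ℕ) : ℝ) by
            field_simp]
          rw [NNReal.rpow_natCast]
  rw [← Nat.cast_pow, ← Nat.cast_pow, Nat.cast_le] at hfinal
  exact hfinal

lemma walk_parity {W : Type*} (H : SimpleGraph W) (c : W → Prop)
    (hc : ∀ {x y}, H.Adj x y → (c x ↔ ¬ c y)) :
    ∀ {x y : W} (p : H.Walk x y), (c x ↔ c y) ↔ Even p.length := by
  intro x y p
  induction p with
  | nil => simp
  | cons h q ih =>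
    rw [SimpleGraph.Walk.length_cons, Nat.even_add_one, ← ih]
    have := hc h
    tauto

set_option maxHeartbeats 2000000 in
lemma indep_sq_le_pairs {V : Type*} [Fintype V] [DecidableEq V] (G : SimpleGraph V)
    [DecidableRel G.Adj] :
    ((univ : Finset (Finset V)).filter (fun s => ∀ a ∈ s, ∀ b ∈ s, ¬ G.Adj a b)).card ^ 2
      ≤ ((univ : Finset (Finset V × Finset V)).filter
          (fun p => ∀ a ∈ p.1, ∀ b ∈ p.2, ¬ G.Adj a b)).card := by
  classical
  set Ind := (univ : Finset (Finset V)).filter (fun s => ∀ a ∈ s, ∀ b ∈ s, ¬ G.Adj a b) with hInd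
  set Pairs := (univ : Finset (Finset V × Finset V)).filter
    (fun p => ∀ a ∈ p.1, ∀ b ∈ p.2, ¬ G.Adj a b) with hPairsDef
  -- the symmetric difference
  set Cs : Finset V → Finset V → Finset V := fun A B => (A \ B) ∪ (B \ A) with hCs
  have hCsMem : ∀ A B w, w ∈ Cs A B ↔ (w ∈ A ∧ w ∉ B) ∨ (w ∈ B ∧ w ∉ A) := by
    intro A B w
    simp [hCs, mem_union, mem_sdiff]
  -- the "side" predicate
  set q : Finset V → Finset V → V → Prop := fun C A w =>
    ∃ h : w ∈ C, ((((G.induce (↑C : Set V)).connectedComponentMk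
      ⟨w, Finset.mem_coe.mpr h⟩).out : (↑C : Set V)) : V) ∈ A with hq
  set Φ : Finset V × Finset V → Finset V × Finset V := fun p =>
    ((p.1 ∩ p.2) ∪ (Cs p.1 p.2).filter (q (Cs p.1 p.2) p.1),
     (p.1 ∩ p.2) ∪ (Cs p.1 p.2).filter (fun w => ¬ q (Cs p.1 p.2) p.1 w)) with hΦ
  -- key component fact:  q is constant on components
  have hqconst : ∀ (C A : Finset V) (u v : V) (hu : u ∈ C) (hv : v ∈ C),
      (G.induce (↑C : Set V)).connectedComponentMk ⟨u, Finset.mem_coe.mpr hu⟩ =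
        (G.induce (↑C : Set V)).connectedComponentMk ⟨v, Finset.mem_coe.mpr hv⟩ →
      (q C A u ↔ q C A v) := by
    intro C A u v hu hv heq
    constructor
    · rintro ⟨h, hm⟩
      exact ⟨hv, by rwa [← heq]⟩
    · rintro ⟨h, hm⟩
      exact ⟨hu, by rwa [heq]⟩
  -- properness of the coloring w ↦ w ∈ A on C, when A and B are independent
  have hproper : ∀ (A B : Finset V), (∀ a ∈ A, ∀ b ∈ A, ¬ G.Adj a b) →
      (∀ a ∈ B, ∀ b ∈ B, ¬ G.Adj a b) →
      ∀ u v : V, u ∈ Cs A B → v ∈ Cs A B → G.Adj u v → (u ∈ A ↔ ¬ v ∈ A) := by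
    intro A B hA hB u v hu hv hadj
    rw [hCsMem] at hu hv
    constructor
    · intro huA hvA
      exact hA u huA v hvA hadj
    · intro hvA
      rcases hu with ⟨h1, _⟩ | ⟨h1, h2⟩
      · exact h1
      · exfalso
        rcases hv with ⟨h3, _⟩ | ⟨h3, h4⟩
        · exact hvA h3
        · exact hB u h1 v h3 hadj
  -- mapsTo
  have hmaps : ∀ p ∈ Ind ×ˢ Ind, Φ p ∈ Pairs := by
    rintro ⟨A, B⟩ hp
    rw [Finset.mem_product, hInd, mem_filter, mem_filter] at hp
    obtain ⟨⟨-, hA⟩, ⟨-, hB⟩⟩ := hp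
    rw [hPairsDef, mem_filter]
    refine ⟨mem_univ _, ?_⟩
    rintro a ha b hb hadj
    simp only [hΦ, mem_union, mem_filter, mem_inter] at ha hb
    have hAB : ∀ x y, x ∈ A ∩ B → y ∈ A ∪ B → G.Adj x y → False := by
      intro x y hx hy hxy
      rw [mem_inter] at hx
      rcases mem_union.mp hy with h | h
      · exact hA x hx.1 y h hxy
      · exact hB x hx.2 y h hxy
    have hCsub : ∀ x, x ∈ Cs A B → x ∈ A ∪ B := by
      intro x hx
      rcases (hCsMem A B x).mp hx with h | h
      · exact mem_union.mpr (Or.inl h.1)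
      · exact mem_union.mpr (Or.inr h.1)
    rcases ha with ha | ⟨haC, hqa⟩
    · rcases hb with hb | ⟨hbC, _⟩
      · exact hAB a b (mem_inter.mpr ha) (mem_union.mpr (Or.inl hb.1)) hadj
      · exact hAB a b (mem_inter.mpr ha) (hCsub b hbC) hadj
    · rcases hb with hb | ⟨hbC, hqb⟩
      · exact hAB b a (mem_inter.mpr hb) (hCsub a haC) hadj.symm
      · -- both in C, adjacent, hence same component
        refine hqb ((hqconst (Cs A B) A a b haC hbC ?_).mp hqa)
        exact (SimpleGraph.ConnectedComponent.eq).mpr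
          (SimpleGraph.Adj.reachable (by exact hadj))
  -- injectivity
  have hinj : Set.InjOn Φ ↑(Ind ×ˢ Ind) := by
    rintro ⟨A₁, B₁⟩ hp₁ ⟨A₂, B₂⟩ hp₂ heq
    rw [Finset.mem_coe, Finset.mem_product, hInd, mem_filter, mem_filter] at hp₁ hp₂
    obtain ⟨⟨-, hA₁⟩, ⟨-, hB₁⟩⟩ := hp₁
    obtain ⟨⟨-, hA₂⟩, ⟨-, hB₂⟩⟩ := hp₂
    rw [hΦ, Prod.mk.injEq] at heq
    obtain ⟨h1, h2⟩ := heq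
    -- memberships in the images
    have hmem1 : ∀ w, (w ∈ A₁ ∩ B₁ ∨ (w ∈ Cs A₁ B₁ ∧ q (Cs A₁ B₁) A₁ w)) ↔
        (w ∈ A₂ ∩ B₂ ∨ (w ∈ Cs A₂ B₂ ∧ q (Cs A₂ B₂) A₂ w)) := by
      intro w
      have := congrArg (fun s => w ∈ s) h1
      simpa only [mem_union, mem_filter, eq_iff_iff] using this
    have hmem2 : ∀ w, (w ∈ A₁ ∩ B₁ ∨ (w ∈ Cs A₁ B₁ ∧ ¬ q (Cs A₁ B₁) A₁ w)) ↔
        (w ∈ A₂ ∩ B₂ ∨ (w ∈ Cs A₂ B₂ ∧ ¬ q (Cs A₂ B₂) A₂ w)) := by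
      intro w
      have := congrArg (fun s => w ∈ s) h2
      simpa only [mem_union, mem_filter, eq_iff_iff] using this
    -- E and C agree
    have hEC : ∀ w, w ∈ A₁ ∩ B₁ → w ∉ Cs A₁ B₁ := by
      intro w hw hwC
      rw [mem_inter] at hw
      rcases (hCsMem _ _ w).mp hwC with h | h
      · exact h.2 hw.2
      · exact h.2 hw.1
    have hEC2 : ∀ w, w ∈ A₂ ∩ B₂ → w ∉ Cs A₂ B₂ := by
      intro w hw hwC
      rw [mem_inter] at hw
      rcases (hCsMem _ _ w).mp hwC with h | h
      · exact h.2 hw.2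
      · exact h.2 hw.1
    have hE : A₁ ∩ B₁ = A₂ ∩ B₂ := by
      ext w
      constructor
      · intro hw
        rcases (hmem1 w).mp (Or.inl hw) with h | ⟨hC, hq'⟩
        · exact h
        · rcases (hmem2 w).mp (Or.inl hw) with h | ⟨hC2, hq2⟩
          · exact h
          · exact absurd hq' hq2
      · intro hw
        rcases (hmem1 w).mpr (Or.inl hw) with h | ⟨hC, hq'⟩
        · exact h
        · rcases (hmem2 w).mpr (Or.inl hw) with h | ⟨hC2, hq2⟩
          · exact h
          · exact absurd hq' hq2
    have hC : Cs A₁ B₁ = Cs A₂ B₂ := by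
      ext w
      constructor
      · intro hw
        by_cases hqw : q (Cs A₁ B₁) A₁ w
        · rcases (hmem1 w).mp (Or.inr ⟨hw, hqw⟩) with h | h
          · exact absurd hw (hEC w (by rw [hE]; exact h))
          · exact h.1
        · rcases (hmem2 w).mp (Or.inr ⟨hw, hqw⟩) with h | h
          · exact absurd hw (hEC w (by rw [hE]; exact h))
          · exact h.1
      · intro hw
        by_cases hqw : q (Cs A₂ B₂) A₂ w
        · rcases (hmem1 w).mpr (Or.inr ⟨hw, hqw⟩) with h | h
          · exact absurd hw (hEC2 w (by rw [← hE]; exact h))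
          · exact h.1
        · rcases (hmem2 w).mpr (Or.inr ⟨hw, hqw⟩) with h | h
          · exact absurd hw (hEC2 w (by rw [← hE]; exact h))
          · exact h.1
    -- q agrees for the two pairs at points of C
    have hqiff : ∀ w ∈ Cs A₁ B₁, (q (Cs A₁ B₁) A₁ w ↔ q (Cs A₁ B₁) A₂ w) := by
      intro w hw
      have hw2 : w ∈ Cs A₂ B₂ := by rw [← hC]; exact hw
      have e1 : q (Cs A₁ B₁) A₁ w ↔ q (Cs A₂ B₂) A₂ w := by
        constructor
        · intro hq1
          rcases (hmem1 w).mp (Or.inr ⟨hw, hq1⟩) with h | h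
          · exact absurd h (fun hh => hEC2 w hh hw2)
          · exact h.2
        · intro hq2
          rcases (hmem1 w).mpr (Or.inr ⟨hw2, hq2⟩) with h | h
          · exact absurd h (fun hh => hEC w hh hw)
          · exact h.2
      rw [← hC] at e1
      exact e1
    -- pointwise agreement on C
    have key : ∀ w ∈ Cs A₁ B₁, (w ∈ A₁ ↔ w ∈ A₂) := by
      intro w hw
      set S : Set V := (↑(Cs A₁ B₁) : Set V) with hS
      set H : SimpleGraph S := G.induce S with hH
      set x : S := ⟨w, Finset.mem_coe.mpr hw⟩ with hx
      set m : S := (H.connectedComponentMk x).out with hm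
      have hmk : H.connectedComponentMk m = H.connectedComponentMk x :=
        Quot.out_eq _
      have hreach : H.Reachable x m :=
        SimpleGraph.ConnectedComponent.exact hmk.symm
      have hproper1 : ∀ {y z : S}, H.Adj y z → ((↑y ∈ A₁) ↔ ¬ (↑z ∈ A₁)) := by
        intro y z hyz
        exact hproper A₁ B₁ hA₁ hB₁ ↑y ↑z (Finset.mem_coe.mp y.2) (Finset.mem_coe.mp z.2)
          (by exact hyz)
      have hproper2 : ∀ {y z : S}, H.Adj y z → ((↑y ∈ A₂) ↔ ¬ (↑z ∈ A₂)) := by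
        intro y z hyz
        refine hproper A₂ B₂ hA₂ hB₂ ↑y ↑z ?_ ?_ (by exact hyz)
        · rw [← hC]; exact Finset.mem_coe.mp y.2
        · rw [← hC]; exact Finset.mem_coe.mp z.2
      -- q at w is the colour of m
      have hq1m : q (Cs A₁ B₁) A₁ w ↔ (↑m ∈ A₁) := by
        constructor
        · rintro ⟨h, hmm⟩
          exact hmm
        · intro hmm
          exact ⟨hw, hmm⟩
      have hq2m : q (Cs A₁ B₁) A₂ w ↔ (↑m ∈ A₂) := by
        constructor
        · rintro ⟨h, hmm⟩
          exact hmm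
        · intro hmm
          exact ⟨hw, hmm⟩
      have hmA : (↑m ∈ A₁) ↔ (↑m ∈ A₂) := by
        rw [← hq1m, ← hq2m]
        exact hqiff w hw
      obtain ⟨p⟩ := hreach
      have par1 := walk_parity H (fun y => ↑y ∈ A₁) hproper1 p
      have par2 := walk_parity H (fun y => ↑y ∈ A₂) hproper2 p
      have : ((w ∈ A₁) ↔ (↑m ∈ A₁)) ↔ ((w ∈ A₂) ↔ (↑m ∈ A₂)) := by
        rw [par1, par2]
      tauto
    have hCkey : ∀ w, w ∈ Cs A₁ B₁ → ((w ∈ A₁ ∧ w ∉ B₁) ∨ (w ∈ B₁ ∧ w ∉ A₁)) :=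
      fun w hw => (hCsMem _ _ w).mp hw
    have hA12 : A₁ = A₂ := by
      ext w
      constructor
      · intro hw
        by_cases hwB : w ∈ B₁
        · have : w ∈ A₂ ∩ B₂ := by rw [← hE]; exact mem_inter.mpr ⟨hw, hwB⟩
          exact (mem_inter.mp this).1
        · have hwC : w ∈ Cs A₁ B₁ := (hCsMem _ _ w).mpr (Or.inl ⟨hw, hwB⟩)
          exact (key w hwC).mp hw
      · intro hw
        by_cases hwB : w ∈ B₂
        · have : w ∈ A₁ ∩ B₁ := by rw [hE]; exact mem_inter.mpr ⟨hw, hwB⟩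
          exact (mem_inter.mp this).1
        · have hwC : w ∈ Cs A₁ B₁ := by
            rw [hC]; exact (hCsMem _ _ w).mpr (Or.inl ⟨hw, hwB⟩)
          exact (key w hwC).mpr hw
    have hB12 : B₁ = B₂ := by
      ext w
      constructor
      · intro hw
        by_cases hwA : w ∈ A₁
        · have : w ∈ A₂ ∩ B₂ := by rw [← hE]; exact mem_inter.mpr ⟨hwA, hw⟩
          exact (mem_inter.mp this).2
        · have hwC : w ∈ Cs A₁ B₁ := (hCsMem _ _ w).mpr (Or.inr ⟨hw, hwA⟩)
          have hwA2 : w ∉ A₂ := fun h => hwA ((key w hwC).mpr h)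
          have hwC2 : w ∈ Cs A₂ B₂ := by rw [← hC]; exact hwC
          rcases (hCsMem _ _ w).mp hwC2 with h | h
          · exact absurd h.1 hwA2
          · exact h.1
      · intro hw
        by_cases hwA : w ∈ A₂
        · have : w ∈ A₁ ∩ B₁ := by rw [hE]; exact mem_inter.mpr ⟨hwA, hw⟩
          exact (mem_inter.mp this).2
        · have hwC2 : w ∈ Cs A₂ B₂ := (hCsMem _ _ w).mpr (Or.inr ⟨hw, hwA⟩)
          have hwC : w ∈ Cs A₁ B₁ := by rw [hC]; exact hwC2
          have hwA1 : w ∉ A₁ := fun h => hwA ((key w hwC).mp h)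
          rcases (hCsMem _ _ w).mp hwC with h | h
          · exact absurd h.1 hwA1
          · exact h.1
    rw [Prod.mk.injEq]
    exact ⟨hA12, hB12⟩
  -- conclude
  calc Ind.card ^ 2 = (Ind ×ˢ Ind).card := by rw [Finset.card_product, sq]
    _ ≤ Pairs.card := Finset.card_le_card_of_injOn Φ hmaps hinj


/-- The number of independent sets of a graph (including the empty set). -/
noncomputable def indepCount {V : Type*} (G : SimpleGraph V) : ℕ :=
  Nat.card {s : Finset V // ∀ a ∈ s, ∀ b ∈ s, ¬ G.Adj a b}

theorem kahn_zhao {V : Type*} [Fintype V] (G : SimpleGraph V) [DecidableRel G.Adj]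
    (n d : ℕ) (hd : 1 ≤ d) (hcard : Fintype.card V = n)
    (hreg : ∀ v, G.degree v = d) :
    indepCount G ^ (2 * d) ≤ (2 ^ (d + 1) - 1) ^ n := by
  classical
  have hic : indepCount G = ((univ : Finset (Finset V)).filter
      (fun s => ∀ a ∈ s, ∀ b ∈ s, ¬ G.Adj a b)).card := by
    rw [indepCount, Nat.card_eq_fintype_card, Fintype.card_subtype]
  have hA := indep_sq_le_pairs G
  have hB := pairs_bound G d hd hreg
  calc indepCount G ^ (2 * d)
      = (((univ : Finset (Finset V)).filter
          (fun s => ∀ a ∈ s, ∀ b ∈ s, ¬ G.Adj a b)).card ^ 2) ^ d := by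
        rw [hic, ← pow_mul]
    _ ≤ ((univ : Finset (Finset V × Finset V)).filter
          (fun p => ∀ a ∈ p.1, ∀ b ∈ p.2, ¬ G.Adj a b)).card ^ d :=
        Nat.pow_le_pow_left hA d
    _ ≤ (2 ^ (d + 1) - 1) ^ (Fintype.card V) := hB
    _ = (2 ^ (d + 1) - 1) ^ n := by rw [hcard]
end

section
/- Let m = C(r,2) + p + 1 with 0 ≤ p < r − 1, and let C(r+1,m) be the colex graph (a K_r together with an extra vertex adjacent to p+1 vertices of the K_r). Then the maximum vertex clique weight over all vertices of C(r+1,m) equals (2^r − 1)/r + (2^{p+2} − 1)/(p+2) − (2^{p+1} − 1)/(p+1). -/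
open SimpleGraph Finset

/- The colex graph C(r+1, C(r,2)+p+1): a clique on the vertices 0,...,r-1 together with
the extra vertex r joined to the p+1 vertices 0,...,p. -/
def colexGraph (r p : ℕ) : SimpleGraph (Fin (r + 1)) where
  Adj a b := a ≠ b ∧ ((a.val < r ∧ b.val < r) ∨ (a.val = r ∧ b.val ≤ p) ∨ (b.val = r ∧ a.val ≤ p))
  symm := by
    constructor
    intro a b h
    exact ⟨h.1.symm, by tauto⟩
  loopless := by
    constructor
    intro a h
    exact h.1 rfl


section aux


lemma sum_range_choose_ext (m N : ℕ) (h : m ≤ N) :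
    ∑ i ∈ range (N+1), (m.choose i : ℚ) = 2^m := by
  have : ∑ i ∈ range (N+1), m.choose i = 2^m := by
    rw [← Nat.sum_range_choose m]
    apply (Finset.sum_subset (Finset.range_subset_range.2 (by omega)) _).symm
    intro x _ hx
    exact Nat.choose_eq_zero_of_lt (by simpa using hx)
  exact_mod_cast this

lemma sumA (n N : ℕ) (h : n + 1 ≤ N) :
    ∑ i ∈ range (N+1), (1/(i:ℚ)) * ((n.choose (i-1) : ℕ) : ℚ)
      = (2^(n+1) - 1)/(n+1) := by
  have key : ∀ i ∈ range (N+1), (1/(i:ℚ)) * ((n.choose (i-1) : ℕ) : ℚ)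
      = ((n+1).choose i : ℚ)/(n+1) - if i = 0 then 1/((n:ℚ)+1) else 0 := by
    intro i _
    rcases Nat.eq_zero_or_pos i with rfl | hi
    · simp
    · obtain ⟨j, rfl⟩ : ∃ j, i = j + 1 := ⟨i - 1, by omega⟩
      simp only [Nat.add_sub_cancel, if_neg (Nat.succ_ne_zero j)]
      have hn : ((n+1) * n.choose j : ℕ) = ((n+1).choose (j+1) * (j+1) : ℕ) :=
        Nat.add_one_mul_choose_eq n j
      have hn' : ((n:ℚ)+1) * (n.choose j : ℚ) = ((n+1).choose (j+1) : ℚ) * ((j:ℚ)+1) := by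
        exact_mod_cast hn
      have hj1 : ((j:ℚ)+1) ≠ 0 := by positivity
      have hn1 : ((n:ℚ)+1) ≠ 0 := by positivity
      rw [sub_zero]
      push_cast
      field_simp
      linarith [hn']
  rw [Finset.sum_congr rfl key, Finset.sum_sub_distrib]
  rw [Finset.sum_ite_eq' (range (N+1)) 0 (fun _ => 1/((n:ℚ)+1))]
  simp only [Finset.mem_range, Nat.succ_pos, if_pos (by omega : 0 < N + 1)]
  rw [← Finset.sum_div, sum_range_choose_ext (n+1) N h]
  push_cast
  ring


lemma sumB (n N : ℕ) (h : n + 2 ≤ N) :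
    ∑ i ∈ range (N+1), (1/(i:ℚ)) * (((if 2 ≤ i then n.choose (i-2) else 0) : ℕ) : ℚ)
      = (2^(n+2) - 1)/(n+2) - (2^(n+1) - 1)/(n+1) := by
  have key : ∀ i ∈ range (N+1), (1/(i:ℚ)) * (((if 2 ≤ i then n.choose (i-2) else 0) : ℕ) : ℚ)
      = (1/(i:ℚ)) * (((n+1).choose (i-1) : ℕ) : ℚ) - (1/(i:ℚ)) * ((n.choose (i-1) : ℕ) : ℚ) := by
    intro i _
    match i with
    | 0 => simp
    | 1 => simp
    | (j+2) =>
      have : (n+1).choose (j+1) = n.choose j + n.choose (j+1) := Nat.choose_succ_succ n j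
      simp only [show j + 2 - 1 = j + 1 by omega, show j + 2 - 2 = j by omega,
        if_pos (by omega : 2 ≤ j + 2), this]
      push_cast
      ring
  rw [Finset.sum_congr rfl key, Finset.sum_sub_distrib, sumA (n+1) N (by omega),
    sumA n N (by omega)]
  push_cast
  ring_nf


lemma fmono (a b : ℕ) (ha : 1 ≤ a) (hab : a ≤ b) :
    ((2:ℚ)^a - 1)/a ≤ ((2:ℚ)^b - 1)/b := by
  induction b, hab using Nat.le_induction with
  | base => exact le_refl _
  | succ b hb ih =>
    refine ih.trans ?_
    have hb1 : 1 ≤ b := le_trans ha hb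
    rw [div_le_div_iff₀ (by positivity) (by positivity)]
    have h2 : (1:ℚ) ≤ 2^b := one_le_pow₀ (by norm_num)
    have hbq : (1:ℚ) ≤ (b:ℚ) := by exact_mod_cast hb1
    rw [pow_succ]
    push_cast
    nlinarith [mul_nonneg (sub_nonneg.2 hbq) (sub_nonneg.2 h2)]

end aux

section counting

variable {r p : ℕ}

lemma colex_adj {a b : Fin (r+1)} :
    (colexGraph r p).Adj a b ↔ a ≠ b ∧ ((a.val < r ∧ b.val < r) ∨ (a.val = r ∧ b.val ≤ p) ∨ (b.val = r ∧ a.val ≤ p)) := Iff.rfl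

instance : DecidableRel (colexGraph r p).Adj := fun _ _ => decidable_of_iff' _ colex_adj

lemma eq_last_iff {a : Fin (r+1)} : a = Fin.last r ↔ a.val = r := by
  rw [Fin.ext_iff, Fin.val_last]

lemma count1 (u : Fin (r+1)) (hu : u.val < r) (i : ℕ) (hi : 1 ≤ i) :
    ((univ : Finset (Finset (Fin (r+1)))).filter
      (fun s => (colexGraph r p).IsNClique i s ∧ u ∈ s ∧ Fin.last r ∉ s)).card
      = (r-1).choose (i-1) := by
  have hul : u ≠ Fin.last r := by
    intro h; rw [h, Fin.val_last] at hu; omega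
  have hbase : ((univ.erase (Fin.last r)).erase u).card = r - 1 := by
    rw [card_erase_of_mem (mem_erase.2 ⟨hul, mem_univ _⟩), card_erase_of_mem (mem_univ _),
      card_univ, Fintype.card_fin]
    omega
  rw [show (r-1).choose (i-1)
      = (Finset.powersetCard (i-1) ((univ.erase (Fin.last r)).erase u)).card by
      rw [Finset.card_powersetCard, hbase]]
  apply Finset.card_bij' (fun s _ => s.erase u) (fun t _ => insert u t)
  · intro s hs
    exact insert_erase (mem_filter.1 hs).2.2.1
  · intro t ht
    exact erase_insert (fun h => (mem_erase.1 ((Finset.mem_powersetCard.1 ht).1 h)).1 rfl)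

  · intro s hs
    simp only [mem_filter, mem_univ, true_and] at hs
    obtain ⟨⟨hcl, hcard⟩, hus, hls⟩ := hs
    rw [Finset.mem_powersetCard]
    constructor
    · intro x hx
      rw [mem_erase] at hx
      refine mem_erase.2 ⟨hx.1, mem_erase.2 ⟨?_, mem_univ _⟩⟩
      rintro rfl; exact hls hx.2
    · rw [card_erase_of_mem hus, hcard]
  · intro t ht
    rw [Finset.mem_powersetCard] at ht
    obtain ⟨hsub, hcard⟩ := ht
    have hut : u ∉ t := fun h => (mem_erase.1 (hsub h)).1 rfl
    have hlt : ∀ x ∈ insert u t, x.val < r := by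
      intro x hx
      rcases mem_insert.1 hx with rfl | hx
      · exact hu
      · exact Fin.val_lt_last (mem_erase.1 (mem_erase.1 (hsub hx)).2).1
    simp only [mem_filter, mem_univ, true_and]
    refine ⟨⟨?_, ?_⟩, mem_insert_self _ _, ?_⟩
    · intro a ha b hb hab
      exact ⟨hab, Or.inl ⟨hlt a ha, hlt b hb⟩⟩
    · rw [card_insert_of_notMem hut, hcard]; omega
    · intro h
      exact absurd (hlt _ h) (by simp)
lemma Pset_card (hp : p + 1 < r) :
    ((univ : Finset (Fin (r+1))).filter (fun a => a.val ≤ p)).card = p + 1 := by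
  rw [show p + 1 = (range (p+1)).card from (card_range _).symm]
  apply Finset.card_bij' (fun a _ => a.val)
    (fun k hk => (⟨k, by have := mem_range.1 hk; omega⟩ : Fin (r+1)))
  case hi =>
    intro a ha
    exact mem_range.2 (by have := (mem_filter.1 ha).2; omega)
  case hj =>
    intro k hk
    exact mem_filter.2 ⟨mem_univ _, by have := mem_range.1 hk; simp; omega⟩
  case left_inv => intro a ha; rfl
  case right_inv => intro k hk; rfl

lemma adj_last {x : Fin (r+1)} (hx : x ≠ Fin.last r)
    (h : (colexGraph r p).Adj x (Fin.last r)) : x.val ≤ p := by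
  rcases h.2 with ⟨h1, h2⟩ | ⟨h1, h2⟩ | ⟨h1, h2⟩
  · rw [Fin.val_last] at h2; omega
  · exact absurd (eq_last_iff.2 h1) hx
  · exact h2

lemma count2 (hp : p + 1 < r) (u : Fin (r+1)) (hu : u.val ≤ p) (i : ℕ) (hi : 2 ≤ i) :
    ((univ : Finset (Finset (Fin (r+1)))).filter
      (fun s => (colexGraph r p).IsNClique i s ∧ u ∈ s ∧ Fin.last r ∈ s)).card
      = p.choose (i-2) := by
  have hul : u ≠ Fin.last r := by
    intro h; rw [h, Fin.val_last] at hu; omega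
  have huP : u ∈ (univ : Finset (Fin (r+1))).filter (fun a => a.val ≤ p) :=
    mem_filter.2 ⟨mem_univ _, hu⟩
  have hbase : ((((univ : Finset (Fin (r+1))).filter (fun a => a.val ≤ p)).erase u)).card = p := by
    rw [card_erase_of_mem huP, Pset_card hp]
    omega
  rw [show p.choose (i-2)
      = (Finset.powersetCard (i-2) (((univ : Finset (Fin (r+1))).filter (fun a => a.val ≤ p)).erase u)).card by
      rw [Finset.card_powersetCard, hbase]]
  apply Finset.card_bij' (fun s _ => (s.erase (Fin.last r)).erase u)
    (fun t _ => insert u (insert (Fin.last r) t))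
  · -- left inverse
    intro s hs
    simp only [mem_filter, mem_univ, true_and] at hs
    obtain ⟨⟨hcl, hcard⟩, hus, hls⟩ := hs
    rw [Finset.erase_right_comm, insert_erase (mem_erase.2 ⟨hul.symm, hls⟩),
      insert_erase hus]
  · -- right inverse
    intro t ht
    rw [Finset.mem_powersetCard] at ht
    have hlast_t : Fin.last r ∉ t := by
      intro h
      have := (mem_filter.1 (mem_erase.1 (ht.1 h)).2).2
      rw [Fin.val_last] at this; omega
    have hut : u ∉ t := fun h => (mem_erase.1 (ht.1 h)).1 rfl
    rw [Finset.insert_comm, erase_insert (by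
      simp only [mem_insert]
      rintro (h | h)
      · exact hul h.symm
      · exact hlast_t h), erase_insert hut]
  · -- forward membership
    intro s hs
    simp only [mem_filter, mem_univ, true_and] at hs
    obtain ⟨⟨hcl, hcard⟩, hus, hls⟩ := hs
    rw [Finset.mem_powersetCard]
    constructor
    · intro x hx
      rw [mem_erase, mem_erase] at hx
      refine mem_erase.2 ⟨hx.1, mem_filter.2 ⟨mem_univ _, ?_⟩⟩
      exact adj_last hx.2.1 (hcl hx.2.2 hls hx.2.1)
    · rw [card_erase_of_mem (mem_erase.2 ⟨hul, hus⟩), card_erase_of_mem hls, hcard]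
      omega
  · -- backward membership
    intro t ht
    rw [Finset.mem_powersetCard] at ht
    obtain ⟨hsub, hcard⟩ := ht
    have hmem : ∀ x ∈ insert u (insert (Fin.last r) t), x = Fin.last r ∨ x.val ≤ p := by
      intro x hx
      rcases mem_insert.1 hx with rfl | hx
      · exact Or.inr hu
      · rcases mem_insert.1 hx with rfl | hx
        · exact Or.inl rfl
        · exact Or.inr (mem_filter.1 (mem_erase.1 (hsub hx)).2).2
    have hlast_t : Fin.last r ∉ t := by
      intro h
      have := (mem_filter.1 (mem_erase.1 (hsub h)).2).2
      rw [Fin.val_last] at this; omega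
    have hut : u ∉ insert (Fin.last r) t := by
      simp only [mem_insert]
      rintro (h | h)
      · exact hul h
      · exact (fun hh => (mem_erase.1 (hsub hh)).1 rfl) h
    simp only [mem_filter, mem_univ, true_and]
    refine ⟨⟨?_, ?_⟩, mem_insert_self _ _, mem_insert_of_mem (mem_insert_self _ _)⟩
    · intro a ha b hb hab
      rcases hmem a ha with ha' | ha' <;> rcases hmem b hb with hb' | hb'
      · exact absurd (ha'.trans hb'.symm) hab
      · exact ⟨hab, Or.inr (Or.inl ⟨by rw [ha', Fin.val_last], hb'⟩)⟩
      · exact ⟨hab, Or.inr (Or.inr ⟨by rw [hb', Fin.val_last], ha'⟩)⟩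
      · exact ⟨hab, Or.inl ⟨by omega, by omega⟩⟩
    · rw [card_insert_of_notMem hut, card_insert_of_notMem hlast_t, hcard]
      omega

lemma count3 (hp : p + 1 < r) (i : ℕ) (hi : 1 ≤ i) :
    ((univ : Finset (Finset (Fin (r+1)))).filter
      (fun s => (colexGraph r p).IsNClique i s ∧ Fin.last r ∈ s ∧ Fin.last r ∈ s)).card
      = (p+1).choose (i-1) := by
  have hlP : Fin.last r ∉ (univ : Finset (Fin (r+1))).filter (fun a => a.val ≤ p) := by
    simp only [mem_filter, Fin.val_last]
    omega
  rw [show (p+1).choose (i-1)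
      = (Finset.powersetCard (i-1) ((univ : Finset (Fin (r+1))).filter (fun a => a.val ≤ p))).card by
      rw [Finset.card_powersetCard, Pset_card hp]]
  apply Finset.card_bij' (fun s _ => s.erase (Fin.last r)) (fun t _ => insert (Fin.last r) t)
  · intro s hs
    exact insert_erase (mem_filter.1 hs).2.2.1
  · intro t ht
    exact erase_insert (fun h => hlP ((Finset.mem_powersetCard.1 ht).1 h))
  · intro s hs
    simp only [mem_filter, mem_univ, true_and] at hs
    obtain ⟨⟨hcl, hcard⟩, hls, -⟩ := hs
    rw [Finset.mem_powersetCard]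
    constructor
    · intro x hx
      rw [mem_erase] at hx
      exact mem_filter.2 ⟨mem_univ _, adj_last hx.1 (hcl hx.2 hls hx.1)⟩
    · rw [card_erase_of_mem hls, hcard]
  · intro t ht
    rw [Finset.mem_powersetCard] at ht
    obtain ⟨hsub, hcard⟩ := ht
    have hlt : Fin.last r ∉ t := fun h => hlP (hsub h)
    have hmem : ∀ x ∈ insert (Fin.last r) t, x = Fin.last r ∨ x.val ≤ p := by
      intro x hx
      rcases mem_insert.1 hx with rfl | hx
      · exact Or.inl rfl
      · exact Or.inr (mem_filter.1 (hsub hx)).2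
    simp only [mem_filter, mem_univ, true_and]
    refine ⟨⟨?_, ?_⟩, mem_insert_self _ _, mem_insert_self _ _⟩
    · intro a ha b hb hab
      rcases hmem a ha with ha' | ha' <;> rcases hmem b hb with hb' | hb'
      · exact absurd (ha'.trans hb'.symm) hab
      · exact ⟨hab, Or.inr (Or.inl ⟨by rw [ha', Fin.val_last], hb'⟩)⟩
      · exact ⟨hab, Or.inr (Or.inr ⟨by rw [hb', Fin.val_last], ha'⟩)⟩
      · exact ⟨hab, Or.inl ⟨by omega, by omega⟩⟩
    · rw [card_insert_of_notMem hlt, hcard]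
      omega

lemma countZero1 (hp : p + 1 < r) (u : Fin (r+1)) (hu1 : p < u.val) (hu2 : u.val < r) (i : ℕ) :
    ((univ : Finset (Finset (Fin (r+1)))).filter
      (fun s => (colexGraph r p).IsNClique i s ∧ u ∈ s ∧ Fin.last r ∈ s)).card = 0 := by
  rw [Finset.card_eq_zero, Finset.filter_eq_empty_iff]
  rintro s - ⟨⟨hcl, -⟩, hus, hls⟩
  have hul : u ≠ Fin.last r := by
    intro h; rw [h, Fin.val_last] at hu2; omega
  have := adj_last hul (hcl hus hls hul)
  omega

lemma countZero2 (u : Fin (r+1)) (hu : u.val < r) (i : ℕ) (hi : i ≤ 1) :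
    ((univ : Finset (Finset (Fin (r+1)))).filter
      (fun s => (colexGraph r p).IsNClique i s ∧ u ∈ s ∧ Fin.last r ∈ s)).card = 0 := by
  rw [Finset.card_eq_zero, Finset.filter_eq_empty_iff]
  rintro s - ⟨⟨-, hcard⟩, hus, hls⟩
  have hul : u ≠ Fin.last r := by
    intro h; rw [h, Fin.val_last] at hu; omega
  have : 1 < s.card := Finset.one_lt_card.2 ⟨u, hus, Fin.last r, hls, hul⟩
  omega


lemma countZero3 {r p : ℕ} (i : ℕ) :
    ((univ : Finset (Finset (Fin (r+1)))).filter
      (fun s => (colexGraph r p).IsNClique i s ∧ Fin.last r ∈ s ∧ Fin.last r ∉ s)).card = 0 := by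
  rw [Finset.card_eq_zero, Finset.filter_eq_empty_iff]
  rintro s - ⟨-, hls, hls'⟩
  exact hls' hls

lemma cliqueCountOn_split {r p : ℕ} (u : Fin (r+1)) (i : ℕ) :
    cliqueCountOn (colexGraph r p) u i
      = ((univ : Finset (Finset (Fin (r+1)))).filter
          (fun s => (colexGraph r p).IsNClique i s ∧ u ∈ s ∧ Fin.last r ∉ s)).card
      + ((univ : Finset (Finset (Fin (r+1)))).filter
          (fun s => (colexGraph r p).IsNClique i s ∧ u ∈ s ∧ Fin.last r ∈ s)).card := by
  rw [cliqueCountOn, Nat.card_eq_fintype_card, Fintype.card_subtype]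
  have h := Finset.card_filter_add_card_filter_not
    (s := (univ : Finset (Finset (Fin (r+1)))).filter
      (fun s => (colexGraph r p).IsNClique i s ∧ u ∈ s))
    (p := fun s => Fin.last r ∈ s)
  rw [filter_filter, filter_filter] at h
  simp only [and_assoc] at h ⊢
  omega

lemma weight_low {r p : ℕ} (hp : p + 1 < r) (u : Fin (r+1)) (hu : u.val ≤ p) :
    cliqueWeight (colexGraph r p) u
      = (2 ^ r - 1 : ℚ) / r + (2 ^ (p + 2) - 1) / (p + 2) - (2 ^ (p + 1) - 1) / (p + 1) := by
  have hur : u.val < r := by omega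
  rw [cliqueWeight, show Fintype.card (Fin (r+1)) = r + 1 from Fintype.card_fin _]
  have hterm : ∀ i ∈ range (r+1+1), (1/(i:ℚ)) * (cliqueCountOn (colexGraph r p) u i : ℚ)
      = (1/(i:ℚ)) * (((r-1).choose (i-1) : ℕ) : ℚ)
        + (1/(i:ℚ)) * (((if 2 ≤ i then p.choose (i-2) else 0) : ℕ) : ℚ) := by
    intro i _
    rcases Nat.eq_zero_or_pos i with rfl | hi
    · simp
    · rw [cliqueCountOn_split, count1 u hur i hi]
      by_cases h2 : 2 ≤ i
      · rw [count2 hp u hu i h2, if_pos h2]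
        push_cast; ring
      · rw [countZero2 u hur i (by omega), if_neg h2]
        push_cast; ring
  rw [Finset.sum_congr rfl hterm, Finset.sum_add_distrib, sumA (r-1) (r+1) (by omega),
    sumB p (r+1) (by omega)]
  have e1 : r - 1 + 1 = r := by omega
  have e2 : ((r-1 : ℕ) : ℚ) + 1 = (r : ℚ) := by
    rw [Nat.cast_sub (by omega : 1 ≤ r)]; ring
  rw [e1, e2]
  ring

lemma weight_mid {r p : ℕ} (hp : p + 1 < r) (u : Fin (r+1)) (h1 : p < u.val) (h2 : u.val < r) :
    cliqueWeight (colexGraph r p) u = (2 ^ r - 1 : ℚ) / r := by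
  rw [cliqueWeight, show Fintype.card (Fin (r+1)) = r + 1 from Fintype.card_fin _]
  have hterm : ∀ i ∈ range (r+1+1), (1/(i:ℚ)) * (cliqueCountOn (colexGraph r p) u i : ℚ)
      = (1/(i:ℚ)) * (((r-1).choose (i-1) : ℕ) : ℚ) := by
    intro i _
    rcases Nat.eq_zero_or_pos i with rfl | hi
    · simp
    · rw [cliqueCountOn_split, count1 u h2 i hi, countZero1 hp u h1 h2 i]
      push_cast; ring
  rw [Finset.sum_congr rfl hterm, sumA (r-1) (r+1) (by omega)]
  have e1 : r - 1 + 1 = r := by omega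
  have e2 : ((r-1 : ℕ) : ℚ) + 1 = (r : ℚ) := by
    rw [Nat.cast_sub (by omega : 1 ≤ r)]; ring
  rw [e1, e2]

lemma weight_last {r p : ℕ} (hp : p + 1 < r) :
    cliqueWeight (colexGraph r p) (Fin.last r) = (2 ^ (p + 2) - 1 : ℚ) / (p + 2) := by
  rw [cliqueWeight, show Fintype.card (Fin (r+1)) = r + 1 from Fintype.card_fin _]
  have hterm : ∀ i ∈ range (r+1+1),
      (1/(i:ℚ)) * (cliqueCountOn (colexGraph r p) (Fin.last r) i : ℚ)
      = (1/(i:ℚ)) * (((p+1).choose (i-1) : ℕ) : ℚ) := by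
    intro i _
    rcases Nat.eq_zero_or_pos i with rfl | hi
    · simp
    · rw [cliqueCountOn_split, countZero3 i, count3 hp i hi]
      push_cast; ring
  rw [Finset.sum_congr rfl hterm, sumA (p+1) (r+1) (by omega)]
  push_cast
  ring_nf

end counting

theorem max_clique_weight_colexGraph (r p : ℕ) (hp : p + 1 < r) :
    IsGreatest (Set.range fun v => cliqueWeight (colexGraph r p) v)
      ((2 ^ r - 1 : ℚ) / r + (2 ^ (p + 2) - 1) / (p + 2) - (2 ^ (p + 1) - 1) / (p + 1)) := by
  constructor
  · exact ⟨(⟨0, by omega⟩ : Fin (r+1)), weight_low hp _ (by simp)⟩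
  · rintro x ⟨v, rfl⟩
    simp only
    by_cases h1 : v.val ≤ p
    · rw [weight_low hp v h1]
    · by_cases h2 : v.val < r
      · rw [weight_mid hp v (by omega) h2]
        have m := fmono (p+1) (p+2) (by omega) (by omega)
        push_cast at m
        linarith
      · have hv : v = Fin.last r := by
          rw [eq_last_iff]; have := v.isLt; omega
        rw [hv, weight_last hp]
        have m := fmono (p+1) r (by omega) (by omega)
        push_cast at m
        linarith
end
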